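/- arXiv:math/0502301 — 9 statements merged into one kernel-verified Lean document; each statement's English description precedes it below -/
import Mathlib

section
/- Let R be a finite-dimensional semisimple k-algebra and A an R-algebra, M an A-bimodule. Then M = M^R + [A,M], and e·[A,M] = [A,M]^R, where e is the symmetric separability element of R acting via the outer bimodule structure. -/
open TensorProduct MulOpposite

/-- The centralizer of (the image of) `R` in an `A`-bimodule `M`, where `R` maps
to `A` via `f`. -/
def centralizerOf (k : Type*) {R A : Type*} (M : Type*) [CommSemiring k] [Semiring R]
    [Semiring A] [Algebra k R] [Algebra k A] (f : R →ₐ[k] A)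
    [AddCommMonoid M] [Module k M] [Module A M] [Module Aᵐᵒᵖ M]
    [SMulCommClass k A M] [SMulCommClass k Aᵐᵒᵖ M] : Submodule k M where
  carrier := {m | ∀ r : R, f r • m = op (f r) • m}
  add_mem' := by
    intro a b ha hb r
    simp only [smul_add, ha r, hb r]
  zero_mem' := by intro r; simp
  smul_mem' := by
    intro c m hm r
    rw [← smul_comm c (f r) m, hm r, smul_comm]

/-- The `k`-span of the commutators `a • m - m • a` for `a ∈ A`, i.e. `[A, M]`. -/
def commutatorOf (k A M : Type*) [CommSemiring k] [Semiring A]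
    [AddCommGroup M] [Module k M] [Module A M] [Module Aᵐᵒᵖ M] : Submodule k M :=
  Submodule.span k {z | ∃ (a : A) (m : M), z = a • m - op a • m}

/-- The two-sided action of `A ⊗ A` on an `A`-bimodule `M`. -/
noncomputable def actT (k A M : Type*) [CommSemiring k] [Semiring A] [Algebra k A]
    [AddCommMonoid M] [Module k M] [Module A M] [Module Aᵐᵒᵖ M]
    [SMulCommClass k A M] [SMulCommClass k Aᵐᵒᵖ M]
    [IsScalarTower k A M] [IsScalarTower k Aᵐᵒᵖ M] :
    A ⊗[k] A →ₗ[k] M →ₗ[k] M :=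
  TensorProduct.lift <| LinearMap.mk₂ k
    (fun r s =>
      { toFun := fun m => r • (op s • m)
        map_add' := by intro a b; simp [smul_add]
        map_smul' := by
          intro c a
          simp only [RingHom.id_apply]
          rw [smul_comm (op s) c a, smul_comm r c (op s • a)] })
    (by intro r₁ r₂ s; ext m; simp [add_smul])
    (by intro c r s; ext m; simp [smul_assoc])
    (by intro r s₁ s₂; ext m; simp [op_add, add_smul, smul_add])
    (by
      intro c r s; ext m
      simp only [LinearMap.coe_mk, AddHom.coe_mk, LinearMap.smul_apply]
      rw [op_smul, smul_assoc, smul_comm r c])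

/-- Let `R` be a finite-dimensional semisimple `k`-algebra, `A` an
`R`-algebra, and `M` an `A`-bimodule.  Then `M = M^R + [A, M]` and `e·[A,M] = [A,M]^R`,
where `e` is the symmetric separability element of `R` acting via the outer bimodule
structure. -/
theorem stmt2 (k R A M : Type*) [Field k] [CharZero k]
    [Ring R] [Algebra k R] [FiniteDimensional k R] [IsSemisimpleRing R]
    [Ring A] [Algebra k A] (f : R →ₐ[k] A) (hf : Function.Injective f)
    [AddCommGroup M] [Module k M] [Module A M] [Module Aᵐᵒᵖ M]
    [SMulCommClass k A M] [SMulCommClass k Aᵐᵒᵖ M] [SMulCommClass A Aᵐᵒᵖ M]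
    [IsScalarTower k A M] [IsScalarTower k Aᵐᵒᵖ M]
    (e : R ⊗[k] R)
    (he1 : ∀ r : R, (r ⊗ₜ[k] (1 : R)) * e = e * ((1 : R) ⊗ₜ[k] r))
    (he2 : LinearMap.mul' k R e = 1)
    (he3 : TensorProduct.comm k R R e = e) :
    (centralizerOf k M f ⊔ commutatorOf k A M = ⊤) ∧
    Submodule.map (actT k A M (TensorProduct.map f.toLinearMap f.toLinearMap e))
        (commutatorOf k A M)
      = commutatorOf k A M ⊓ centralizerOf k M f := by

  classical
  set F := TensorProduct.map f.toLinearMap f.toLinearMap with hF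
  set E := actT k A M (F e) with hE
  have hact : ∀ (a b : A) (m : M), actT k A M (a ⊗ₜ[k] b) m = a • op b • m := by
    intro a b m; rfl
  have hFt : ∀ (x y : R), F (x ⊗ₜ[k] y) = f x ⊗ₜ[k] f y := by
    intro x y; simp [hF]
  -- E m lies in the centralizer
  have hcent : ∀ m : M, E m ∈ centralizerOf k M f := by
    intro m r
    have h1 : ∀ t : R ⊗[k] R,
        actT k A M (F (((r : R) ⊗ₜ[k] (1 : R)) * t)) m = f r • actT k A M (F t) m := by
      intro t
      induction t using TensorProduct.induction_on with
      | zero => simp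
      | tmul x y =>
          rw [Algebra.TensorProduct.tmul_mul_tmul, one_mul, hFt, hFt, hact, hact,
            map_mul, mul_smul]
      | add a b ha hb => simp only [mul_add, map_add, LinearMap.add_apply, ha, hb, smul_add]
    have h2 : ∀ t : R ⊗[k] R,
        actT k A M (F (t * ((1 : R) ⊗ₜ[k] r))) m = op (f r) • actT k A M (F t) m := by
      intro t
      induction t using TensorProduct.induction_on with
      | zero => simp
      | tmul x y =>
          rw [Algebra.TensorProduct.tmul_mul_tmul, mul_one, hFt, hFt, hact, hact,
            map_mul, op_mul, mul_smul]
          rw [smul_comm (f x) (op (f r))]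
      | add a b ha hb => simp only [add_mul, map_add, LinearMap.add_apply, ha, hb, smul_add]
    show f r • E m = op (f r) • E m
    rw [hE, ← h1 e, he1 r, h2 e]
  -- m - E m lies in the commutator
  have hcomm : ∀ m : M, m - E m ∈ commutatorOf k A M := by
    intro m
    have key : ∀ t : R ⊗[k] R,
        op (f (LinearMap.mul' k R (TensorProduct.comm k R R t))) • m - actT k A M (F t) m
          ∈ commutatorOf k A M := by
      intro t
      induction t using TensorProduct.induction_on with
      | zero => simp [commutatorOf]
      | tmul x y =>
          have hmem : f x • (op (f y) • m) - op (f x) • (op (f y) • m)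
              ∈ commutatorOf k A M :=
            Submodule.subset_span ⟨f x, op (f y) • m, rfl⟩
          have h2 : op (f (LinearMap.mul' k R (TensorProduct.comm k R R (x ⊗ₜ[k] y)))) • m
              = op (f x) • (op (f y) • m) := by
            rw [TensorProduct.comm_tmul, LinearMap.mul'_apply, map_mul, op_mul, mul_smul]
          rw [h2, hFt, hact]
          have := Submodule.neg_mem _ hmem
          rwa [neg_sub] at this
      | add a b ha hb =>
          have : op (f (LinearMap.mul' k R (TensorProduct.comm k R R (a + b)))) • m
                - actT k A M (F (a + b)) m
              = (op (f (LinearMap.mul' k R (TensorProduct.comm k R R a))) • m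
                  - actT k A M (F a) m)
                + (op (f (LinearMap.mul' k R (TensorProduct.comm k R R b))) • m
                  - actT k A M (F b) m) := by
            simp only [map_add, op_add, add_smul, LinearMap.add_apply]
            abel
          rw [this]
          exact Submodule.add_mem _ ha hb
    have := key e
    rwa [he3, he2, map_one, op_one, one_smul] at this
  -- E fixes elements of the centralizer
  have hfix : ∀ m : M, m ∈ centralizerOf k M f → E m = m := by
    intro m hm
    have hm' : ∀ r : R, f r • m = op (f r) • m := hm
    have key : ∀ t : R ⊗[k] R,
        actT k A M (F t) m = op (f (LinearMap.mul' k R t)) • m := by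
      intro t
      induction t using TensorProduct.induction_on with
      | zero => simp
      | tmul x y =>
          rw [hFt, hact, LinearMap.mul'_apply, map_mul, op_mul, mul_smul]
          rw [smul_comm (f x) (op (f y)) m, hm' x]
      | add a b ha hb =>
          simp only [map_add, LinearMap.add_apply, op_add, add_smul, ha, hb]
    rw [hE, key e, he2, map_one, op_one, one_smul]
  constructor
  · rw [Submodule.eq_top_iff']
    intro m
    exact Submodule.mem_sup.mpr ⟨E m, hcent m, m - E m, hcomm m, by abel⟩
  · apply le_antisymm
    · rintro x ⟨c, hc, rfl⟩
      refine ⟨?_, hcent c⟩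
      have h1 : c - (c - E c) ∈ commutatorOf k A M := Submodule.sub_mem _ hc (hcomm c)
      have h2 : c - (c - E c) = actT k A M (F e) c := by rw [← hE]; abel
      rwa [h2] at h1
    · rintro x ⟨hx1, hx2⟩
      exact ⟨x, hx1, hfix x hx2⟩
end

section
/- Let R be a finite-dimensional semisimple k-algebra and A any R-algebra that is smooth over k (i.e. finitely generated with Ω¹A projective as an A-bimodule). Then A is smooth over R, i.e. Ω¹_R A is projective as an A-bimodule. -/
open TensorProduct MulOpposite

/-- The multiplication map `A ⊗ Aᵒᵖ → A`, `a ⊗ bᵒᵖ ↦ a * b`.  Here `A ⊗ Aᵒᵖ` is the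
`A`-bimodule `A ⊗ A` (outer structure), viewed as the left regular module over the
enveloping algebra `Aᵉ = A ⊗ Aᵒᵖ`. -/
noncomputable def muE (k A : Type*) [CommRing k] [Ring A] [Algebra k A] :
    A ⊗[k] Aᵐᵒᵖ →ₗ[k] A :=
  (LinearMap.mul' k A).comp
    (TensorProduct.map LinearMap.id (opLinearEquiv k : A ≃ₗ[k] Aᵐᵒᵖ).symm.toLinearMap)

lemma muE_tmul (k A : Type*) [CommRing k] [Ring A] [Algebra k A] (a : A) (b : Aᵐᵒᵖ) :
    muE k A (a ⊗ₜ[k] b) = a * b.unop := by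
  simp [muE]

lemma muE_mul_left (k A : Type*) [CommRing k] [Ring A] [Algebra k A]
    (c : A) (b : Aᵐᵒᵖ) (x : A ⊗[k] Aᵐᵒᵖ) :
    muE k A ((c ⊗ₜ[k] b) * x) = c * muE k A x * b.unop := by
  induction x using TensorProduct.induction_on with
  | zero => simp
  | tmul a b' => simp [Algebra.TensorProduct.tmul_mul_tmul, muE_tmul, mul_assoc]
  | add u v hu hv => simp only [mul_add, map_add, hu, hv, add_mul]

/-- The kernel of the multiplication map `Aᵉ ≅ A ⊗ A → A`, i.e. the `A`-bimodule
`Ω¹A` of absolute noncommutative 1-forms, as a left `Aᵉ`-submodule of `Aᵉ`. -/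
noncomputable def kerMu (k A : Type*) [CommRing k] [Ring A] [Algebra k A] :
    Submodule (A ⊗[k] Aᵐᵒᵖ) (A ⊗[k] Aᵐᵒᵖ) where
  carrier := {x | muE k A x = 0}
  add_mem' := by
    intro a b ha hb
    simp only [Set.mem_setOf_eq] at *
    rw [map_add, ha, hb, add_zero]
  zero_mem' := by simp
  smul_mem' := by
    intro z x hx
    simp only [Set.mem_setOf_eq] at *
    rw [smul_eq_mul]
    induction z using TensorProduct.induction_on with
    | zero => simp
    | tmul c b => rw [muE_mul_left, hx]; simp
    | add u v hu hv => rw [add_mul, map_add, hu, hv, add_zero]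

/-- The `A`-subbimodule of `A ⊗ A` generated by the relators
`f r ⊗ 1 - 1 ⊗ f r` for the `R`-balanced tensor product; the quotient of
`ker(mult)` by it is `Ω¹_R A`. -/
noncomputable def relJ (k : Type*) {R A : Type*} [CommRing k] [Ring R] [Ring A]
    [Algebra k R] [Algebra k A] (f : R →ₐ[k] A) :
    Submodule (A ⊗[k] Aᵐᵒᵖ) (A ⊗[k] Aᵐᵒᵖ) :=
  Submodule.span _
    {x | ∃ r : R, x = f r ⊗ₜ[k] (1 : Aᵐᵒᵖ) - (1 : A) ⊗ₜ[k] op (f r)}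

/-!
Over a field of characteristic zero the trace form `tr (L_{xy})` of a finite-dimensional
semisimple algebra `R` is nondegenerate: its radical is an ideal, hence generated by an idempotent
`e`, and `tr L_e = rank L_e` vanishes. For a basis `bᵢ` with trace-dual basis `yᵢ`, the element
`∑ bᵢ ⊗ yᵢ` commutes with `R` and multiplies out to `1`: a separability element. Its image `E` in
`Aᵉ` annihilates the relators `f r ⊗ 1 - 1 ⊗ f r` and is congruent to `1` modulo them, so right
multiplication by `E` splits `Ω¹A → Ω¹_R A`, a direct summand of a projective module.
-/

open LinearMap Module

section Casimir

variable {k R ι : Type*} [Field k] [Ring R] [Algebra k R] [Fintype ι] [DecidableEq ι]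
  {B : LinearMap.BilinForm k R} (hB : B.Nondegenerate) (b : Basis ι k R)

lemma LinearMap.BilinForm.repr_eq_apply_dualBasis (z : R) (i : ι) :
    b.repr z i = B (B.dualBasis hB b i) z := by
  simpa using dualBasis_repr_apply hB.flip (B.dualBasis hB b) z i

lemma LinearMap.BilinForm.sum_mul_tmul_dualBasis (hassoc : ∀ x y z, B (x * y) z = B x (y * z))
    (r : R) : ∑ i, (r * b i) ⊗ₜ[k] B.dualBasis hB b i = ∑ i, b i ⊗ₜ[k] (B.dualBasis hB b i * r) := by
  set y := B.dualBasis hB b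
  calc ∑ i, (r * b i) ⊗ₜ[k] y i
      = ∑ i, ∑ j, B (y j) (r * b i) • (b j ⊗ₜ[k] y i) := by
        refine Finset.sum_congr rfl fun i _ => ?_
        conv_lhs => rw [← b.sum_repr (r * b i)]
        simp only [sum_tmul, ← smul_tmul', y, B.repr_eq_apply_dualBasis hB]
    _ = ∑ j, ∑ i, B (y j * r) (b i) • (b j ⊗ₜ[k] y i) := by
        rw [Finset.sum_comm]
        simp only [hassoc]
    _ = ∑ j, b j ⊗ₜ[k] (y j * r) := by
        refine Finset.sum_congr rfl fun j _ => ?_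
        conv_rhs => rw [← y.sum_repr (y j * r)]
        simp only [tmul_sum, tmul_smul, y, dualBasis_repr_apply]

end Casimir

section TraceForm

variable (k R : Type*) [Field k] [Ring R] [Algebra k R]

noncomputable def regularTraceForm : LinearMap.BilinForm k R :=
  (LinearMap.mul k R).compr₂ (trace k R ∘ₗ (Algebra.lmul k R).toLinearMap)

variable {k R}

lemma regularTraceForm_apply (x y : R) :
    regularTraceForm k R x y = trace k R (Algebra.lmul k R (x * y)) := rfl

lemma regularTraceForm_mul_left (x y z : R) :
    regularTraceForm k R (x * y) z = regularTraceForm k R x (y * z) := by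
  simp only [regularTraceForm_apply, mul_assoc]

lemma regularTraceForm_comm (x y : R) :
    regularTraceForm k R x y = regularTraceForm k R y x := by
  simp only [regularTraceForm_apply, map_mul, trace_mul_comm]

variable (k R) in
noncomputable def regularTraceFormRadical : Ideal R where
  carrier := {x | ∀ y, regularTraceForm k R x y = 0}
  add_mem' ha hb y := by simp [ha y, hb y]
  zero_mem' y := by simp
  smul_mem' r x hx y := by
    rw [smul_eq_mul, regularTraceForm_mul_left, regularTraceForm_comm,
      regularTraceForm_mul_left]
    exact hx _

lemma regularTraceForm_nondegenerate [CharZero k] [FiniteDimensional k R] [IsSemisimpleRing R] :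
    (regularTraceForm k R).Nondegenerate := by
  refine .ofSeparatingLeft fun x hx => ?_
  obtain ⟨e, he, hspan⟩ := IsSemisimpleRing.ideal_eq_span_idempotent (regularTraceFormRadical k R)
  have he_mem : e ∈ regularTraceFormRadical k R := hspan ▸ Ideal.mem_span_singleton_self e
  have hlmul : Algebra.lmul k R e = 0 := by
    refine (he.map (Algebra.lmul k R)).eq_zero_of_trace_eq_zero ?_
    simpa [regularTraceForm_apply] using he_mem 1
  have he0 : e = 0 := by simpa using congrArg (· 1) hlmul
  have hx_mem : x ∈ regularTraceFormRadical k R := hx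
  rwa [hspan, he0, Ideal.span_singleton_eq_bot.mpr rfl, Ideal.mem_bot] at hx_mem

lemma sum_mul_dualBasis_regularTraceForm {ι : Type*} [Fintype ι] [DecidableEq ι]
    (hT : (regularTraceForm k R).Nondegenerate) (b : Basis ι k R) :
    ∑ i, b i * (regularTraceForm k R).dualBasis hT b i = 1 := by
  set T := regularTraceForm k R
  set y := T.dualBasis hT b
  rw [← sub_eq_zero]
  refine hT.1 _ fun a => ?_
  have htrace : T 1 a = ∑ i, T (y i) (a * b i) := by
    rw [regularTraceForm_apply, one_mul, trace_eq_matrix_trace k b, Matrix.trace]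
    simp only [Matrix.diag_apply, toMatrix_apply, T.repr_eq_apply_dualBasis hT, y]
    rfl
  rw [map_sub, LinearMap.sub_apply, sub_eq_zero, htrace, map_sum, LinearMap.sum_apply]
  refine Finset.sum_congr rfl fun i _ => ?_
  rw [regularTraceForm_mul_left, regularTraceForm_comm, regularTraceForm_mul_left]

end TraceForm

/-- In `Rᵉ = R ⊗ Rᵒᵖ`, left multiplication by `1 ⊗ op r` is right multiplication by `r` on the
second factor, so the second field says `r • e = e • r` in the bimodule `R ⊗ R`. -/
structure IsSeparabilityElement (k : Type*) {R : Type*} [CommRing k] [Ring R] [Algebra k R]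
    (e : R ⊗[k] Rᵐᵒᵖ) : Prop where
  muE_eq_one : muE k R e = 1
  tmul_one_mul : ∀ r : R, (r ⊗ₜ[k] (1 : Rᵐᵒᵖ)) * e = ((1 : R) ⊗ₜ[k] op r) * e

theorem exists_isSeparabilityElement (k R : Type*) [Field k] [CharZero k] [Ring R] [Algebra k R]
    [FiniteDimensional k R] [IsSemisimpleRing R] :
    ∃ e : R ⊗[k] Rᵐᵒᵖ, IsSeparabilityElement k e := by
  let b := finBasis k R
  let hT := regularTraceForm_nondegenerate (k := k) (R := R)
  let y := (regularTraceForm k R).dualBasis hT b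
  refine ⟨∑ i, b i ⊗ₜ op (y i), ?_, fun r => ?_⟩
  · simp [muE_tmul, y, sum_mul_dualBasis_regularTraceForm]
  · have := congrArg (TensorProduct.map LinearMap.id (opLinearEquiv k).toLinearMap)
      ((regularTraceForm k R).sum_mul_tmul_dualBasis hT b regularTraceForm_mul_left r)
    simpa [Finset.mul_sum, Algebra.TensorProduct.tmul_mul_tmul] using this

section Transport

variable {k R A : Type*} [CommRing k] [Ring R] [Ring A] [Algebra k R] [Algebra k A]

lemma muE_mul_of_muE_eq_one {E : A ⊗[k] Aᵐᵒᵖ} (hE : muE k A E = 1) (x : A ⊗[k] Aᵐᵒᵖ) :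
    muE k A (x * E) = muE k A x := by
  induction x using TensorProduct.induction_on with
  | zero => simp
  | tmul a b => rw [muE_mul_left, hE, mul_one, muE_tmul]
  | add u v hu hv => rw [add_mul, map_add, hu, hv, map_add]

variable (f : R →ₐ[k] A)

noncomputable def envelopingMap : R ⊗[k] Rᵐᵒᵖ →ₐ[k] A ⊗[k] Aᵐᵒᵖ :=
  Algebra.TensorProduct.map f (AlgHom.op f)

@[simp]
lemma envelopingMap_tmul (r : R) (s : Rᵐᵒᵖ) :
    envelopingMap f (r ⊗ₜ s) = f r ⊗ₜ op (f s.unop) :=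
  rfl

lemma muE_envelopingMap (x : R ⊗[k] Rᵐᵒᵖ) : muE k A (envelopingMap f x) = f (muE k R x) := by
  induction x using TensorProduct.induction_on with
  | zero => simp
  | tmul r s => simp [muE_tmul]
  | add u v hu hv => rw [map_add, map_add, hu, hv, map_add, map_add]

lemma muE_tmul_one_sub_envelopingMap_mem_relJ (x : R ⊗[k] Rᵐᵒᵖ) :
    f (muE k R x) ⊗ₜ[k] (1 : Aᵐᵒᵖ) - envelopingMap f x ∈ relJ k f := by
  induction x using TensorProduct.induction_on with
  | zero => simp
  | tmul r s =>
    have hgen : f s.unop ⊗ₜ[k] (1 : Aᵐᵒᵖ) - (1 : A) ⊗ₜ[k] op (f s.unop) ∈ relJ k f :=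
      Submodule.subset_span ⟨s.unop, rfl⟩
    convert (relJ k f).smul_mem (f r ⊗ₜ[k] (1 : Aᵐᵒᵖ)) hgen using 1
    simp [muE_tmul, smul_eq_mul, mul_sub, Algebra.TensorProduct.tmul_mul_tmul]
  | add u v hu hv =>
    convert (relJ k f).add_mem hu hv using 1
    simp only [map_add, add_tmul]
    abel

variable {f} {e : R ⊗[k] Rᵐᵒᵖ} (he : IsSeparabilityElement k e)
include he

lemma mul_envelopingMap_eq_zero_of_mem_relJ {x : A ⊗[k] Aᵐᵒᵖ} (hx : x ∈ relJ k f) :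
    x * envelopingMap f e = 0 := by
  induction hx using Submodule.span_induction with
  | mem g hg =>
    obtain ⟨r, rfl⟩ := hg
    have := congrArg (envelopingMap f) (he.tmul_one_mul r)
    simpa [sub_mul, sub_eq_zero] using this
  | zero => simp
  | add u v _ _ hu hv => rw [add_mul, hu, hv, add_zero]
  | smul z u _ hu => rw [smul_eq_mul, mul_assoc, hu, mul_zero]

lemma sub_mul_envelopingMap_mem_relJ (x : A ⊗[k] Aᵐᵒᵖ) :
    x - x * envelopingMap f e ∈ relJ k f := by
  have h := (relJ k f).smul_mem x (muE_tmul_one_sub_envelopingMap_mem_relJ f e)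
  rwa [he.muE_eq_one, map_one, Algebra.TensorProduct.one_def.symm, smul_eq_mul, mul_sub,
    mul_one] at h

theorem projective_map_mkQ_kerMu [Module.Projective (A ⊗[k] Aᵐᵒᵖ) (kerMu k A)] :
    Module.Projective (A ⊗[k] Aᵐᵒᵖ) ((kerMu k A).map (relJ k f).mkQ) := by
  set E := envelopingMap f e
  let σ := (relJ k f).liftQ (LinearMap.toSpanSingleton _ _ E)
    fun x hx => mul_envelopingMap_eq_zero_of_mem_relJ he hx
  have hσ : ∀ y ∈ (kerMu k A).map (relJ k f).mkQ, σ y ∈ kerMu k A := by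
    rintro _ ⟨x, hx, rfl⟩
    show muE k A (x * E) = 0
    rwa [muE_mul_of_muE_eq_one (by rw [muE_envelopingMap, he.muE_eq_one, map_one])]
  refine Module.Projective.of_split (σ.restrict hσ)
    ((relJ k f).mkQ.restrict fun x hx => Submodule.mem_map_of_mem hx) ?_
  ext ⟨_, x, hx, rfl⟩
  show (relJ k f).mkQ (x * E) = (relJ k f).mkQ x
  rw [Submodule.mkQ_apply, Submodule.mkQ_apply, Submodule.Quotient.eq, ← neg_sub]
  exact (relJ k f).neg_mem (sub_mul_envelopingMap_mem_relJ he x)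

end Transport

theorem stmt3_general (k R A : Type*) [Field k] [CharZero k]
    [Ring R] [Algebra k R] [FiniteDimensional k R] [IsSemisimpleRing R]
    [Ring A] [Algebra k A] (f : R →ₐ[k] A)
    (hproj : Module.Projective (A ⊗[k] Aᵐᵒᵖ) (kerMu k A)) :
    Module.Projective (A ⊗[k] Aᵐᵒᵖ) ((kerMu k A).map (relJ k f).mkQ) := by
  obtain ⟨e, he⟩ := exists_isSeparabilityElement k R
  exact projective_map_mkQ_kerMu he

/-- Let `R` be a finite-dimensional semisimple `k`-algebra (char `k = 0`)
and `A` an `R`-algebra that is smooth over `k`, i.e. finitely generated with `Ω¹A`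
projective as an `A`-bimodule.  Then `A` is smooth over `R`: `Ω¹_R A` is projective
as an `A`-bimodule (module over `Aᵉ = A ⊗ Aᵒᵖ`). -/
theorem stmt3 (k R A : Type*) [Field k] [CharZero k]
    [Ring R] [Algebra k R] [FiniteDimensional k R] [IsSemisimpleRing R]
    [Ring A] [Algebra k A] (f : R →ₐ[k] A) (hf : Function.Injective f)
    (hfg : ∃ s : Finset A, Algebra.adjoin k (s : Set A) = ⊤)
    (hproj : Module.Projective (A ⊗[k] Aᵐᵒᵖ) (kerMu k A)) :
    Module.Projective (A ⊗[k] Aᵐᵒᵖ) ((kerMu k A).map (relJ k f).mkQ) :=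
  stmt3_general k R A f hproj
end

section
/- For double derivations Φ, Θ ∈ Der_R(A, A⊗A), the contraction operators on noncommutative differential forms anticommute: i_Φ∘i_Θ + i_Θ∘i_Φ = 0 as maps Ω•_R A → T•_k(Ω•_R A). -/
open TensorProduct

/-!
Both contractions are odd super-derivations, and each anticommutes with the parity operator `σ`
(check on the generators `a`, `da`: `i(da) = Θ(a)` is even). Hence in the anticommutator
`i_Φ ∘ i_Θ + i_Θ ∘ i_Φ` the sign-twisted cross terms of the Leibniz rule cancel, and it is an
ordinary derivation `Ω → Ω ⊗ Ω ⊗ Ω`. It vanishes on the generators — `i(a) = 0`, and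
`i_Θ(da) = Θ(a)` lies in `A ⊗ A`, which the other contraction kills — hence everywhere.
-/

section Parity

variable {k W : Type*} [CommRing k] [Ring W] [Algebra k W] (𝒜 : ℕ → Submodule k W)
  {σ : W →ₗ[k] W}

theorem map_mul_of_eq_neg_one_pow_smul [GradedAlgebra 𝒜]
    (hσ : ∀ n, ∀ w ∈ 𝒜 n, σ w = ((-1 : k) ^ n) • w) (x y : W) :
    σ (x * y) = σ x * σ y := by
  induction x using DirectSum.Decomposition.inductionOn 𝒜 with
  | zero => simp
  | add x x' hx hx' => rw [add_mul, map_add, map_add, add_mul, hx, hx']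
  | @homogeneous i x =>
    induction y using DirectSum.Decomposition.inductionOn 𝒜 with
    | zero => simp
    | add y y' hy hy' => rw [mul_add, map_add, map_add, mul_add, hy, hy']
    | @homogeneous j y =>
      rw [hσ _ _ (SetLike.mul_mem_graded x.2 y.2), hσ i x x.2, hσ j y y.2,
        smul_mul_smul_comm, pow_add]

theorem apply_apply_of_eq_neg_one_pow_smul [DirectSum.Decomposition 𝒜]
    (hσ : ∀ n, ∀ w ∈ 𝒜 n, σ w = ((-1 : k) ^ n) • w) (x : W) : σ (σ x) = x := by
  induction x using DirectSum.Decomposition.inductionOn 𝒜 with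
  | zero => simp
  | add x x' hx hx' => rw [map_add, map_add, hx, hx']
  | @homogeneous i x =>
    rw [hσ i x x.2, map_smul, hσ i x x.2, smul_smul, ← mul_pow, neg_one_mul, neg_neg,
      one_pow, one_smul]

end Parity

theorem LinearMap.eq_zero_of_leibniz_of_adjoin_eq_top {k W M : Type*} [CommRing k] [Ring W]
    [Algebra k W] [Ring M] [Algebra k M] (φ ψ : W →ₐ[k] M) (D : W →ₗ[k] M)
    (hD : ∀ x y, D (x * y) = D x * ψ y + φ x * D y) {s : Set W}
    (hs : Algebra.adjoin k s = ⊤) (hs0 : ∀ x ∈ s, D x = 0) : D = 0 := by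
  have hD1 : D 1 = 0 := by simpa using hD 1 1
  ext x
  induction (hs ▸ Algebra.mem_top : x ∈ Algebra.adjoin k s) using Algebra.adjoin_induction with
  | mem x hx => exact hs0 x hx
  | algebraMap r => simp [Algebra.algebraMap_eq_smul_one, hD1]
  | add x y _ _ hx hy => simp [hx, hy]
  | mul x y _ _ hx hy => simp [hD, hx, hy]

section Contraction

variable {k W : Type*} [CommRing k] [Ring W] [Algebra k W] (σ : W →ₗ[k] W)
  (i : W →ₗ[k] W ⊗[k] W)

def IsSuperDerivation : Prop :=
  ∀ x y : W, i (x * y) = i x * ((1 : W) ⊗ₜ[k] y) + (σ x ⊗ₜ[k] (1 : W)) * i y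

/-- The super-derivation extension `u ⊗ v ↦ i u ⊗ v + (-1)^|u| u ⊗ i v` of `i` to `W ⊗ W`. -/
def tensorExtend : W ⊗[k] W →ₗ[k] (W ⊗[k] W) ⊗[k] W :=
  TensorProduct.map i LinearMap.id + (TensorProduct.assoc k W W W).symm.toLinearMap ∘ₗ
    TensorProduct.map σ i

theorem TensorProduct.assoc_symm_mul {A B C : Type*} [Ring A] [Algebra k A] [Ring B]
    [Algebra k B] [Ring C] [Algebra k C] (x y : A ⊗[k] (B ⊗[k] C)) :
    (TensorProduct.assoc k A B C).symm (x * y) =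
      (TensorProduct.assoc k A B C).symm x * (TensorProduct.assoc k A B C).symm y :=
  map_mul (Algebra.TensorProduct.assoc k k k A B C).symm x y

@[simp]
theorem tensorExtend_tmul (u v : W) :
    tensorExtend σ i (u ⊗ₜ v) = i u ⊗ₜ v + (TensorProduct.assoc k W W W).symm (σ u ⊗ₜ i v) := rfl

theorem tensorExtend_map_eq_zero {A : Type*} [AddCommGroup A] [Module k A] (g : A →ₗ[k] W)
    (hg : ∀ a, i (g a) = 0) (r : A ⊗[k] A) : tensorExtend σ i (TensorProduct.map g g r) = 0 := by
  induction r using TensorProduct.induction_on with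
  | zero => simp
  | tmul a b => simp [hg]
  | add r r' hr hr' => rw [map_add, map_add, hr, hr', add_zero]

variable {σ i}

theorem tensorExtend_mul_one_tmul (hi : IsSuperDerivation σ i) (t : W ⊗[k] W) (y : W) :
    tensorExtend σ i (t * (1 ⊗ₜ y)) =
      tensorExtend σ i t * (1 ⊗ₜ y) +
        (TensorProduct.map σ σ t ⊗ₜ 1) * (TensorProduct.assoc k W W W).symm (1 ⊗ₜ i y) := by
  induction t using TensorProduct.induction_on with
  | zero => simp
  | add t t' ht ht' => simp only [add_mul, map_add, add_tmul, ht, ht']; abel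
  | tmul p q =>
    have e₁ : i p ⊗ₜ[k] (q * y) = (i p ⊗ₜ q) * (1 ⊗ₜ y) := by
      rw [Algebra.TensorProduct.tmul_mul_tmul, mul_one]
    have e₂ : σ p ⊗ₜ[k] (i q * (1 ⊗ₜ y)) = (σ p ⊗ₜ i q) * (1 ⊗ₜ (1 ⊗ₜ y)) := by
      rw [Algebra.TensorProduct.tmul_mul_tmul, mul_one]
    have e₃ : σ p ⊗ₜ[k] ((σ q ⊗ₜ 1) * i y) = (σ p ⊗ₜ (σ q ⊗ₜ 1)) * (1 ⊗ₜ i y) := by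
      rw [Algebra.TensorProduct.tmul_mul_tmul, mul_one]
    rw [Algebra.TensorProduct.tmul_mul_tmul, mul_one, tensorExtend_tmul, hi, tmul_add, map_add,
      tensorExtend_tmul, map_tmul, e₁, e₂, e₃, TensorProduct.assoc_symm_mul,
      TensorProduct.assoc_symm_mul, assoc_symm_tmul, assoc_symm_tmul, add_mul,
      ← Algebra.TensorProduct.one_def, add_assoc]

theorem tensorExtend_tmul_one_mul (hi : IsSuperDerivation σ i)
    (hσmul : ∀ x y, σ (x * y) = σ x * σ y) (hσσ : ∀ x, σ (σ x) = x) (x : W) (t : W ⊗[k] W) :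
    tensorExtend σ i ((σ x ⊗ₜ 1) * t) =
      ((x ⊗ₜ 1) ⊗ₜ 1) * tensorExtend σ i t +
        (i (σ x) ⊗ₜ 1) * (TensorProduct.assoc k W W W).symm (1 ⊗ₜ t) := by
  induction t using TensorProduct.induction_on with
  | zero => simp
  | add t t' ht ht' => simp only [mul_add, map_add, tmul_add, ht, ht']; abel
  | tmul p q =>
    have e₁ : (i (σ x) * (1 ⊗ₜ p)) ⊗ₜ[k] q = (i (σ x) ⊗ₜ 1) * ((1 ⊗ₜ p) ⊗ₜ q) := by
      rw [Algebra.TensorProduct.tmul_mul_tmul, one_mul]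
    have e₂ : ((x ⊗ₜ 1) * i p) ⊗ₜ[k] q = ((x ⊗ₜ 1) ⊗ₜ 1) * (i p ⊗ₜ q) := by
      rw [Algebra.TensorProduct.tmul_mul_tmul, one_mul]
    have e₃ : (x * σ p) ⊗ₜ[k] i q = (x ⊗ₜ ((1 : W) ⊗ₜ[k] (1 : W))) * (σ p ⊗ₜ i q) := by
      rw [Algebra.TensorProduct.tmul_mul_tmul, ← Algebra.TensorProduct.one_def, one_mul]
    rw [Algebra.TensorProduct.tmul_mul_tmul, one_mul, tensorExtend_tmul, hi, hσmul, hσσ,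
      add_tmul, e₁, e₂, e₃, TensorProduct.assoc_symm_mul, assoc_symm_tmul, assoc_symm_tmul,
      tensorExtend_tmul, mul_add]
    abel

theorem TensorProduct.map_mul_of_map_mul (hσ1 : σ 1 = 1) (hσmul : ∀ x y, σ (x * y) = σ x * σ y)
    (s t : W ⊗[k] W) :
    TensorProduct.map σ σ (s * t) = TensorProduct.map σ σ s * TensorProduct.map σ σ t :=
  map_mul (Algebra.TensorProduct.map (AlgHom.ofLinearMap σ hσ1 hσmul)
    (AlgHom.ofLinearMap σ hσ1 hσmul)) s t

theorem IsSuperDerivation.apply_parity (hi : IsSuperDerivation σ i) (hσ1 : σ 1 = 1)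
    (hσmul : ∀ x y, σ (x * y) = σ x * σ y) (hσσ : ∀ x, σ (σ x) = x) {s : Set W}
    (hs : Algebra.adjoin k s = ⊤) (hs' : ∀ x ∈ s, i (σ x) = -TensorProduct.map σ σ (i x))
    (x : W) : i (σ x) = -TensorProduct.map σ σ (i x) := by
  let E := i ∘ₗ σ + TensorProduct.map σ σ ∘ₗ i
  have hE (x y : W) : E (x * y) = E x * (1 ⊗ₜ σ y) + (x ⊗ₜ 1) * E y := by
    simp only [E, LinearMap.add_apply, LinearMap.comp_apply, hσmul, hi (σ x), hσσ, hi x y,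
      map_add, TensorProduct.map_mul_of_map_mul hσ1 hσmul, map_tmul, hσ1, add_mul, mul_add]
    abel
  have hzero := LinearMap.eq_zero_of_leibniz_of_adjoin_eq_top Algebra.TensorProduct.includeLeft
    (Algebra.TensorProduct.includeRight.comp (AlgHom.ofLinearMap σ hσ1 hσmul)) E hE hs
    (fun x hx => by simp [E, hs' x hx])
  exact eq_neg_of_add_eq_zero_left (LinearMap.congr_fun hzero x)

theorem tensorExtend_anticommutator_mul {iΘ iΦ : W →ₗ[k] W ⊗[k] W}
    (hΘ : IsSuperDerivation σ iΘ) (hΦ : IsSuperDerivation σ iΦ)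
    (hΘσ : ∀ x, iΘ (σ x) = -TensorProduct.map σ σ (iΘ x))
    (hΦσ : ∀ x, iΦ (σ x) = -TensorProduct.map σ σ (iΦ x))
    (hσmul : ∀ x y, σ (x * y) = σ x * σ y) (hσσ : ∀ x, σ (σ x) = x) (x y : W) :
    (tensorExtend σ iΦ ∘ₗ iΘ + tensorExtend σ iΘ ∘ₗ iΦ) (x * y) =
      (tensorExtend σ iΦ ∘ₗ iΘ + tensorExtend σ iΘ ∘ₗ iΦ) x * (1 ⊗ₜ y) +
        ((x ⊗ₜ 1) ⊗ₜ 1) * (tensorExtend σ iΦ ∘ₗ iΘ + tensorExtend σ iΘ ∘ₗ iΦ) y := by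
  -- `neg_mul` does not fire after `neg_tmul`: the two negations on `W ⊗ W` are only defeq.
  have neg_tmul_one_mul (t : W ⊗[k] W) (u : (W ⊗[k] W) ⊗[k] W) :
      (-t) ⊗ₜ[k] (1 : W) * u = -(t ⊗ₜ[k] (1 : W) * u) := by
    rw [neg_tmul]; exact neg_mul (t ⊗ₜ[k] (1 : W)) u
  simp only [LinearMap.add_apply, LinearMap.comp_apply, hΘ x y, hΦ x y, map_add,
    tensorExtend_mul_one_tmul hΦ, tensorExtend_mul_one_tmul hΘ,
    tensorExtend_tmul_one_mul hΦ hσmul hσσ, tensorExtend_tmul_one_mul hΘ hσmul hσσ, hΘσ, hΦσ,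
    neg_tmul_one_mul, add_mul, mul_add]
  abel

end Contraction

theorem stmt9_general (k A W : Type*) [Field k]
    [Ring A] [Algebra k A]
    [Ring W] [Algebra k W]
    (𝒜 : ℕ → Submodule k W) [GradedAlgebra 𝒜]
    (ιA : A →ₐ[k] W) (d σ : W →ₗ[k] W)
    (hι0 : ∀ a : A, ιA a ∈ 𝒜 0)
    (hdg : ∀ (n : ℕ), ∀ w ∈ 𝒜 n, d w ∈ 𝒜 (n + 1))
    (hσ : ∀ (n : ℕ), ∀ w ∈ 𝒜 n, σ w = ((-1 : k) ^ n) • w)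
    (hgen : Algebra.adjoin k
        (Set.range (fun a : A => ιA a) ∪ Set.range (fun a : A => d (ιA a))) = ⊤)
    -- the double derivations
    (Θ Φ : A →ₗ[k] A ⊗[k] A)
    -- their contraction operators
    (iΘ iΦ : W →ₗ[k] W ⊗[k] W)
    (hiΘ0 : ∀ a : A, iΘ (ιA a) = 0)
    (hiΘd : ∀ a : A, iΘ (d (ιA a)) = TensorProduct.map ιA.toLinearMap ιA.toLinearMap (Θ a))
    (hiΘL : ∀ x y : W,
        iΘ (x * y) = iΘ x * ((1 : W) ⊗ₜ[k] y) + (σ x ⊗ₜ[k] (1 : W)) * iΘ y)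
    (hiΦ0 : ∀ a : A, iΦ (ιA a) = 0)
    (hiΦd : ∀ a : A, iΦ (d (ιA a)) = TensorProduct.map ιA.toLinearMap ιA.toLinearMap (Φ a))
    (hiΦL : ∀ x y : W,
        iΦ (x * y) = iΦ x * ((1 : W) ⊗ₜ[k] y) + (σ x ⊗ₜ[k] (1 : W)) * iΦ y) :
    (TensorProduct.map iΦ (LinearMap.id : W →ₗ[k] W)
        + (TensorProduct.assoc k W W W).symm.toLinearMap ∘ₗ TensorProduct.map σ iΦ) ∘ₗ iΘ
      + (TensorProduct.map iΘ (LinearMap.id : W →ₗ[k] W)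
        + (TensorProduct.assoc k W W W).symm.toLinearMap ∘ₗ TensorProduct.map σ iΘ) ∘ₗ iΦ
      = 0 := by
  have hσ1 : σ 1 = 1 := by simpa using hσ 0 1 SetLike.GradedOne.one_mem
  have hσmul := map_mul_of_eq_neg_one_pow_smul 𝒜 hσ
  have hσσ := apply_apply_of_eq_neg_one_pow_smul 𝒜 hσ
  have hσι (a : A) : σ (ιA a) = ιA a := by simpa using hσ 0 _ (hι0 a)
  have hσd (a : A) : σ (d (ιA a)) = -d (ιA a) := by simpa using hσ 1 _ (hdg 0 _ (hι0 a))
  have hparity {i : W →ₗ[k] W ⊗[k] W} (Ψ : A →ₗ[k] A ⊗[k] A) (hi : IsSuperDerivation σ i)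
      (hi0 : ∀ a, i (ιA a) = 0)
      (hid : ∀ a, i (d (ιA a)) = TensorProduct.map ιA.toLinearMap ιA.toLinearMap (Ψ a))
      (x : W) : i (σ x) = -TensorProduct.map σ σ (i x) := by
    refine hi.apply_parity hσ1 hσmul hσσ hgen ?_ x
    rintro _ (⟨a, rfl⟩ | ⟨a, rfl⟩)
    · simp [hσι, hi0]
    · rw [hσd, map_neg, hid, ← LinearMap.comp_apply (TensorProduct.map σ σ),
        ← TensorProduct.map_comp,
        show σ ∘ₗ ιA.toLinearMap = ιA.toLinearMap from LinearMap.ext hσι]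
  change tensorExtend σ iΦ ∘ₗ iΘ + tensorExtend σ iΘ ∘ₗ iΦ = 0
  refine LinearMap.eq_zero_of_leibniz_of_adjoin_eq_top
    (Algebra.TensorProduct.includeLeft.comp Algebra.TensorProduct.includeLeft)
    Algebra.TensorProduct.includeRight _
    (tensorExtend_anticommutator_mul hiΘL hiΦL (hparity Θ hiΘL hiΘ0 hiΘd)
      (hparity Φ hiΦL hiΦ0 hiΦd) hσmul hσσ) hgen ?_
  rintro _ (⟨a, rfl⟩ | ⟨a, rfl⟩)
  · simp [hiΘ0, hiΦ0]
  · simp [hiΘd, hiΦd, tensorExtend_map_eq_zero, hiΘ0, hiΦ0]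

/-- For double derivations `Φ, Θ ∈ Der_R(A, A ⊗ A)`, the contraction
operators on noncommutative differential forms anticommute:
`i_Φ ∘ i_Θ + i_Θ ∘ i_Φ = 0` as maps `Ω•_R A → Ω•_R A ⊗ Ω•_R A ⊗ Ω•_R A` (the extension
of the contractions to the tensor algebra of forms being as super-derivations of
degree `-1`).

Here `(W, 𝒜, ιA, d, σ)` is the DG algebra `Ω•_R A` of relative noncommutative
differential forms: `W` is graded by `𝒜`, generated by `A` and `dA`, `d` is the
de Rham differential, and `σ` is the sign (parity) operator.  A contraction `i_Θ`
is the degree `-1` super-derivation with values in `W ⊗ W` (outer bimodule structure)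
determined by `i_Θ(a) = 0`, `i_Θ(da) = Θ(a)`. -/
theorem stmt9 (k R A W : Type*) [Field k] [CharZero k]
    [Ring R] [Algebra k R] [FiniteDimensional k R] [IsSemisimpleRing R]
    [Ring A] [Algebra k A] (f : R →ₐ[k] A)
    [Ring W] [Algebra k W]
    (𝒜 : ℕ → Submodule k W) [GradedAlgebra 𝒜]
    (ιA : A →ₐ[k] W) (d σ : W →ₗ[k] W)
    (hι0 : ∀ a : A, ιA a ∈ 𝒜 0)
    (hdg : ∀ (n : ℕ), ∀ w ∈ 𝒜 n, d w ∈ 𝒜 (n + 1))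
    (hσ : ∀ (n : ℕ), ∀ w ∈ 𝒜 n, σ w = ((-1 : k) ^ n) • w)
    (hdd : ∀ w : W, d (d w) = 0)
    (hdLeib : ∀ x y : W, d (x * y) = d x * y + σ x * d y)
    (hdR : ∀ r : R, d (ιA (f r)) = 0)
    (hgen : Algebra.adjoin k
        (Set.range (fun a : A => ιA a) ∪ Set.range (fun a : A => d (ιA a))) = ⊤)
    -- the double derivations
    (Θ Φ : A →ₗ[k] A ⊗[k] A)
    (hΘder : ∀ x y : A, Θ (x * y) = (x ⊗ₜ[k] (1 : A)) * Θ y + Θ x * ((1 : A) ⊗ₜ[k] y))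
    (hΘR : ∀ r : R, Θ (f r) = 0)
    (hΦder : ∀ x y : A, Φ (x * y) = (x ⊗ₜ[k] (1 : A)) * Φ y + Φ x * ((1 : A) ⊗ₜ[k] y))
    (hΦR : ∀ r : R, Φ (f r) = 0)
    -- their contraction operators
    (iΘ iΦ : W →ₗ[k] W ⊗[k] W)
    (hiΘ0 : ∀ a : A, iΘ (ιA a) = 0)
    (hiΘd : ∀ a : A, iΘ (d (ιA a)) = TensorProduct.map ιA.toLinearMap ιA.toLinearMap (Θ a))
    (hiΘL : ∀ x y : W,
        iΘ (x * y) = iΘ x * ((1 : W) ⊗ₜ[k] y) + (σ x ⊗ₜ[k] (1 : W)) * iΘ y)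
    (hiΦ0 : ∀ a : A, iΦ (ιA a) = 0)
    (hiΦd : ∀ a : A, iΦ (d (ιA a)) = TensorProduct.map ιA.toLinearMap ιA.toLinearMap (Φ a))
    (hiΦL : ∀ x y : W,
        iΦ (x * y) = iΦ x * ((1 : W) ⊗ₜ[k] y) + (σ x ⊗ₜ[k] (1 : W)) * iΦ y) :
    (TensorProduct.map iΦ (LinearMap.id : W →ₗ[k] W)
        + (TensorProduct.assoc k W W W).symm.toLinearMap ∘ₗ TensorProduct.map σ iΦ) ∘ₗ iΘ
      + (TensorProduct.map iΘ (LinearMap.id : W →ₗ[k] W)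
        + (TensorProduct.assoc k W W W).symm.toLinearMap ∘ₗ TensorProduct.map σ iΘ) ∘ₗ iΦ
      = 0 :=
  stmt9_general k A W 𝒜 ιA d σ hι0 hdg hσ hgen Θ Φ iΘ iΦ hiΘ0 hiΘd hiΘL hiΦ0 hiΦd hiΦL
end

section
/- Cartan formula for double derivations: for any Θ ∈ Der_R(A, A⊗A), one has d∘i_Θ + i_Θ∘d = L_Θ, where L_Θ is the Lie derivative on Ω•_R A with values in Ω•_R A ⊗ Ω•_R A. Consequently d∘L_Θ = L_Θ∘d. -/
open TensorProduct

/-- **Cartan formula for double derivations.**  For any double derivation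
`Θ ∈ Der_R(A, A ⊗ A)` one has `d ∘ i_Θ + i_Θ ∘ d = L_Θ` as maps
`Ω•_R A → Ω•_R A ⊗ Ω•_R A`, and consequently `d ∘ L_Θ = L_Θ ∘ d`.

Here `(W, 𝒜, ιA, d, σ)` is the DG algebra `Ω•_R A` of relative noncommutative
differential forms; `i_Θ` is the degree `-1` super-derivation with `i_Θ(a) = 0`,
`i_Θ(da) = Θ(a)`; `L_Θ` is the degree `0` derivation with `L_Θ(a) = Θ'(a) ⊗ Θ''(a)`
and `L_Θ(da) = dΘ'(a) ⊗ Θ''(a) + Θ'(a) ⊗ dΘ''(a)`; `d` is extended to `W ⊗ W`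
as the super-derivation `d ⊗ 1 + σ ⊗ d`. -/
theorem stmt10 (k R A W : Type*) [Field k] [CharZero k]
    [Ring R] [Algebra k R] [FiniteDimensional k R] [IsSemisimpleRing R]
    [Ring A] [Algebra k A] (f : R →ₐ[k] A)
    [Ring W] [Algebra k W]
    (𝒜 : ℕ → Submodule k W) [GradedAlgebra 𝒜]
    (ιA : A →ₐ[k] W) (d σ : W →ₗ[k] W)
    (hι0 : ∀ a : A, ιA a ∈ 𝒜 0)
    (hdg : ∀ (n : ℕ), ∀ w ∈ 𝒜 n, d w ∈ 𝒜 (n + 1))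
    (hσ : ∀ (n : ℕ), ∀ w ∈ 𝒜 n, σ w = ((-1 : k) ^ n) • w)
    (hdd : ∀ w : W, d (d w) = 0)
    (hdLeib : ∀ x y : W, d (x * y) = d x * y + σ x * d y)
    (hdR : ∀ r : R, d (ιA (f r)) = 0)
    (hgen : Algebra.adjoin k
        (Set.range (fun a : A => ιA a) ∪ Set.range (fun a : A => d (ιA a))) = ⊤)
    -- the double derivation
    (Θ : A →ₗ[k] A ⊗[k] A)
    (hΘder : ∀ x y : A, Θ (x * y) = (x ⊗ₜ[k] (1 : A)) * Θ y + Θ x * ((1 : A) ⊗ₜ[k] y))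
    (hΘR : ∀ r : R, Θ (f r) = 0)
    -- contraction with Θ
    (iΘ : W →ₗ[k] W ⊗[k] W)
    (hiΘ0 : ∀ a : A, iΘ (ιA a) = 0)
    (hiΘd : ∀ a : A, iΘ (d (ιA a)) = TensorProduct.map ιA.toLinearMap ιA.toLinearMap (Θ a))
    (hiΘL : ∀ x y : W,
        iΘ (x * y) = iΘ x * ((1 : W) ⊗ₜ[k] y) + (σ x ⊗ₜ[k] (1 : W)) * iΘ y)
    -- Lie derivative along Θ
    (LΘ : W →ₗ[k] W ⊗[k] W)
    (hLΘ0 : ∀ a : A, LΘ (ιA a) = TensorProduct.map ιA.toLinearMap ιA.toLinearMap (Θ a))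
    (hLΘd : ∀ a : A, LΘ (d (ιA a)) =
        (TensorProduct.map d (LinearMap.id : W →ₗ[k] W)
            + TensorProduct.map (LinearMap.id : W →ₗ[k] W) d)
          (TensorProduct.map ιA.toLinearMap ιA.toLinearMap (Θ a)))
    (hLΘL : ∀ x y : W,
        LΘ (x * y) = LΘ x * ((1 : W) ⊗ₜ[k] y) + (x ⊗ₜ[k] (1 : W)) * LΘ y) :
    (TensorProduct.map d (LinearMap.id : W →ₗ[k] W) + TensorProduct.map σ d) ∘ₗ iΘ
        + iΘ ∘ₗ d = LΘ
    ∧ (TensorProduct.map d (LinearMap.id : W →ₗ[k] W) + TensorProduct.map σ d) ∘ₗ LΘ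
        = LΘ ∘ₗ d := by
  classical
  set D : W ⊗[k] W →ₗ[k] W ⊗[k] W :=
    TensorProduct.map d (LinearMap.id : W →ₗ[k] W) + TensorProduct.map σ d with hD
  have hDapp : ∀ (a b : W), D (a ⊗ₜ[k] b) = d a ⊗ₜ[k] b + σ a ⊗ₜ[k] d b := by
    intro a b; simp [hD]
  -- basic consequences of the grading
  have h1mem : (1 : W) ∈ 𝒜 0 := SetLike.one_mem_graded 𝒜
  have hσ1 : σ 1 = 1 := by rw [hσ 0 1 h1mem]; simp
  have hσι : ∀ a : A, σ (ιA a) = ιA a := by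
    intro a; rw [hσ 0 _ (hι0 a)]; simp
  have hσσ : ∀ w : W, σ (σ w) = w := by
    refine DirectSum.Decomposition.inductionOn 𝒜 (by simp) ?_ ?_
    · intro i m
      rw [hσ i m m.2, map_smul, hσ i m m.2, smul_smul, ← mul_pow]
      simp
    · intro m m' hm hm'; rw [map_add, map_add, hm, hm']
  have hdσ : ∀ w : W, d (σ w) = - σ (d w) := by
    refine DirectSum.Decomposition.inductionOn 𝒜 (by simp) ?_ ?_
    · intro i m
      rw [hσ i m m.2, map_smul, hσ (i + 1) _ (hdg i m m.2), ← neg_smul]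
      congr 1; ring
    · intro m m' hm hm'; simp only [map_add, hm, hm']; abel
  have hσmul : ∀ x y : W, σ (x * y) = σ x * σ y := by
    refine DirectSum.Decomposition.inductionOn 𝒜 (by simp) ?_ ?_
    · intro i m
      refine DirectSum.Decomposition.inductionOn 𝒜 (by simp) ?_ ?_
      · intro j n
        rw [hσ (i + j) _ (SetLike.mul_mem_graded m.2 n.2), hσ i m m.2, hσ j n n.2,
          smul_mul_smul_comm, ← pow_add]
      · intro y y' hy hy'; rw [mul_add, map_add, hy, hy', map_add, mul_add]
    · intro x x' hx hx' y
      rw [add_mul, map_add, hx, hx', map_add, add_mul]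
  -- σ as an algebra homomorphism, to get multiplicativity of σ ⊗ σ
  let σA : W →ₐ[k] W := AlgHom.ofLinearMap σ hσ1 hσmul
  have hSeq : TensorProduct.map σ σ = (Algebra.TensorProduct.map σA σA).toLinearMap :=
    TensorProduct.ext' fun a b => rfl
  have hSmul : ∀ u v : W ⊗[k] W,
      TensorProduct.map σ σ (u * v)
        = TensorProduct.map σ σ u * TensorProduct.map σ σ v := by
    intro u v; rw [hSeq]; exact map_mul (Algebra.TensorProduct.map σA σA) u v
  -- d and i_Θ and L_Θ kill 1
  have hd1 : d 1 = 0 := by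
    have h := hdLeib 1 1
    simp only [mul_one, hσ1, one_mul] at h
    exact (left_eq_add.mp h)
  have hone : ((1 : W) ⊗ₜ[k] (1 : W)) = (1 : W ⊗[k] W) := rfl
  have hi1 : iΘ 1 = 0 := by
    have h := hiΘL 1 1
    simp only [mul_one, hσ1, hone, one_mul] at h
    exact (left_eq_add.mp h)
  have hL1 : LΘ 1 = 0 := by
    have h := hLΘL 1 1
    simp only [mul_one, hone, one_mul] at h
    exact (left_eq_add.mp h)
  -- σ ⊗ σ fixes the image of ι ⊗ ι
  have hmapσι : ∀ t : A ⊗[k] A,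
      TensorProduct.map σ σ (TensorProduct.map ιA.toLinearMap ιA.toLinearMap t)
        = TensorProduct.map ιA.toLinearMap ιA.toLinearMap t := by
    intro t
    induction t using TensorProduct.induction_on with
    | zero => simp
    | tmul a b => simp [hσι]
    | add x y hx hy => simp [hx, hy]
  have hmapσd : ∀ t : A ⊗[k] A,
      TensorProduct.map σ d (TensorProduct.map ιA.toLinearMap ιA.toLinearMap t)
        = TensorProduct.map (LinearMap.id : W →ₗ[k] W) d
            (TensorProduct.map ιA.toLinearMap ιA.toLinearMap t) := by
    intro t
    induction t using TensorProduct.induction_on with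
    | zero => simp
    | tmul a b => simp [hσι]
    | add x y hx hy => simp [hx, hy]
  -- super-Leibniz rules for D against the special products
  have hDright : ∀ (u : W ⊗[k] W) (y : W),
      D (u * ((1 : W) ⊗ₜ[k] y))
        = D u * ((1 : W) ⊗ₜ[k] y) + TensorProduct.map σ σ u * ((1 : W) ⊗ₜ[k] d y) := by
    intro u y
    induction u using TensorProduct.induction_on with
    | zero => simp
    | tmul a b =>
        simp only [Algebra.TensorProduct.tmul_mul_tmul, mul_one, one_mul, hDapp,
          hdLeib, TensorProduct.tmul_add, TensorProduct.map_tmul, add_mul]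
        abel
    | add x y' hx hy' =>
        rw [add_mul, map_add, hx, hy', map_add, map_add, add_mul, add_mul]
        abel
  have hDleft : ∀ (x : W) (v : W ⊗[k] W),
      D ((σ x ⊗ₜ[k] (1 : W)) * v)
        = -((σ (d x) ⊗ₜ[k] (1 : W)) * v) + (x ⊗ₜ[k] (1 : W)) * D v := by
    intro x v
    induction v using TensorProduct.induction_on with
    | zero => simp
    | tmul c e =>
        simp only [Algebra.TensorProduct.tmul_mul_tmul, one_mul, mul_one, hDapp,
          hdLeib, hσmul, hσσ, hdσ, TensorProduct.add_tmul, TensorProduct.neg_tmul,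
          neg_mul, mul_add, mul_neg, TensorProduct.tmul_add]
        abel
    | add u u' hu hu' =>
        rw [mul_add, map_add, hu, hu', map_add, mul_add, mul_add, neg_add]
        abel
  -- membership in the adjoin of the generators
  have hmem : ∀ w : W, w ∈ Algebra.adjoin k
      (Set.range (fun a : A => ιA a) ∪ Set.range (fun a : A => d (ιA a))) := by
    intro w; rw [hgen]; exact Algebra.mem_top
  -- i_Θ anticommutes with σ (through σ ⊗ σ)
  have hiσ : ∀ w : W, iΘ (σ w) = - TensorProduct.map σ σ (iΘ w) := by
    intro w
    refine Algebra.adjoin_induction (hx := hmem w) ?_ ?_ ?_ ?_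
    · rintro x (⟨a, rfl⟩ | ⟨a, rfl⟩)
      · rw [hσι, hiΘ0]; simp
      · rw [hσ 1 _ (hdg 0 _ (hι0 a))]
        rw [map_smul, hiΘd, hmapσι]
        simp
    · intro r
      simp only [Algebra.algebraMap_eq_smul_one, map_smul, hσ1, hi1, smul_zero,
        map_zero, neg_zero]
    · intro x y _ _ hx hy
      rw [map_add, map_add, hx, hy, map_add, map_add, neg_add]
    · intro x y _ _ hx hy
      rw [hσmul, hiΘL, hx, hσσ, hy, hiΘL x y, map_add, hSmul, hSmul]
      have h1y : TensorProduct.map σ σ ((1 : W) ⊗ₜ[k] y) = (1 : W) ⊗ₜ[k] σ y := by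
        simp [hσ1]
      have hx1 : TensorProduct.map σ σ (σ x ⊗ₜ[k] (1 : W)) = x ⊗ₜ[k] (1 : W) := by
        simp [hσ1, hσσ]
      rw [h1y, hx1, neg_add, neg_mul, mul_neg]
  -- the Cartan formula, pointwise
  have hmain : ∀ w : W, D (iΘ w) + iΘ (d w) = LΘ w := by
    intro w
    refine Algebra.adjoin_induction (hx := hmem w) ?_ ?_ ?_ ?_
    · rintro x (⟨a, rfl⟩ | ⟨a, rfl⟩)
      · rw [hiΘ0, map_zero, zero_add, hLΘ0]
        -- iΘ (d (ι a)) = map ι ι (Θ a)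
        rw [hiΘd]
      · rw [hiΘd, hdd, map_zero, add_zero, hLΘd]
        rw [hD, LinearMap.add_apply, LinearMap.add_apply, hmapσd]
    · intro r
      simp only [Algebra.algebraMap_eq_smul_one, map_smul, hi1, hd1, hL1, smul_zero,
        map_zero, add_zero]
    · intro x y _ _ hx hy
      rw [map_add, map_add, map_add, map_add, map_add, ← hx, ← hy]
      abel
    · intro x y _ _ hx hy
      rw [hiΘL x y, hdLeib x y, map_add iΘ (d x * y) (σ x * d y), hiΘL (d x) y,
        hiΘL (σ x) (d y),
        map_add D (iΘ x * ((1 : W) ⊗ₜ[k] y)) ((σ x ⊗ₜ[k] (1 : W)) * iΘ y),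
        hDright (iΘ x) y, hDleft x (iΘ y), hiσ x, hσσ x, hLΘL x y, ← hx, ← hy]
      simp only [neg_mul, add_mul, mul_add]
      abel
  constructor
  · ext w
    exact hmain w
  · -- D ∘ D = 0
    have hDD : ∀ u : W ⊗[k] W, D (D u) = 0 := by
      intro u
      induction u using TensorProduct.induction_on with
      | zero => simp
      | tmul a b =>
          rw [hDapp, map_add, hDapp, hDapp, hdd, hdσ, hσσ, hdd]
          rw [TensorProduct.zero_tmul, TensorProduct.tmul_zero, TensorProduct.neg_tmul]
          abel
      | add x y hx hy => rw [map_add, map_add, hx, hy, add_zero]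
    ext w
    have h1 : LΘ w = D (iΘ w) + iΘ (d w) := (hmain w).symm
    have h2 : LΘ (d w) = D (iΘ (d w)) + iΘ (d (d w)) := (hmain (d w)).symm
    rw [LinearMap.comp_apply, LinearMap.comp_apply, h1, h2, map_add, hDD, hdd, map_zero,
      zero_add, add_zero]
end

section
/- Reduced contraction descends to the Karoubi–de Rham complex: for fixed Θ ∈ Der_R(A,A⊗A), the reduced contraction ι_Θ(ω) := (i_Θ ω)^◇ ∈ Ω^{n-1}_R A (where (α⊗β)^◇ := (−1)^{deg α·deg β} βα) depends only on the image of ω ∈ Ω^n_R A in DR^n_R A; moreover, for fixed ω, the map Θ ↦ ι_Θ ω is an A-bimodule morphism Der_R(A,A⊗A) → Ω^{n-1}_R A with respect to the inner bimodule structure. -/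
/-!
The contraction `i_Θ` is a twisted derivation `W → W ⊗ W` of degree `-1`, so it is determined by
its values on the generators `a` and `da`, and it sends a homogeneous form of degree `p` into the
span of the tensors `z₁ ⊗ z₂` with `|z₁| + |z₂| = p - 1`. On such tensors, moving a factor `y` of
degree `q` from the back of the right slot to the front of the left slot (twisted by `σ`) changes
`(·)^◇` by the sign `(-1)^{pq}`; applied to both terms of the Leibniz rule for `i_Θ(xy)` this gives
`ι_Θ(xy) = (-1)^{pq} ι_Θ(yx)`. For the bimodule property, `(1 ⊗ c) · i_Θ · (b ⊗ 1)` is again a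
twisted derivation, it agrees with `i_{cΘb}` on the generators, and `(·)^◇` turns the outer factors
into `c · (·) · b`.
-/

open TensorProduct

section

variable {k W : Type*} [CommRing k] [Ring W] [Algebra k W]

theorem iSup_eq_top_of_adjoin_eq_top (N : ℕ → Submodule k W) [SetLike.GradedMonoid N]
    {s : Set W} (hs : Algebra.adjoin k s = ⊤) (hsN : ∀ x ∈ s, ∃ p, x ∈ N p) :
    ⨆ p, N p = ⊤ := by
  have hmul : (⨆ i, N i) * (⨆ j, N j) ≤ ⨆ i, N i := by
    rw [Submodule.iSup_mul]
    refine iSup_le fun i => ?_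
    rw [Submodule.mul_iSup]
    refine iSup_le fun j => Submodule.mul_le.2 fun x hx y hy => ?_
    exact Submodule.mem_iSup_of_mem (i + j) (SetLike.mul_mem_graded hx hy)
  let S : Subalgebra k W := (⨆ i, N i).toSubalgebra
    (Submodule.mem_iSup_of_mem 0 SetLike.GradedOne.one_mem)
    fun x y hx hy => hmul (Submodule.mul_mem_mul hx hy)
  have hle : Algebra.adjoin k s ≤ S := Algebra.adjoin_le fun x hx =>
    let ⟨p, hp⟩ := hsN x hx
    Submodule.mem_iSup_of_mem p hp
  exact eq_top_iff.2 fun x _ => hle (hs ▸ Algebra.mem_top)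

section Graded

variable (𝒜 : ℕ → Submodule k W)

theorem TensorProduct.ext_homogeneous [DirectSum.Decomposition 𝒜] {M : Type*} [AddCommGroup M]
    [Module k M] {φ ψ : W ⊗[k] W →ₗ[k] M}
    (h : ∀ i j, ∀ x ∈ 𝒜 i, ∀ y ∈ 𝒜 j, φ (x ⊗ₜ y) = ψ (x ⊗ₜ y)) : φ = ψ := by
  refine TensorProduct.ext' fun x y => ?_
  induction x using DirectSum.Decomposition.inductionOn 𝒜 with
  | zero => simp
  | homogeneous x =>
    induction y using DirectSum.Decomposition.inductionOn 𝒜 with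
    | zero => simp
    | homogeneous y => exact h _ _ _ x.2 _ y.2
    | add y y' hy hy' => simp only [tmul_add, map_add, hy, hy']
  | add x x' hx hx' => simp only [add_tmul, map_add, hx, hx']

theorem DirectSum.decompose_mem_of_mem_iSup [DirectSum.Decomposition 𝒜] {N : ℕ → Submodule k W}
    (hN : ∀ p, N p ≤ 𝒜 p) {x : W} (hx : x ∈ ⨆ p, N p) (m : ℕ) :
    (DirectSum.decompose 𝒜 x m : W) ∈ N m := by
  induction hx using Submodule.iSup_induction' generalizing m with
  | mem i z hz =>
    rcases eq_or_ne m i with rfl | hne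
    · rwa [DirectSum.decompose_of_mem_same 𝒜 (hN m hz)]
    · rw [DirectSum.decompose_of_mem_ne 𝒜 (hN i hz) hne.symm]
      exact zero_mem _
  | zero => simp
  | add a b _ _ ha hb =>
    rw [DirectSum.decompose_add, DirectSum.add_apply, Submodule.coe_add]
    exact add_mem (ha m) (hb m)

theorem le_of_adjoin_eq_top_of_gradedMonoid [DirectSum.Decomposition 𝒜] (N : ℕ → Submodule k W)
    [SetLike.GradedMonoid N] (hN : ∀ p, N p ≤ 𝒜 p) {s : Set W}
    (hs : Algebra.adjoin k s = ⊤) (hsN : ∀ x ∈ s, ∃ p, x ∈ N p) (p : ℕ) : 𝒜 p ≤ N p := by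
  intro x hx
  have h := DirectSum.decompose_mem_of_mem_iSup 𝒜 hN (x := x)
    ((iSup_eq_top_of_adjoin_eq_top N hs hsN).symm ▸ Submodule.mem_top) p
  rwa [DirectSum.decompose_of_mem_same 𝒜 hx] at h

/-- Tensors of total degree `p - 1`, written with `+ 1` so that `p = 0` gives `⊥`. -/
def shiftedTensorGraded (p : ℕ) : Submodule k (W ⊗[k] W) :=
  Submodule.span k {t | ∃ i j z₁ z₂, i + j + 1 = p ∧ z₁ ∈ 𝒜 i ∧ z₂ ∈ 𝒜 j ∧ t = z₁ ⊗ₜ[k] z₂}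

variable {𝒜}

theorem tmul_mem_shiftedTensorGraded {i j : ℕ} {z₁ z₂ : W} (h₁ : z₁ ∈ 𝒜 i) (h₂ : z₂ ∈ 𝒜 j) :
    z₁ ⊗ₜ z₂ ∈ shiftedTensorGraded 𝒜 (i + j + 1) :=
  Submodule.subset_span ⟨i, j, z₁, z₂, rfl, h₁, h₂, rfl⟩

theorem map_mem_shiftedTensorGraded_one {M N : Type*} [AddCommGroup M] [Module k M]
    [AddCommGroup N] [Module k N] {f : M →ₗ[k] W} {g : N →ₗ[k] W} (hf : ∀ m, f m ∈ 𝒜 0)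
    (hg : ∀ n, g n ∈ 𝒜 0) (t : M ⊗[k] N) :
    TensorProduct.map f g t ∈ shiftedTensorGraded 𝒜 1 := by
  induction t using TensorProduct.induction_on with
  | zero => simp
  | tmul m n =>
    rw [map_tmul]
    exact tmul_mem_shiftedTensorGraded (i := 0) (j := 0) (hf m) (hg n)
  | add t t' ht ht' => simpa only [map_add] using add_mem ht ht'

variable [SetLike.GradedMonoid 𝒜]

theorem mul_one_tmul_mem_shiftedTensorGraded {p q : ℕ} {t : W ⊗[k] W}
    (ht : t ∈ shiftedTensorGraded 𝒜 p) {y : W} (hy : y ∈ 𝒜 q) :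
    t * ((1 : W) ⊗ₜ y) ∈ shiftedTensorGraded 𝒜 (p + q) := by
  refine (Submodule.span_le (p := (shiftedTensorGraded 𝒜 (p + q)).comap
    (LinearMap.mulRight k ((1 : W) ⊗ₜ[k] y)))).2 ?_ ht
  rintro _ ⟨i, j, z₁, z₂, rfl, h₁, h₂, rfl⟩
  rw [SetLike.mem_coe, Submodule.mem_comap, LinearMap.mulRight_apply,
    Algebra.TensorProduct.tmul_mul_tmul, mul_one, show i + j + 1 + q = i + (j + q) + 1 by omega]
  exact tmul_mem_shiftedTensorGraded h₁ (SetLike.mul_mem_graded h₂ hy)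

theorem tmul_one_mul_mem_shiftedTensorGraded {p q : ℕ} {x : W} (hx : x ∈ 𝒜 q)
    {t : W ⊗[k] W} (ht : t ∈ shiftedTensorGraded 𝒜 p) :
    (x ⊗ₜ (1 : W)) * t ∈ shiftedTensorGraded 𝒜 (q + p) := by
  refine (Submodule.span_le (p := (shiftedTensorGraded 𝒜 (q + p)).comap
    (LinearMap.mulLeft k (x ⊗ₜ[k] (1 : W))))).2 ?_ ht
  rintro _ ⟨i, j, z₁, z₂, rfl, h₁, h₂, rfl⟩
  rw [SetLike.mem_coe, Submodule.mem_comap, LinearMap.mulLeft_apply,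
    Algebra.TensorProduct.tmul_mul_tmul, one_mul, show q + (i + j + 1) = q + i + j + 1 by omega]
  exact tmul_mem_shiftedTensorGraded (SetLike.mul_mem_graded hx h₁) h₂

end Graded

def IsTwistedDerivation (σ : W →ₗ[k] W) (i : W →ₗ[k] W ⊗[k] W) : Prop :=
  ∀ x y, i (x * y) = i x * ((1 : W) ⊗ₜ[k] y) + (σ x ⊗ₜ[k] (1 : W)) * i y

namespace IsTwistedDerivation

variable {σ : W →ₗ[k] W} {i i' : W →ₗ[k] W ⊗[k] W}

theorem map_one (hi : IsTwistedDerivation σ i) (hσ : σ 1 = 1) : i 1 = 0 := by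
  have h := hi 1 1
  rwa [mul_one, hσ, ← Algebra.TensorProduct.one_def, mul_one, one_mul, left_eq_add] at h

theorem ext (hi : IsTwistedDerivation σ i) (hi' : IsTwistedDerivation σ i') (hσ : σ 1 = 1)
    {s : Set W} (hs : Algebra.adjoin k s = ⊤) (h : Set.EqOn i i' s) : i = i' := by
  ext x
  have hx : x ∈ Algebra.adjoin k s := hs ▸ Algebra.mem_top
  induction hx using Algebra.adjoin_induction with
  | mem x hx => exact h hx
  | algebraMap r =>
    rw [Algebra.algebraMap_eq_smul_one, map_smul, map_smul, hi.map_one hσ, hi'.map_one hσ]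
  | add x y _ _ hx hy => rw [map_add, map_add, hx, hy]
  | mul x y _ _ hx hy => rw [hi, hi', hx, hy]

theorem mulRight_comp_mulLeft_comp (hi : IsTwistedDerivation σ i) {u v : W ⊗[k] W}
    (hu : ∀ x, Commute u (σ x ⊗ₜ 1)) (hv : ∀ y, Commute v ((1 : W) ⊗ₜ y)) :
    IsTwistedDerivation σ (LinearMap.mulRight k v ∘ₗ LinearMap.mulLeft k u ∘ₗ i) := by
  intro x y
  simp only [LinearMap.comp_apply, LinearMap.mulLeft_apply, LinearMap.mulRight_apply, hi x y]
  rw [mul_add, add_mul, ← mul_assoc u, mul_assoc _ _ v, ← (hv y).eq, ← mul_assoc, ← mul_assoc u,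
    (hu x).eq]
  simp only [mul_assoc]

end IsTwistedDerivation

section Diamond

variable {𝒜 : ℕ → Submodule k W} {σ : W →ₗ[k] W} {dia : W ⊗[k] W →ₗ[k] W}

theorem IsTwistedDerivation.mem_shiftedTensorGraded [GradedAlgebra 𝒜]
    (hσ : ∀ n, ∀ w ∈ 𝒜 n, σ w = (-1 : k) ^ n • w)
    {i : W →ₗ[k] W ⊗[k] W} (hi : IsTwistedDerivation σ i) {s : Set W}
    (hs : Algebra.adjoin k s = ⊤) (hsi : ∀ x ∈ s, ∃ p, x ∈ 𝒜 p ∧ i x ∈ shiftedTensorGraded 𝒜 p)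
    {p : ℕ} {x : W} (hx : x ∈ 𝒜 p) : i x ∈ shiftedTensorGraded 𝒜 p := by
  let N p := 𝒜 p ⊓ (shiftedTensorGraded 𝒜 p).comap i
  have : SetLike.GradedMonoid N :=
    { one_mem := by
        have hσ1 : σ 1 = 1 := by simpa using hσ 0 1 SetLike.GradedOne.one_mem
        exact ⟨SetLike.GradedOne.one_mem, by simp [hi.map_one hσ1]⟩
      mul_mem := fun p q x y hx hy => by
        refine ⟨SetLike.mul_mem_graded hx.1 hy.1, ?_⟩
        rw [SetLike.mem_coe, Submodule.mem_comap, hi x y, hσ p x hx.1, ← smul_tmul',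
          smul_mul_assoc]
        exact add_mem (mul_one_tmul_mem_shiftedTensorGraded hx.2 hy.1)
          (Submodule.smul_mem _ _ (tmul_one_mul_mem_shiftedTensorGraded hx.1 hy.2)) }
  exact (le_of_adjoin_eq_top_of_gradedMonoid 𝒜 N (fun _ => inf_le_left) hs hsi p hx).2

theorem diamond_mul_one_tmul [SetLike.GradedMonoid 𝒜]
    (hσ : ∀ n, ∀ w ∈ 𝒜 n, σ w = (-1 : k) ^ n • w)
    (hdia : ∀ p q, ∀ x ∈ 𝒜 p, ∀ y ∈ 𝒜 q, dia (x ⊗ₜ y) = (-1 : k) ^ (p * q) • (y * x))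
    {p q : ℕ} {t : W ⊗[k] W} (ht : t ∈ shiftedTensorGraded 𝒜 p) {y : W} (hy : y ∈ 𝒜 q) :
    dia (t * ((1 : W) ⊗ₜ y)) = (-1 : k) ^ (p * q) • dia ((σ y ⊗ₜ (1 : W)) * t) := by
  induction ht using Submodule.span_induction with
  | mem t ht =>
    obtain ⟨i, j, z₁, z₂, rfl, h₁, h₂, rfl⟩ := ht
    have hsign : (-1 : k) ^ (i * (j + q)) =
        (-1 : k) ^ ((i + j + 1) * q) * (-1 : k) ^ q * (-1 : k) ^ ((q + i) * j) := by
      rw [← pow_add, ← pow_add, show (i + j + 1) * q + q + (q + i) * j =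
        i * (j + q) + 2 * (q * (1 + j)) by ring, pow_add, pow_mul (-1 : k) 2, neg_one_sq,
        one_pow, mul_one]
    rw [Algebra.TensorProduct.tmul_mul_tmul, mul_one, hσ q y hy, ← smul_tmul', smul_mul_assoc,
      Algebra.TensorProduct.tmul_mul_tmul, one_mul, map_smul, smul_smul,
      hdia _ _ _ h₁ _ (SetLike.mul_mem_graded h₂ hy),
      hdia _ _ _ (SetLike.mul_mem_graded hy h₁) _ h₂, smul_smul, hsign, mul_assoc z₂]
  | zero => simp
  | add t t' _ _ ht ht' => rw [add_mul, mul_add, map_add, map_add, ht, ht', smul_add]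
  | smul r t _ ht => rw [smul_mul_assoc, mul_smul_comm, map_smul, map_smul, ht, smul_comm]

theorem IsTwistedDerivation.diamond_map_mul_comm [SetLike.GradedMonoid 𝒜]
    (hσ : ∀ n, ∀ w ∈ 𝒜 n, σ w = (-1 : k) ^ n • w)
    (hdia : ∀ p q, ∀ x ∈ 𝒜 p, ∀ y ∈ 𝒜 q, dia (x ⊗ₜ y) = (-1 : k) ^ (p * q) • (y * x))
    {i : W →ₗ[k] W ⊗[k] W} (hi : IsTwistedDerivation σ i)
    (hmem : ∀ p, ∀ x ∈ 𝒜 p, i x ∈ shiftedTensorGraded 𝒜 p) {p q : ℕ} {x y : W}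
    (hx : x ∈ 𝒜 p) (hy : y ∈ 𝒜 q) :
    dia (i (x * y)) = (-1 : k) ^ (p * q) • dia (i (y * x)) := by
  have hsq : (-1 : k) ^ (p * q) * (-1 : k) ^ (q * p) = 1 := by
    rw [mul_comm q p, ← pow_add, ← two_mul, pow_mul, neg_one_sq, one_pow]
  rw [hi x y, hi y x, map_add, map_add, diamond_mul_one_tmul hσ hdia (hmem p x hx) hy,
    diamond_mul_one_tmul hσ hdia (hmem q y hy) hx, smul_add, smul_smul, hsq, one_smul, add_comm]

theorem diamond_one_tmul_mul_mul_tmul_one [GradedAlgebra 𝒜]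
    (hdia : ∀ p q, ∀ x ∈ 𝒜 p, ∀ y ∈ 𝒜 q, dia (x ⊗ₜ y) = (-1 : k) ^ (p * q) • (y * x))
    {c b : W} (hc : c ∈ 𝒜 0) (hb : b ∈ 𝒜 0) (t : W ⊗[k] W) :
    dia (((1 : W) ⊗ₜ c) * t * (b ⊗ₜ (1 : W))) = c * dia t * b := by
  suffices h : dia ∘ₗ LinearMap.mulRight k (b ⊗ₜ 1) ∘ₗ LinearMap.mulLeft k ((1 : W) ⊗ₜ c) =
      LinearMap.mulRight k b ∘ₗ LinearMap.mulLeft k c ∘ₗ dia from LinearMap.congr_fun h t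
  refine TensorProduct.ext_homogeneous 𝒜 fun i j x hx y hy => ?_
  have hxb : x * b ∈ 𝒜 i := by simpa using SetLike.mul_mem_graded hx hb
  have hcy : c * y ∈ 𝒜 j := by simpa using SetLike.mul_mem_graded hc hy
  simp only [LinearMap.comp_apply, LinearMap.mulLeft_apply, LinearMap.mulRight_apply,
    Algebra.TensorProduct.tmul_mul_tmul, one_mul, mul_one, hdia _ _ _ hxb _ hcy,
    hdia _ _ _ hx _ hy, mul_smul_comm, smul_mul_assoc, mul_assoc]

end Diamond

end

theorem stmt11_general (k A W : Type*) [Field k]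
    [Ring A] [Algebra k A]
    [Ring W] [Algebra k W]
    (𝒜 : ℕ → Submodule k W) [GradedAlgebra 𝒜]
    (ιA : A →ₐ[k] W) (d σ : W →ₗ[k] W)
    (hι0 : ∀ a : A, ιA a ∈ 𝒜 0)
    (hdg : ∀ (n : ℕ), ∀ w ∈ 𝒜 n, d w ∈ 𝒜 (n + 1))
    (hσ : ∀ (n : ℕ), ∀ w ∈ 𝒜 n, σ w = ((-1 : k) ^ n) • w)
    (hgen : Algebra.adjoin k
        (Set.range (fun a : A => ιA a) ∪ Set.range (fun a : A => d (ιA a))) = ⊤)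
    (dia : W ⊗[k] W →ₗ[k] W)
    (hdia : ∀ (p q : ℕ), ∀ x ∈ 𝒜 p, ∀ y ∈ 𝒜 q,
        dia (x ⊗ₜ[k] y) = ((-1 : k) ^ (p * q)) • (y * x))
    -- the double derivation Θ and its contraction
    (Θ : A →ₗ[k] A ⊗[k] A)
    (iΘ : W →ₗ[k] W ⊗[k] W)
    (hiΘ0 : ∀ a : A, iΘ (ιA a) = 0)
    (hiΘd : ∀ a : A, iΘ (d (ιA a)) = TensorProduct.map ιA.toLinearMap ιA.toLinearMap (Θ a))
    (hiΘL : ∀ x y : W,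
        iΘ (x * y) = iΘ x * ((1 : W) ⊗ₜ[k] y) + (σ x ⊗ₜ[k] (1 : W)) * iΘ y) :
    -- (i) ι_Θ descends to the Karoubi–de Rham complex
    (∀ (p q : ℕ) (x y : W), x ∈ 𝒜 p → y ∈ 𝒜 q →
      dia (iΘ (x * y)) = ((-1 : k) ^ (p * q)) • dia (iΘ (y * x)))
    -- (ii) Θ ↦ ι_Θ ω is a morphism for the inner bimodule structure:
    --      ι_{c·Θ·b} ω = c · (ι_Θ ω) · b
    ∧ (∀ (c b : A) (Θ₂ : A →ₗ[k] A ⊗[k] A),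
        (∀ x : A, Θ₂ x = ((1 : A) ⊗ₜ[k] c) * Θ x * (b ⊗ₜ[k] (1 : A))) →
        ∀ iΘ₂ : W →ₗ[k] W ⊗[k] W,
          (∀ a : A, iΘ₂ (ιA a) = 0) →
          (∀ a : A,
            iΘ₂ (d (ιA a)) = TensorProduct.map ιA.toLinearMap ιA.toLinearMap (Θ₂ a)) →
          (∀ x y : W,
            iΘ₂ (x * y) = iΘ₂ x * ((1 : W) ⊗ₜ[k] y) + (σ x ⊗ₜ[k] (1 : W)) * iΘ₂ y) →
          ∀ ω : W, dia (iΘ₂ ω) = ιA c * dia (iΘ ω) * ιA b) := by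
  have hmem : ∀ p, ∀ x ∈ 𝒜 p, iΘ x ∈ shiftedTensorGraded 𝒜 p := by
    refine fun p x hx => IsTwistedDerivation.mem_shiftedTensorGraded hσ hiΘL hgen ?_ hx
    rintro _ (⟨a, rfl⟩ | ⟨a, rfl⟩)
    · exact ⟨0, hι0 a, by simp [hiΘ0]⟩
    · exact ⟨1, hdg 0 _ (hι0 a), hiΘd a ▸ map_mem_shiftedTensorGraded_one hι0 hι0 (Θ a)⟩
  refine ⟨fun p q x y hx hy => IsTwistedDerivation.diamond_map_mul_comm hσ hdia hiΘL hmem hx hy,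
    fun c b Θ₂ hΘ₂ iΘ₂ hiΘ₂0 hiΘ₂d hiΘ₂L ω => ?_⟩
  have hσ1 : σ 1 = 1 := by simpa using hσ 0 1 SetLike.GradedOne.one_mem
  have hiΘ₂ : iΘ₂ = LinearMap.mulRight k (ιA b ⊗ₜ 1) ∘ₗ LinearMap.mulLeft k (1 ⊗ₜ ιA c) ∘ₗ iΘ := by
    refine IsTwistedDerivation.ext hiΘ₂L (IsTwistedDerivation.mulRight_comp_mulLeft_comp hiΘL
      (fun x => (Commute.one_left _).tmul (Commute.one_right _))
      (fun y => (Commute.one_right _).tmul (Commute.one_left _))) hσ1 hgen ?_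
    rintro _ (⟨a, rfl⟩ | ⟨a, rfl⟩)
    · simp [hiΘ₂0, hiΘ0]
    · change iΘ₂ (d (ιA a)) = (1 ⊗ₜ ιA c) * iΘ (d (ιA a)) * (ιA b ⊗ₜ 1)
      rw [hiΘ₂d, hiΘd, hΘ₂]
      change Algebra.TensorProduct.map ιA ιA _ = _ * Algebra.TensorProduct.map ιA ιA _ * _
      simp only [map_mul, Algebra.TensorProduct.map_tmul, map_one]
  rw [hiΘ₂]
  exact diamond_one_tmul_mul_mul_tmul_one hdia (hι0 c) (hι0 b) (iΘ ω)

/-- For fixed `Θ ∈ Der_R(A, A ⊗ A)`, the reduced contraction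
`ι_Θ(ω) = (i_Θ ω)^◇ ∈ Ω^{n-1}_R A` depends only on the image of `ω ∈ Ω^n_R A` in the
Karoubi–de Rham space `DR^n_R A = Ω^n/[Ω,Ω]_super`, i.e. `ι_Θ` kills super-commutators:
`ι_Θ(αβ) = (-1)^{|α||β|} ι_Θ(βα)`.  Moreover, for fixed `ω`, the assignment
`Θ ↦ ι_Θ ω` is a morphism of `A`-bimodules with respect to the inner bimodule
structure: `ι_{c·Θ·b}(ω) = c · (ι_Θ ω) · b`. -/
theorem stmt11 (k R A W : Type*) [Field k] [CharZero k]
    [Ring R] [Algebra k R] [FiniteDimensional k R] [IsSemisimpleRing R]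
    [Ring A] [Algebra k A] (f : R →ₐ[k] A)
    [Ring W] [Algebra k W]
    (𝒜 : ℕ → Submodule k W) [GradedAlgebra 𝒜]
    (ιA : A →ₐ[k] W) (d σ : W →ₗ[k] W)
    (hι0 : ∀ a : A, ιA a ∈ 𝒜 0)
    (hdg : ∀ (n : ℕ), ∀ w ∈ 𝒜 n, d w ∈ 𝒜 (n + 1))
    (hσ : ∀ (n : ℕ), ∀ w ∈ 𝒜 n, σ w = ((-1 : k) ^ n) • w)
    (hdd : ∀ w : W, d (d w) = 0)
    (hdLeib : ∀ x y : W, d (x * y) = d x * y + σ x * d y)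
    (hdR : ∀ r : R, d (ιA (f r)) = 0)
    (hgen : Algebra.adjoin k
        (Set.range (fun a : A => ιA a) ∪ Set.range (fun a : A => d (ιA a))) = ⊤)
    (dia : W ⊗[k] W →ₗ[k] W)
    (hdia : ∀ (p q : ℕ), ∀ x ∈ 𝒜 p, ∀ y ∈ 𝒜 q,
        dia (x ⊗ₜ[k] y) = ((-1 : k) ^ (p * q)) • (y * x))
    -- the double derivation Θ and its contraction
    (Θ : A →ₗ[k] A ⊗[k] A)
    (hΘder : ∀ x y : A, Θ (x * y) = (x ⊗ₜ[k] (1 : A)) * Θ y + Θ x * ((1 : A) ⊗ₜ[k] y))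
    (hΘR : ∀ r : R, Θ (f r) = 0)
    (iΘ : W →ₗ[k] W ⊗[k] W)
    (hiΘ0 : ∀ a : A, iΘ (ιA a) = 0)
    (hiΘd : ∀ a : A, iΘ (d (ιA a)) = TensorProduct.map ιA.toLinearMap ιA.toLinearMap (Θ a))
    (hiΘL : ∀ x y : W,
        iΘ (x * y) = iΘ x * ((1 : W) ⊗ₜ[k] y) + (σ x ⊗ₜ[k] (1 : W)) * iΘ y) :
    -- (i) ι_Θ descends to the Karoubi–de Rham complex
    (∀ (p q : ℕ) (x y : W), x ∈ 𝒜 p → y ∈ 𝒜 q →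
      dia (iΘ (x * y)) = ((-1 : k) ^ (p * q)) • dia (iΘ (y * x)))
    -- (ii) Θ ↦ ι_Θ ω is a morphism for the inner bimodule structure:
    --      ι_{c·Θ·b} ω = c · (ι_Θ ω) · b
    ∧ (∀ (c b : A) (Θ₂ : A →ₗ[k] A ⊗[k] A),
        (∀ x : A, Θ₂ x = ((1 : A) ⊗ₜ[k] c) * Θ x * (b ⊗ₜ[k] (1 : A))) →
        ∀ iΘ₂ : W →ₗ[k] W ⊗[k] W,
          (∀ a : A, iΘ₂ (ιA a) = 0) →
          (∀ a : A,
            iΘ₂ (d (ιA a)) = TensorProduct.map ιA.toLinearMap ιA.toLinearMap (Θ₂ a)) →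
          (∀ x y : W,
            iΘ₂ (x * y) = iΘ₂ x * ((1 : W) ⊗ₜ[k] y) + (σ x ⊗ₜ[k] (1 : W)) * iΘ₂ y) →
          ∀ ω : W, dia (iΘ₂ ω) = ιA c * dia (iΘ ω) * ιA b) :=
  stmt11_general k A W 𝒜 ιA d σ hι0 hdg hσ hgen dia hdia Θ iΘ hiΘ0 hiΘd hiΘL
end

section
/- Reduced Cartan identity: for any double derivation Θ ∈ Der_R(A,A⊗A), one has d∘ι_Θ + ι_Θ∘d = 𝓛_Θ on Ω•_R A, where ι_Θ is the reduced contraction and 𝓛_Θ ω := (L_Θ ω)^◇ is the reduced Lie derivative. Moreover d∘𝓛_Θ = 𝓛_Θ∘d. -/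
open TensorProduct

/-- **Reduced Cartan identity.** For any double derivation
`Θ ∈ Der_R(A, A ⊗ A)` one has `d ∘ ι_Θ + ι_Θ ∘ d = 𝓛_Θ` on `Ω•_R A`, where
`ι_Θ = ◇ ∘ i_Θ` is the reduced contraction and `𝓛_Θ = ◇ ∘ L_Θ` the reduced Lie
derivative; moreover `d ∘ 𝓛_Θ = 𝓛_Θ ∘ d`.

Here `(W, 𝒜, ιA, d, σ)` is the DG algebra `Ω•_R A` of relative noncommutative forms,
`dia` is the operation `(α ⊗ β)^◇ = (-1)^{deg α · deg β} β α`, `i_Θ` is the contraction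
(degree `-1` super-derivation with values in `W ⊗ W`) and `L_Θ` the Lie derivative
(degree `0` derivation) associated with `Θ`. -/
theorem stmt12 (k R A W : Type*) [Field k] [CharZero k]
    [Ring R] [Algebra k R] [FiniteDimensional k R] [IsSemisimpleRing R]
    [Ring A] [Algebra k A] (f : R →ₐ[k] A)
    [Ring W] [Algebra k W]
    (𝒜 : ℕ → Submodule k W) [GradedAlgebra 𝒜]
    (ιA : A →ₐ[k] W) (d σ : W →ₗ[k] W)
    (hι0 : ∀ a : A, ιA a ∈ 𝒜 0)
    (hdg : ∀ (n : ℕ), ∀ w ∈ 𝒜 n, d w ∈ 𝒜 (n + 1))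
    (hσ : ∀ (n : ℕ), ∀ w ∈ 𝒜 n, σ w = ((-1 : k) ^ n) • w)
    (hdd : ∀ w : W, d (d w) = 0)
    (hdLeib : ∀ x y : W, d (x * y) = d x * y + σ x * d y)
    (hdR : ∀ r : R, d (ιA (f r)) = 0)
    (hgen : Algebra.adjoin k
        (Set.range (fun a : A => ιA a) ∪ Set.range (fun a : A => d (ιA a))) = ⊤)
    -- the operation (α ⊗ β) ↦ (α ⊗ β)^◇ = (-1)^{|α||β|} βα
    (dia : W ⊗[k] W →ₗ[k] W)
    (hdia : ∀ (p q : ℕ), ∀ x ∈ 𝒜 p, ∀ y ∈ 𝒜 q,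
        dia (x ⊗ₜ[k] y) = ((-1 : k) ^ (p * q)) • (y * x))
    -- the double derivation
    (Θ : A →ₗ[k] A ⊗[k] A)
    (hΘder : ∀ x y : A, Θ (x * y) = (x ⊗ₜ[k] (1 : A)) * Θ y + Θ x * ((1 : A) ⊗ₜ[k] y))
    (hΘR : ∀ r : R, Θ (f r) = 0)
    -- contraction with Θ
    (iΘ : W →ₗ[k] W ⊗[k] W)
    (hiΘ0 : ∀ a : A, iΘ (ιA a) = 0)
    (hiΘd : ∀ a : A, iΘ (d (ιA a)) = TensorProduct.map ιA.toLinearMap ιA.toLinearMap (Θ a))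
    (hiΘL : ∀ x y : W,
        iΘ (x * y) = iΘ x * ((1 : W) ⊗ₜ[k] y) + (σ x ⊗ₜ[k] (1 : W)) * iΘ y)
    -- Lie derivative along Θ
    (LΘ : W →ₗ[k] W ⊗[k] W)
    (hLΘ0 : ∀ a : A, LΘ (ιA a) = TensorProduct.map ιA.toLinearMap ιA.toLinearMap (Θ a))
    (hLΘd : ∀ a : A, LΘ (d (ιA a)) =
        (TensorProduct.map d (LinearMap.id : W →ₗ[k] W)
            + TensorProduct.map (LinearMap.id : W →ₗ[k] W) d)
          (TensorProduct.map ιA.toLinearMap ιA.toLinearMap (Θ a)))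
    (hLΘL : ∀ x y : W,
        LΘ (x * y) = LΘ x * ((1 : W) ⊗ₜ[k] y) + (x ⊗ₜ[k] (1 : W)) * LΘ y) :
    d ∘ₗ (dia ∘ₗ iΘ) + (dia ∘ₗ iΘ) ∘ₗ d = dia ∘ₗ LΘ
    ∧ d ∘ₗ (dia ∘ₗ LΘ) = (dia ∘ₗ LΘ) ∘ₗ d := by
  classical
  -- notation
  set ιι : A ⊗[k] A →ₗ[k] W ⊗[k] W :=
    TensorProduct.map ιA.toLinearMap ιA.toLinearMap with hιι
  set D : W ⊗[k] W →ₗ[k] W ⊗[k] W :=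
    TensorProduct.map d LinearMap.id + TensorProduct.map σ d with hD
  -- σ of 1
  have hσ1 : σ (1 : W) = 1 := by
    have := hσ 0 1 (SetLike.one_mem_graded 𝒜)
    simpa using this
  -- σ on degree-0 images of A
  have hσι : ∀ a : A, σ (ιA a) = ιA a := by
    intro a
    have := hσ 0 (ιA a) (hι0 a)
    simpa using this
  have hσdι : ∀ a : A, σ (d (ιA a)) = - d (ιA a) := by
    intro a
    have := hσ 1 (d (ιA a)) (hdg 0 (ιA a) (hι0 a))
    simpa using this
  -- σ ∘ d = - d ∘ σ
  have hσd : ∀ w : W, σ (d w) + d (σ w) = 0 := by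
    refine DirectSum.Decomposition.inductionOn 𝒜 ?_ ?_ ?_
    · simp
    · intro n m
      obtain ⟨w, hw⟩ := m
      have h1 : σ (d w) = ((-1 : k) ^ (n+1)) • d w := hσ (n+1) (d w) (hdg n w hw)
      have h2 : d (σ w) = ((-1 : k) ^ n) • d w := by
        rw [hσ n w hw, map_smul]
      rw [h1, h2, ← add_smul, pow_succ]
      simp
    · intro x y hx hy
      simp only [map_add]
      rw [add_add_add_comm, hx, hy, add_zero]
  -- σ ∘ σ = id
  have hσσ : ∀ w : W, σ (σ w) = w := by
    refine DirectSum.Decomposition.inductionOn 𝒜 ?_ ?_ ?_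
    · simp
    · intro n m
      obtain ⟨w, hw⟩ := m
      rw [hσ n w hw, map_smul, hσ n w hw, smul_smul, ← pow_add]
      have : ((-1 : k)) ^ (n + n) = 1 := by
        rw [← two_mul, pow_mul]; norm_num
      rw [this, one_smul]
    · intro x y hx hy
      rw [map_add, map_add, hx, hy]
  -- σ is multiplicative
  have hσmul : ∀ x y : W, σ (x * y) = σ x * σ y := by
    refine DirectSum.Decomposition.inductionOn 𝒜 ?_ ?_ ?_
    · intro y; simp
    · intro p m
      obtain ⟨x, hx⟩ := m
      refine DirectSum.Decomposition.inductionOn 𝒜 ?_ ?_ ?_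
      · simp
      · intro q m'
        obtain ⟨y, hy⟩ := m'
        have hxy : x * y ∈ 𝒜 (p + q) := SetLike.mul_mem_graded hx hy
        rw [hσ (p+q) (x*y) hxy, hσ p x hx, hσ q y hy, smul_mul_assoc,
          mul_smul_comm, smul_smul, pow_add]
      · intro y1 y2 h1 h2
        rw [mul_add, map_add, h1, h2, map_add, mul_add]
    · intro x1 x2 h1 h2 y
      rw [add_mul, map_add, h1 y, h2 y, map_add, add_mul]
  -- σ as an algebra hom, and Σ = σ ⊗ σ
  let σA : W →ₐ[k] W := AlgHom.ofLinearMap σ hσ1 hσmul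
  let SG : W ⊗[k] W →ₐ[k] W ⊗[k] W := Algebra.TensorProduct.map σA σA
  have hSGtmul : ∀ x y : W, SG (x ⊗ₜ[k] y) = σ x ⊗ₜ[k] σ y := fun x y => rfl
  -- basic unit values
  have hd1 : d (1 : W) = 0 := by
    have h := hdLeib 1 1
    simp only [one_mul, mul_one, hσ1] at h
    exact (left_eq_add.mp h)
  have hiΘ1 : iΘ (1 : W) = 0 := by
    have := hiΘL 1 1
    simp only [one_mul, mul_one, hσ1, ← Algebra.TensorProduct.one_def] at this
    exact (left_eq_add.mp this)
  have hLΘ1 : LΘ (1 : W) = 0 := by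
    have := hLΘL 1 1
    simp only [one_mul, mul_one, ← Algebra.TensorProduct.one_def] at this
    exact (left_eq_add.mp this)
  -- SG fixes the image of ιι
  have hSGι : ∀ t : A ⊗[k] A, SG (ιι t) = ιι t := by
    intro t
    induction t with
    | zero => simp
    | tmul a b =>
        rw [hιι, TensorProduct.map_tmul]
        simp only [AlgHom.toLinearMap_apply]
        rw [hSGtmul, hσι, hσι]
    | add u v hu hv => rw [map_add, map_add, hu, hv]
  -- D on the image of ιι
  have hDι : ∀ t : A ⊗[k] A,
      D (ιι t) = (TensorProduct.map d (LinearMap.id : W →ₗ[k] W)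
        + TensorProduct.map (LinearMap.id : W →ₗ[k] W) d) (ιι t) := by
    intro t
    induction t with
    | zero => simp
    | tmul a b =>
        rw [hιι, TensorProduct.map_tmul]
        simp only [AlgHom.toLinearMap_apply, hD, LinearMap.add_apply,
          TensorProduct.map_tmul, LinearMap.id_coe, id_eq]
        rw [hσι]
    | add u v hu hv => simp only [map_add]; rw [hu, hv]
  -- product rules for D
  have hD1 : ∀ (u : W ⊗[k] W) (y : W),
      D (u * ((1:W) ⊗ₜ[k] y)) = D u * ((1:W) ⊗ₜ[k] y) + SG u * ((1:W) ⊗ₜ[k] d y) := by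
    intro u y
    induction u with
    | zero => simp
    | tmul a b =>
        rw [Algebra.TensorProduct.tmul_mul_tmul, mul_one]
        simp only [hD, LinearMap.add_apply, TensorProduct.map_tmul, LinearMap.id_coe, id_eq,
          hSGtmul]
        rw [hdLeib b y]
        rw [tmul_add]
        rw [add_mul, Algebra.TensorProduct.tmul_mul_tmul, mul_one,
          Algebra.TensorProduct.tmul_mul_tmul, mul_one,
          Algebra.TensorProduct.tmul_mul_tmul, mul_one]
        abel
    | add u v hu hv =>
        rw [add_mul, map_add, hu, hv, map_add, map_add, add_mul, add_mul]
        abel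
  have hD2 : ∀ (z : W) (v : W ⊗[k] W),
      D ((z ⊗ₜ[k] (1:W)) * v) = (d z ⊗ₜ[k] (1:W)) * v + (σ z ⊗ₜ[k] (1:W)) * D v := by
    intro z v
    induction v with
    | zero => simp
    | tmul c e =>
        rw [Algebra.TensorProduct.tmul_mul_tmul, one_mul]
        simp only [hD, LinearMap.add_apply, TensorProduct.map_tmul, LinearMap.id_coe, id_eq]
        rw [hdLeib z c, hσmul z c, add_tmul]
        rw [mul_add, Algebra.TensorProduct.tmul_mul_tmul, one_mul,
          Algebra.TensorProduct.tmul_mul_tmul, one_mul,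
          Algebra.TensorProduct.tmul_mul_tmul, one_mul]
        abel
    | add u v hu hv =>
        rw [mul_add, map_add, hu, hv, map_add, mul_add, mul_add]
        abel
  -- membership in the adjoin
  have hmem : ∀ w : W, w ∈ Algebra.adjoin k
      (Set.range (fun a : A => ιA a) ∪ Set.range (fun a : A => d (ιA a))) := by
    intro w; rw [hgen]; exact Algebra.mem_top
  -- SG ∘ iΘ + iΘ ∘ σ = 0
  have hK' : ∀ w : W, SG (iΘ w) + iΘ (σ w) = 0 := by
    intro w
    induction hmem w using Algebra.adjoin_induction with
    | mem x hx =>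
        obtain (⟨a, rfl⟩ | ⟨a, rfl⟩) := hx
        · rw [hiΘ0, map_zero, hσι, hiΘ0, add_zero]
        · rw [hiΘd, hSGι, hσdι, map_neg, hiΘd, add_neg_cancel]
    | algebraMap r =>
        simp [Algebra.algebraMap_eq_smul_one, hiΘ1, hσ1]
    | add x y _ _ hx hy =>
        simp only [map_add]
        rw [add_add_add_comm, hx, hy, add_zero]
    | mul x y _ _ hx hy =>
        rw [hσmul, hiΘL x y, hiΘL (σ x) (σ y), map_add, map_mul, map_mul,
          hSGtmul, hSGtmul, hσ1, hσσ x]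
        have h0 : (SG (iΘ x) + iΘ (σ x)) * ((1:W) ⊗ₜ[k] σ y)
            + (x ⊗ₜ[k] (1:W)) * (SG (iΘ y) + iΘ (σ y)) = 0 := by
          rw [hx, hy, zero_mul, mul_zero, add_zero]
        refine Eq.trans ?_ h0
        rw [add_mul, mul_add]
        abel
  -- the unreduced Cartan identity
  have hcartan : ∀ w : W, D (iΘ w) + iΘ (d w) = LΘ w := by
    intro w
    induction hmem w using Algebra.adjoin_induction with
    | mem x hx =>
        obtain (⟨a, rfl⟩ | ⟨a, rfl⟩) := hx
        · rw [hiΘ0, map_zero, zero_add, hiΘd, hLΘ0]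
        · rw [hdd, map_zero, add_zero, hiΘd, hDι, hLΘd]
    | algebraMap r =>
        simp [Algebra.algebraMap_eq_smul_one, hiΘ1, hd1, hLΘ1]
    | add x y _ _ hx hy =>
        simp only [map_add]
        rw [add_add_add_comm, hx, hy]
    | mul x y _ _ hx hy =>
        have e1 : iΘ (d (x * y))
            = iΘ (d x) * ((1:W) ⊗ₜ[k] y) + (σ (d x) ⊗ₜ[k] (1:W)) * iΘ y
              + (iΘ (σ x) * ((1:W) ⊗ₜ[k] d y) + (σ (σ x) ⊗ₜ[k] (1:W)) * iΘ (d y)) := by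
          rw [hdLeib, map_add, hiΘL (d x) y, hiΘL (σ x) (d y)]
        have e2 : D (iΘ (x * y))
            = D (iΘ x) * ((1:W) ⊗ₜ[k] y) + SG (iΘ x) * ((1:W) ⊗ₜ[k] d y)
              + ((d (σ x) ⊗ₜ[k] (1:W)) * iΘ y + (σ (σ x) ⊗ₜ[k] (1:W)) * D (iΘ y)) := by
          rw [hiΘL x y, map_add, hD1, hD2]
        rw [e1, e2, hLΘL, ← hx, ← hy, hσσ x]
        have hrhs : (D (iΘ x) + iΘ (d x)) * ((1:W) ⊗ₜ[k] y)
              + (x ⊗ₜ[k] (1:W)) * (D (iΘ y) + iΘ (d y))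
              + ((SG (iΘ x) + iΘ (σ x)) * ((1:W) ⊗ₜ[k] d y)
                + ((σ (d x) + d (σ x)) ⊗ₜ[k] (1:W)) * iΘ y)
            = (D (iΘ x) + iΘ (d x)) * ((1:W) ⊗ₜ[k] y)
              + (x ⊗ₜ[k] (1:W)) * (D (iΘ y) + iΘ (d y)) := by
          rw [hK' x, hσd x, zero_mul, zero_tmul, zero_mul, add_zero, add_zero]
        refine Eq.trans ?_ hrhs
        rw [add_mul, add_mul, mul_add, add_tmul, add_mul]
        abel
  -- dia ∘ D = d ∘ dia
  have hdiaD : ∀ u : W ⊗[k] W, dia (D u) = d (dia u) := by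
    have htm : ∀ x y : W, dia (D (x ⊗ₜ[k] y)) = d (dia (x ⊗ₜ[k] y)) := by
      refine DirectSum.Decomposition.inductionOn 𝒜 ?_ ?_ ?_
      · intro y; simp
      · intro p m
        obtain ⟨x, hx⟩ := m
        refine DirectSum.Decomposition.inductionOn 𝒜 ?_ ?_ ?_
        · simp
        · intro q m'
          obtain ⟨y, hy⟩ := m'
          have hDxy : D (x ⊗ₜ[k] y) = d x ⊗ₜ[k] y + σ x ⊗ₜ[k] d y := by
            simp [hD]
          rw [hDxy, map_add, hdia (p+1) q (d x) (hdg p x hx) y hy,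
            hσ p x hx, ← smul_tmul', map_smul,
            hdia p (q+1) x hx (d y) (hdg q y hy),
            hdia p q x hx y hy, map_smul, hdLeib y x, hσ q y hy,
            smul_mul_assoc]
          rw [smul_smul, smul_add, smul_smul]
          have c1 : ((-1:k)) ^ ((p+1) * q) = (-1:k) ^ (p * q) * (-1:k) ^ q := by
            rw [← pow_add]; congr 1; ring
          have c2 : ((-1:k)) ^ p * (-1:k) ^ (p * (q+1)) = (-1:k) ^ (p * q) := by
            rw [← pow_add]
            have h : p + p * (q+1) = p * q + 2 * p := by ring
            rw [h, pow_add, pow_mul]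
            norm_num
          rw [c1, c2, mul_comm ((-1:k) ^ (p*q)) ((-1:k) ^ q), mul_smul]
          abel
        · intro y1 y2 h1 h2
          rw [tmul_add, map_add, map_add, h1, h2, map_add, map_add]
      · intro x1 x2 h1 h2 y
        rw [add_tmul, map_add, map_add, h1 y, h2 y, map_add, map_add]
    intro u
    induction u with
    | zero => simp
    | tmul x y => exact htm x y
    | add u v hu hv => rw [map_add, map_add, hu, hv, map_add, map_add]
  -- assemble
  have main : ∀ w : W, d (dia (iΘ w)) + dia (iΘ (d w)) = dia (LΘ w) := by
    intro w
    rw [← hcartan w, map_add, hdiaD]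
  constructor
  · apply LinearMap.ext
    intro w
    simpa using main w
  · apply LinearMap.ext
    intro w
    simp only [LinearMap.comp_apply]
    rw [← main w, ← main (d w), map_add]
    simp [hdd]
end

section
/- For any Θ ∈ Der_R(A, A⊗A) and any ordinary derivation ξ ∈ Der_R(A), the reduced contraction ι_Θ and the contraction i_ξ anticommute: (i_ξ∘ι_Θ + ι_Θ∘i_ξ)(ω) = 0 in Ω^{n-2}_R A for every ω ∈ DR^n_R A. -/
/-!
Extend `i_ξ` to `W ⊗ W` as `i_ξ ⊗ 1 + σ ⊗ i_ξ`, where `σ` is the parity automorphism. Because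
`i_ξ` lowers degree by one, the signed flip `dia` intertwines this extension with `i_ξ`, so the
anticommutator equals `dia` applied to `(i_ξ ⊗ 1 + σ ⊗ i_ξ) ∘ ι_Θ + ι_Θ ∘ i_ξ`. That map is the
graded commutator of two odd derivations, hence a derivation into `W ⊗ W` with its outer bimodule
structure; it kills the generators `a` and `da`, so it vanishes.
-/

open TensorProduct

section Grading

variable {k W : Type*} [CommRing k] [Ring W] [Algebra k W]
  (𝒜 : ℕ → Submodule k W) [GradedAlgebra 𝒜]

def lowerGrade : ℕ → Submodule k W
  | 0 => ⊥
  | n + 1 => 𝒜 n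

def LowersDegree (D : W →ₗ[k] W) : Prop :=
  ∀ n, ∀ w ∈ 𝒜 n, D w ∈ lowerGrade 𝒜 n

variable {𝒜} in
theorem lowerGrade_mul_mem {i j : ℕ} {x y : W} (hx : x ∈ lowerGrade 𝒜 i) (hy : y ∈ 𝒜 j) :
    x * y ∈ lowerGrade 𝒜 (i + j) := by
  cases i with
  | zero => simp_all [lowerGrade]
  | succ i =>
    rw [Nat.add_right_comm]
    exact SetLike.mul_mem_graded (A := 𝒜) hx hy

variable {𝒜} in
theorem mul_lowerGrade_mem {i j : ℕ} {x y : W} (hx : x ∈ 𝒜 i) (hy : y ∈ lowerGrade 𝒜 j) :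
    x * y ∈ lowerGrade 𝒜 (i + j) := by
  cases j with
  | zero => simp_all [lowerGrade]
  | succ j =>
    rw [← add_assoc]
    exact SetLike.mul_mem_graded (A := 𝒜) hx hy

theorem grade_le_of_adjoin_eq_top {s : Set W} (hgen : Algebra.adjoin k s = ⊤)
    (P : ℕ → Submodule k W) (hs : ∀ x ∈ s, ∃ n, x ∈ 𝒜 n ∧ x ∈ P n) (hone : (1 : W) ∈ P 0)
    (hmul : ∀ i j, ∀ x ∈ 𝒜 i, ∀ y ∈ 𝒜 j, x ∈ P i → y ∈ P j → x * y ∈ P (i + j)) (n : ℕ) :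
    𝒜 n ≤ P n := by
  have of_mem {x : W} {m : ℕ} (hxA : x ∈ 𝒜 m) (hxP : x ∈ P m) (n : ℕ) :
      (DirectSum.decompose 𝒜 x n : W) ∈ P n := by
    obtain rfl | hmn := eq_or_ne m n
    · rwa [DirectSum.decompose_of_mem_same 𝒜 hxA]
    · rw [DirectSum.decompose_of_mem_ne 𝒜 hxA hmn]
      exact zero_mem _
  have components (w : W) : ∀ n, (DirectSum.decompose 𝒜 w n : W) ∈ P n := by
    induction (hgen ▸ Algebra.mem_top : w ∈ Algebra.adjoin k s) using Algebra.adjoin_induction with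
    | mem x hx =>
      obtain ⟨m, hxA, hxP⟩ := hs x hx
      exact of_mem hxA hxP
    | algebraMap r =>
      refine of_mem (SetLike.algebraMap_mem_graded 𝒜 r) ?_
      rw [Algebra.algebraMap_eq_smul_one]
      exact Submodule.smul_mem _ r hone
    | add x y _ _ hx hy =>
      intro n
      rw [DirectSum.decompose_add, DirectSum.add_apply, Submodule.coe_add]
      exact add_mem (hx n) (hy n)
    | mul x y _ _ hx hy =>
      intro n
      rw [DirectSum.decompose_mul, DirectSum.coe_mul_apply_eq_sum_antidiagonal]
      refine sum_mem fun ij hij => ?_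
      rw [← Finset.HasAntidiagonal.mem_antidiagonal.mp hij]
      exact hmul _ _ _ (Subtype.prop _) _ (Subtype.prop _) (hx _) (hy _)
  intro x hx
  simpa [DirectSum.decompose_of_mem_same 𝒜 hx] using components x n

theorem tensorProduct_ext_of_mem_grade {M : Type*} [AddCommMonoid M] [Module k M]
    {f g : W ⊗[k] W →ₗ[k] M}
    (h : ∀ p q, ∀ x ∈ 𝒜 p, ∀ y ∈ 𝒜 q, f (x ⊗ₜ y) = g (x ⊗ₜ y)) : f = g := by
  refine TensorProduct.ext' fun x y => ?_
  induction x using DirectSum.Decomposition.inductionOn 𝒜 with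
  | zero => simp
  | homogeneous x =>
    induction y using DirectSum.Decomposition.inductionOn 𝒜 with
    | zero => simp
    | homogeneous y => exact h _ _ _ x.2 _ y.2
    | add y y' hy hy' => simp only [tmul_add, map_add, hy, hy']
  | add x x' hx hx' => simp only [add_tmul, map_add, hx, hx']

variable {σ : W →ₗ[k] W} (hσ : ∀ n, ∀ w ∈ 𝒜 n, σ w = (-1 : k) ^ n • w)
include hσ

theorem parity_one : σ 1 = 1 := by
  rw [hσ 0 1 SetLike.GradedOne.one_mem, pow_zero, one_smul]

theorem parity_parity (w : W) : σ (σ w) = w := by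
  induction w using DirectSum.Decomposition.inductionOn 𝒜 with
  | zero => simp
  | @homogeneous n w =>
    rw [hσ n _ w.2, map_smul, hσ n _ w.2, smul_smul, ← pow_add, ← two_mul, pow_mul,
      neg_one_sq, one_pow, one_smul]
  | add x y hx hy => rw [map_add, map_add, hx, hy]

theorem parity_mul (x y : W) : σ (x * y) = σ x * σ y := by
  induction x using DirectSum.Decomposition.inductionOn 𝒜 with
  | zero => simp
  | @homogeneous i x =>
    induction y using DirectSum.Decomposition.inductionOn 𝒜 with
    | zero => simp
    | @homogeneous j y =>
      rw [hσ _ _ (SetLike.mul_mem_graded x.2 y.2), hσ i _ x.2, hσ j _ y.2,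
        smul_mul_smul_comm, pow_add]
    | add y y' hy hy' => rw [mul_add, map_add, hy, hy', map_add, mul_add]
  | add x x' hx hx' => rw [add_mul, map_add, hx, hx', map_add, add_mul]

theorem parity_apply_of_lowersDegree {D : W →ₗ[k] W} (hD : LowersDegree 𝒜 D) (w : W) :
    σ (D w) = -D (σ w) := by
  induction w using DirectSum.Decomposition.inductionOn 𝒜 with
  | zero => simp
  | @homogeneous n w =>
    have hDw := hD n w w.2
    cases n with
    | zero =>
      rw [hσ 0 _ w.2, pow_zero, one_smul]
      simp_all [lowerGrade]
    | succ n =>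
      rw [hσ n _ hDw, hσ (n + 1) _ w.2, map_smul, pow_succ, mul_neg_one, neg_smul, neg_neg]
  | add x y hx hy => simp only [map_add, hx, hy, neg_add]

theorem lowersDegree_of_adjoin_eq_top {s : Set W} (hgen : Algebra.adjoin k s = ⊤)
    {D : W →ₗ[k] W} (hD : ∀ x y, D (x * y) = D x * y + σ x * D y)
    (hs : ∀ x ∈ s, ∃ n, x ∈ 𝒜 n ∧ D x ∈ lowerGrade 𝒜 n) : LowersDegree 𝒜 D := by
  refine grade_le_of_adjoin_eq_top 𝒜 hgen (fun n => (lowerGrade 𝒜 n).comap D) hs ?_ ?_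
  · have h := hD 1 1
    rw [one_mul, parity_one 𝒜 hσ, one_mul, mul_one, left_eq_add] at h
    simp [h]
  · intro i j x hx y hy hDx hDy
    rw [Submodule.mem_comap, hD]
    have hσx : σ x ∈ 𝒜 i := hσ i x hx ▸ Submodule.smul_mem _ _ hx
    exact add_mem (lowerGrade_mul_mem hDx hy) (mul_lowerGrade_mem hσx hDy)

end Grading

theorem LinearMap.eq_zero_of_adjoin_eq_top {k W M : Type*} [CommRing k] [Ring W] [Algebra k W]
    [AddCommGroup M] [Module k M] {s : Set W} (hgen : Algebra.adjoin k s = ⊤)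
    (F : W →ₗ[k] M) (hs : ∀ x ∈ s, F x = 0) (h1 : F 1 = 0)
    (hmul : ∀ x y, F x = 0 → F y = 0 → F (x * y) = 0) : F = 0 := by
  refine LinearMap.ext fun w => ?_
  rw [LinearMap.zero_apply]
  induction (hgen ▸ Algebra.mem_top : w ∈ Algebra.adjoin k s) using Algebra.adjoin_induction with
  | mem x hx => exact hs x hx
  | algebraMap r => rw [Algebra.algebraMap_eq_smul_one, map_smul, h1, smul_zero]
  | add x y _ _ hx hy => rw [map_add, hx, hy, add_zero]
  | mul x y _ _ hx hy => exact hmul x y hx hy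

section TensorExt

variable {k W : Type*} [CommRing k] [Ring W] [Algebra k W]

def tensorExt (σ D : W →ₗ[k] W) : W ⊗[k] W →ₗ[k] W ⊗[k] W :=
  D.rTensor W + TensorProduct.map σ D

variable {σ D : W →ₗ[k] W}

@[simp]
theorem tensorExt_tmul (x y : W) : tensorExt σ D (x ⊗ₜ y) = D x ⊗ₜ y + σ x ⊗ₜ D y := rfl

theorem tensorExt_comp_map_eq_zero {A : Type*} [AddCommMonoid A] [Module k A] {ι : A →ₗ[k] W}
    (hDι : D ∘ₗ ι = 0) : tensorExt σ D ∘ₗ TensorProduct.map ι ι = 0 := by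
  refine TensorProduct.ext' fun a b => ?_
  have hDa : D (ι a) = 0 := LinearMap.congr_fun hDι a
  have hDb : D (ι b) = 0 := LinearMap.congr_fun hDι b
  simp [hDa, hDb]

theorem TensorProduct.map_self_apply_mul (hσ1 : σ 1 = 1) (hσmul : ∀ x y, σ (x * y) = σ x * σ y)
    (u v : W ⊗[k] W) : TensorProduct.map σ σ (u * v) =
      TensorProduct.map σ σ u * TensorProduct.map σ σ v :=
  map_mul (Algebra.TensorProduct.map (AlgHom.ofLinearMap σ hσ1 hσmul)
    (AlgHom.ofLinearMap σ hσ1 hσmul)) u v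

variable (hD : ∀ x y, D (x * y) = D x * y + σ x * D y)
include hD

theorem tensorExt_mul_tmul_one (u : W ⊗[k] W) (y : W) :
    tensorExt σ D (u * (1 ⊗ₜ y)) =
      tensorExt σ D u * (1 ⊗ₜ y) + TensorProduct.map σ σ u * (1 ⊗ₜ D y) := by
  induction u using TensorProduct.induction_on with
  | zero => simp
  | tmul a b =>
    simp only [Algebra.TensorProduct.tmul_mul_tmul, tensorExt_tmul, hD, mul_one, add_mul,
      tmul_add, map_tmul]
    abel
  | add u u' hu hu' => simp only [add_mul, map_add, hu, hu']; abel

theorem tensorExt_tmul_one_mul (hσmul : ∀ x y, σ (x * y) = σ x * σ y) (x : W)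
    (v : W ⊗[k] W) :
    tensorExt σ D ((x ⊗ₜ 1) * v) = (D x ⊗ₜ 1) * v + (σ x ⊗ₜ 1) * tensorExt σ D v := by
  induction v using TensorProduct.induction_on with
  | zero => simp
  | tmul a b =>
    simp only [Algebra.TensorProduct.tmul_mul_tmul, tensorExt_tmul, hD, hσmul, one_mul,
      mul_add, add_tmul]
    abel
  | add v v' hv hv' => simp only [mul_add, map_add, hv, hv']; abel

theorem tensorExt_comp_add_comp_mul (hσmul : ∀ x y, σ (x * y) = σ x * σ y)
    (hσσ : ∀ w, σ (σ w) = w) (hσD : ∀ w, σ (D w) = -D (σ w)) {δ : W →ₗ[k] W ⊗[k] W}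
    (hδ : ∀ x y, δ (x * y) = δ x * (1 ⊗ₜ y) + (σ x ⊗ₜ 1) * δ y)
    (hσδ : ∀ w, TensorProduct.map σ σ (δ w) = -δ (σ w)) (x y : W) :
    (tensorExt σ D ∘ₗ δ + δ ∘ₗ D) (x * y) =
      (tensorExt σ D ∘ₗ δ + δ ∘ₗ D) x * (1 ⊗ₜ y) +
        (x ⊗ₜ 1) * (tensorExt σ D ∘ₗ δ + δ ∘ₗ D) y := by
  simp only [LinearMap.add_apply, LinearMap.comp_apply, hδ, hD, map_add,
    tensorExt_mul_tmul_one hD, tensorExt_tmul_one_mul hD hσmul, hσσ, hσδ, hσD, neg_tmul]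
  noncomm_ring

end TensorExt

section SignedFlip

variable {k W : Type*} [CommRing k] [Ring W] [Algebra k W]
  (𝒜 : ℕ → Submodule k W) {dia : W ⊗[k] W →ₗ[k] W}
  (hdia : ∀ (p q : ℕ), ∀ x ∈ 𝒜 p, ∀ y ∈ 𝒜 q, dia (x ⊗ₜ[k] y) = ((-1 : k) ^ (p * q)) • (y * x))
include hdia

theorem dia_tmul_of_mem_lowerGrade {p q : ℕ} {x z : W} (hx : x ∈ 𝒜 p)
    (hz : z ∈ lowerGrade 𝒜 q) : (-1 : k) ^ p • dia (x ⊗ₜ z) = (-1 : k) ^ (p * q) • (z * x) := by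
  cases q with
  | zero => simp_all [lowerGrade]
  | succ q => rw [hdia p q x hx z hz, smul_smul, ← pow_add, mul_add_one, add_comm]

theorem dia_of_mem_lowerGrade_tmul {p q : ℕ} {z y : W} (hz : z ∈ lowerGrade 𝒜 p)
    (hy : y ∈ 𝒜 q) : dia (z ⊗ₜ y) = (-1 : k) ^ (p * q + q) • (y * z) := by
  cases p with
  | zero => simp_all [lowerGrade]
  | succ p =>
    rw [hdia p q z hz y hy, show (p + 1) * q + q = p * q + 2 * q by ring, pow_add,
      pow_mul (-1 : k) 2, neg_one_sq, one_pow, mul_one]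

variable [GradedAlgebra 𝒜] {σ : W →ₗ[k] W} (hσ : ∀ n, ∀ w ∈ 𝒜 n, σ w = (-1 : k) ^ n • w)
include hσ

theorem comp_dia_eq_dia_comp_tensorExt {D : W →ₗ[k] W}
    (hD : ∀ x y, D (x * y) = D x * y + σ x * D y) (hDdeg : LowersDegree 𝒜 D) :
    D ∘ₗ dia = dia ∘ₗ tensorExt σ D := by
  refine tensorProduct_ext_of_mem_grade 𝒜 fun p q x hx y hy => ?_
  rw [LinearMap.comp_apply, LinearMap.comp_apply, tensorExt_tmul, map_add, hdia p q x hx y hy,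
    map_smul, hD, hσ p x hx, hσ q y hy, ← smul_tmul', map_smul,
    dia_tmul_of_mem_lowerGrade 𝒜 hdia hx (hDdeg q y hy),
    dia_of_mem_lowerGrade_tmul 𝒜 hdia (hDdeg p x hx) hy, pow_add, smul_mul_assoc]
  module

end SignedFlip

section Contraction

variable {k W A : Type*} [CommRing k] [Ring W] [Algebra k W] [Ring A] [Algebra k A]
  (𝒜 : ℕ → Submodule k W) [GradedAlgebra 𝒜]
  {σ : W →ₗ[k] W} (hσ : ∀ n, ∀ w ∈ 𝒜 n, σ w = (-1 : k) ^ n • w)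
  {ιA : A →ₐ[k] W} {d : W →ₗ[k] W} (hι0 : ∀ a, ιA a ∈ 𝒜 0) (hdι : ∀ a, d (ιA a) ∈ 𝒜 1)
  (hgen : Algebra.adjoin k
    (Set.range (fun a : A => ιA a) ∪ Set.range (fun a : A => d (ιA a))) = ⊤)
  {ξ : A →ₗ[k] A} {iξ : W →ₗ[k] W} (hiξ0 : ∀ a, iξ (ιA a) = 0)
  (hiξd : ∀ a, iξ (d (ιA a)) = ιA (ξ a)) (hiξL : ∀ x y, iξ (x * y) = iξ x * y + σ x * iξ y)
  {Θ : A →ₗ[k] A ⊗[k] A} {iΘ : W →ₗ[k] W ⊗[k] W} (hiΘ0 : ∀ a, iΘ (ιA a) = 0)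
  (hiΘd : ∀ a, iΘ (d (ιA a)) = TensorProduct.map ιA.toLinearMap ιA.toLinearMap (Θ a))
  (hiΘL : ∀ x y, iΘ (x * y) = iΘ x * ((1 : W) ⊗ₜ[k] y) + (σ x ⊗ₜ[k] (1 : W)) * iΘ y)
include hσ hι0 hdι hgen

include hiξ0 hiξd hiξL in
theorem contraction_lowersDegree : LowersDegree 𝒜 iξ := by
  refine lowersDegree_of_adjoin_eq_top 𝒜 hσ hgen hiξL ?_
  rintro _ (⟨a, rfl⟩ | ⟨a, rfl⟩)
  · exact ⟨0, hι0 a, by simp [lowerGrade, hiξ0]⟩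
  · exact ⟨1, hdι a, by rw [hiξd]; exact hι0 _⟩

include hiΘ0 hiΘd hiΘL in
theorem map_parity_contraction (w : W) :
    TensorProduct.map σ σ (iΘ w) = -iΘ (σ w) := by
  have hσι (a : A) : σ (ιA a) = ιA a := by rw [hσ 0 _ (hι0 a), pow_zero, one_smul]
  have hσd (a : A) : σ (d (ιA a)) = -d (ιA a) := by rw [hσ 1 _ (hdι a), pow_one, neg_one_smul]
  have hσ1 := parity_one 𝒜 hσ
  have hiΘ1 : iΘ 1 = 0 := by simpa using hiΘ0 1
  suffices TensorProduct.map σ σ ∘ₗ iΘ + iΘ ∘ₗ σ = 0 from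
    eq_neg_of_add_eq_zero_left (LinearMap.congr_fun this w)
  refine LinearMap.eq_zero_of_adjoin_eq_top hgen _ ?_ (by simp [hσ1, hiΘ1]) ?_
  · rintro _ (⟨a, rfl⟩ | ⟨a, rfl⟩)
    · simp [hiΘ0, hσι]
    · have hσιA : σ ∘ₗ ιA.toLinearMap = ιA.toLinearMap := LinearMap.ext hσι
      rw [LinearMap.add_apply, LinearMap.comp_apply, LinearMap.comp_apply, hσd, map_neg, hiΘd,
        TensorProduct.map_map, hσιA, add_neg_cancel]
  · intro x y hx hy
    simp only [LinearMap.add_apply, LinearMap.comp_apply] at hx hy ⊢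
    have hmap := TensorProduct.map_self_apply_mul hσ1 (parity_mul 𝒜 hσ)
    rw [hiΘL, parity_mul 𝒜 hσ, hiΘL, map_add, hmap, hmap, map_tmul, map_tmul,
      parity_parity 𝒜 hσ, hσ1, eq_neg_of_add_eq_zero_left hx, eq_neg_of_add_eq_zero_left hy]
    noncomm_ring

include hiξ0 hiξd hiξL hiΘ0 hiΘd hiΘL in
theorem tensorExt_comp_contraction_add_eq_zero : tensorExt σ iξ ∘ₗ iΘ + iΘ ∘ₗ iξ = 0 := by
  have hiΘ1 : iΘ 1 = 0 := by simpa using hiΘ0 1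
  have hiξ1 : iξ 1 = 0 := by simpa using hiξ0 1
  refine LinearMap.eq_zero_of_adjoin_eq_top hgen _ ?_ (by simp [hiΘ1, hiξ1]) ?_
  · rintro _ (⟨a, rfl⟩ | ⟨a, rfl⟩)
    · simp [hiΘ0, hiξ0]
    · have hiξιA : iξ ∘ₗ ιA.toLinearMap = 0 := LinearMap.ext hiξ0
      rw [LinearMap.add_apply, LinearMap.comp_apply, LinearMap.comp_apply, hiΘd, hiξd, hiΘ0,
        add_zero]
      exact LinearMap.congr_fun (tensorExt_comp_map_eq_zero hiξιA) _
  · intro x y hx hy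
    have hσiξ := parity_apply_of_lowersDegree 𝒜 hσ
      (contraction_lowersDegree 𝒜 hσ hι0 hdι hgen hiξ0 hiξd hiξL)
    rw [tensorExt_comp_add_comp_mul hiξL (parity_mul 𝒜 hσ) (parity_parity 𝒜 hσ) hσiξ hiΘL
      (map_parity_contraction 𝒜 hσ hι0 hdι hgen hiΘ0 hiΘd hiΘL), hx, hy, zero_mul, mul_zero,
      add_zero]

end Contraction

theorem stmt13_general (k A W : Type*) [Field k]
    [Ring A] [Algebra k A]
    [Ring W] [Algebra k W]
    (𝒜 : ℕ → Submodule k W) [GradedAlgebra 𝒜]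
    (ιA : A →ₐ[k] W) (d σ : W →ₗ[k] W)
    (hι0 : ∀ a : A, ιA a ∈ 𝒜 0)
    (hdg : ∀ (n : ℕ), ∀ w ∈ 𝒜 n, d w ∈ 𝒜 (n + 1))
    (hσ : ∀ (n : ℕ), ∀ w ∈ 𝒜 n, σ w = ((-1 : k) ^ n) • w)
    (hgen : Algebra.adjoin k
        (Set.range (fun a : A => ιA a) ∪ Set.range (fun a : A => d (ιA a))) = ⊤)
    (dia : W ⊗[k] W →ₗ[k] W)
    (hdia : ∀ (p q : ℕ), ∀ x ∈ 𝒜 p, ∀ y ∈ 𝒜 q,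
        dia (x ⊗ₜ[k] y) = ((-1 : k) ^ (p * q)) • (y * x))
    -- the double derivation Θ and its contraction
    (Θ : A →ₗ[k] A ⊗[k] A)
    (iΘ : W →ₗ[k] W ⊗[k] W)
    (hiΘ0 : ∀ a : A, iΘ (ιA a) = 0)
    (hiΘd : ∀ a : A, iΘ (d (ιA a)) = TensorProduct.map ιA.toLinearMap ιA.toLinearMap (Θ a))
    (hiΘL : ∀ x y : W,
        iΘ (x * y) = iΘ x * ((1 : W) ⊗ₜ[k] y) + (σ x ⊗ₜ[k] (1 : W)) * iΘ y)
    -- the ordinary derivation ξ and its contraction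
    (ξ : A →ₗ[k] A)
    (iξ : W →ₗ[k] W)
    (hiξ0 : ∀ a : A, iξ (ιA a) = 0)
    (hiξd : ∀ a : A, iξ (d (ιA a)) = ιA (ξ a))
    (hiξL : ∀ x y : W, iξ (x * y) = iξ x * y + σ x * iξ y) :
    iξ ∘ₗ (dia ∘ₗ iΘ) + (dia ∘ₗ iΘ) ∘ₗ iξ = 0 := by
  have hdι : ∀ a, d (ιA a) ∈ 𝒜 1 := fun a => hdg 0 _ (hι0 a)
  have hξdeg := contraction_lowersDegree 𝒜 hσ hι0 hdι hgen hiξ0 hiξd hiξL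
  calc iξ ∘ₗ (dia ∘ₗ iΘ) + (dia ∘ₗ iΘ) ∘ₗ iξ
      = dia ∘ₗ (tensorExt σ iξ ∘ₗ iΘ + iΘ ∘ₗ iξ) := by
        rw [← LinearMap.comp_assoc, comp_dia_eq_dia_comp_tensorExt 𝒜 hdia hσ hiξL hξdeg,
          LinearMap.comp_add]
        rfl
    _ = 0 := by
      rw [tensorExt_comp_contraction_add_eq_zero 𝒜 hσ hι0 hdι hgen hiξ0 hiξd hiξL hiΘ0 hiΘd
        hiΘL, LinearMap.comp_zero]

/-- For any double derivation `Θ ∈ Der_R(A, A ⊗ A)` and any ordinary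
derivation `ξ ∈ Der_R(A)`, the reduced contraction `ι_Θ` and the contraction `i_ξ`
anticommute: `(i_ξ ∘ ι_Θ + ι_Θ ∘ i_ξ)(ω) = 0` in `Ω^{n-2}_R A` for every
`ω ∈ DR^n_R A` (both operations descend to the Karoubi–de Rham complex, so this
is stated on all of `Ω•_R A`). -/
theorem stmt13 (k R A W : Type*) [Field k] [CharZero k]
    [Ring R] [Algebra k R] [FiniteDimensional k R] [IsSemisimpleRing R]
    [Ring A] [Algebra k A] (f : R →ₐ[k] A)
    [Ring W] [Algebra k W]
    (𝒜 : ℕ → Submodule k W) [GradedAlgebra 𝒜]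
    (ιA : A →ₐ[k] W) (d σ : W →ₗ[k] W)
    (hι0 : ∀ a : A, ιA a ∈ 𝒜 0)
    (hdg : ∀ (n : ℕ), ∀ w ∈ 𝒜 n, d w ∈ 𝒜 (n + 1))
    (hσ : ∀ (n : ℕ), ∀ w ∈ 𝒜 n, σ w = ((-1 : k) ^ n) • w)
    (hdd : ∀ w : W, d (d w) = 0)
    (hdLeib : ∀ x y : W, d (x * y) = d x * y + σ x * d y)
    (hdR : ∀ r : R, d (ιA (f r)) = 0)
    (hgen : Algebra.adjoin k
        (Set.range (fun a : A => ιA a) ∪ Set.range (fun a : A => d (ιA a))) = ⊤)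
    (dia : W ⊗[k] W →ₗ[k] W)
    (hdia : ∀ (p q : ℕ), ∀ x ∈ 𝒜 p, ∀ y ∈ 𝒜 q,
        dia (x ⊗ₜ[k] y) = ((-1 : k) ^ (p * q)) • (y * x))
    -- the double derivation Θ and its contraction
    (Θ : A →ₗ[k] A ⊗[k] A)
    (hΘder : ∀ x y : A, Θ (x * y) = (x ⊗ₜ[k] (1 : A)) * Θ y + Θ x * ((1 : A) ⊗ₜ[k] y))
    (hΘR : ∀ r : R, Θ (f r) = 0)
    (iΘ : W →ₗ[k] W ⊗[k] W)
    (hiΘ0 : ∀ a : A, iΘ (ιA a) = 0)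
    (hiΘd : ∀ a : A, iΘ (d (ιA a)) = TensorProduct.map ιA.toLinearMap ιA.toLinearMap (Θ a))
    (hiΘL : ∀ x y : W,
        iΘ (x * y) = iΘ x * ((1 : W) ⊗ₜ[k] y) + (σ x ⊗ₜ[k] (1 : W)) * iΘ y)
    -- the ordinary derivation ξ and its contraction
    (ξ : A →ₗ[k] A)
    (hξder : ∀ x y : A, ξ (x * y) = x * ξ y + ξ x * y)
    (hξR : ∀ r : R, ξ (f r) = 0)
    (iξ : W →ₗ[k] W)
    (hiξ0 : ∀ a : A, iξ (ιA a) = 0)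
    (hiξd : ∀ a : A, iξ (d (ιA a)) = ιA (ξ a))
    (hiξL : ∀ x y : W, iξ (x * y) = iξ x * y + σ x * iξ y) :
    iξ ∘ₗ (dia ∘ₗ iΘ) + (dia ∘ₗ iΘ) ∘ₗ iξ = 0 :=
  stmt13_general k A W 𝒜 ιA d σ hι0 hdg hσ hgen dia hdia Θ iΘ hiΘ0 hiΘd hiΘL ξ iξ hiξ0 hiξd hiξL
end

section
/- Inner double derivations: for any p = p' ⊗ p'' ∈ (A⊗A)^R, the inner derivation ad p: a ↦ ap − pa (using the outer bimodule structure on A⊗A) equals p''·Δ·p' with respect to the A-bimodule structure on Der_R(A,A⊗A); consequently the inner derivations form the A⊗A^op-submodule of Der_R(A,A⊗A) generated by Δ, and m_*(p''·Δ·p') = ad(p'p'') as an ordinary derivation of A. -/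
open TensorProduct

/-- The inner action of `A ⊗ A` on `A ⊗ A`: for `p = p' ⊗ p''`,
`p · z = (1 ⊗ p'') * z * (p' ⊗ 1)`, i.e. `p' ⊗ p''` acts on `x ⊗ y` by
`(x p') ⊗ (p'' y)` (the inner bimodule structure). -/
noncomputable def innerAct (k A : Type*) [CommSemiring k] [Semiring A] [Algebra k A] :
    A ⊗[k] A →ₗ[k] A ⊗[k] A →ₗ[k] A ⊗[k] A :=
  TensorProduct.lift <| LinearMap.mk₂ k
    (fun p' p'' =>
      (LinearMap.mulLeft k ((1 : A) ⊗ₜ[k] p'')) ∘ₗ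
        (LinearMap.mulRight k (p' ⊗ₜ[k] (1 : A))))
    (by intro u₁ u₂ v; ext z; simp [TensorProduct.add_tmul, mul_add, add_mul])
    (by intro c u v; ext z
        simp [TensorProduct.smul_tmul', mul_smul_comm, smul_mul_assoc])
    (by intro u v₁ v₂; ext z; simp [TensorProduct.tmul_add, mul_add, add_mul])
    (by intro c u v; ext z
        simp [TensorProduct.tmul_smul, mul_smul_comm, smul_mul_assoc])

section Helpers
variable {k A : Type*} [CommSemiring k] [Semiring A] [Algebra k A]

lemma innerAct_tmul (p' p'' : A) (z : A ⊗[k] A) :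
    innerAct k A (p' ⊗ₜ[k] p'') z = ((1 : A) ⊗ₜ[k] p'') * (z * (p' ⊗ₜ[k] (1 : A))) := by
  simp [innerAct]

lemma mixed_comm (a b : A) (z : A ⊗[k] A) :
    (a ⊗ₜ[k] (1 : A)) * (((1 : A) ⊗ₜ[k] b) * z) = ((1 : A) ⊗ₜ[k] b) * ((a ⊗ₜ[k] (1 : A)) * z) := by
  rw [← mul_assoc, ← mul_assoc, Algebra.TensorProduct.tmul_mul_tmul,
    Algebra.TensorProduct.tmul_mul_tmul, one_mul, mul_one, one_mul, mul_one]

lemma mixed_comm' (a b : A) (z : A ⊗[k] A) :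
    z * ((a ⊗ₜ[k] (1 : A)) * ((1 : A) ⊗ₜ[k] b)) = z * (((1 : A) ⊗ₜ[k] b) * (a ⊗ₜ[k] (1 : A))) := by
  rw [Algebra.TensorProduct.tmul_mul_tmul, Algebra.TensorProduct.tmul_mul_tmul,
    one_mul, mul_one, one_mul, mul_one]

lemma innerAct_left_comm (m : A ⊗[k] A) (x : A) (z : A ⊗[k] A) :
    innerAct k A m ((x ⊗ₜ[k] (1 : A)) * z) = (x ⊗ₜ[k] (1 : A)) * innerAct k A m z := by
  induction m using TensorProduct.induction_on with
  | zero => simp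
  | tmul p' p'' =>
      rw [innerAct_tmul, innerAct_tmul, mul_assoc, mixed_comm]
  | add u v hu hv => simp [map_add, LinearMap.add_apply, hu, hv, add_mul, mul_add]

lemma innerAct_right_comm (m : A ⊗[k] A) (x : A) (z : A ⊗[k] A) :
    innerAct k A m (z * ((1 : A) ⊗ₜ[k] x)) = innerAct k A m z * ((1 : A) ⊗ₜ[k] x) := by
  induction m using TensorProduct.induction_on with
  | zero => simp
  | tmul p' p'' =>
      rw [innerAct_tmul, innerAct_tmul, mul_assoc, mul_assoc, mul_assoc, mixed_comm']
  | add u v hu hv => simp [map_add, LinearMap.add_apply, hu, hv, mul_add, add_mul]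

lemma innerAct_apply_tmul (m : A ⊗[k] A) (a b : A) :
    innerAct k A m (a ⊗ₜ[k] b) = (a ⊗ₜ[k] (1 : A)) * m * ((1 : A) ⊗ₜ[k] b) := by
  induction m using TensorProduct.induction_on with
  | zero => simp
  | tmul p' p'' => simp [innerAct_tmul, Algebra.TensorProduct.tmul_mul_tmul]
  | add u v hu hv => simp [map_add, LinearMap.add_apply, hu, hv, mul_add, add_mul]

lemma mul'_left (x : A) (m : A ⊗[k] A) :
    LinearMap.mul' k A ((x ⊗ₜ[k] (1 : A)) * m) = x * LinearMap.mul' k A m := by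
  induction m using TensorProduct.induction_on with
  | zero => simp
  | tmul a b => simp [Algebra.TensorProduct.tmul_mul_tmul, mul_assoc]
  | add u v hu hv => simp [mul_add, hu, hv]

lemma mul'_right (x : A) (m : A ⊗[k] A) :
    LinearMap.mul' k A (m * ((1 : A) ⊗ₜ[k] x)) = LinearMap.mul' k A m * x := by
  induction m using TensorProduct.induction_on with
  | zero => simp
  | tmul a b => simp [Algebra.TensorProduct.tmul_mul_tmul, mul_assoc]
  | add u v hu hv => simp [add_mul, hu, hv]

end Helpers

/-- **Inner double derivations.** For `p = p' ⊗ p'' ∈ (A ⊗ A)^R`, the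
inner double derivation `ad p : a ↦ a·p - p·a` (outer bimodule structure) equals
`p'' · Δ · p'` (inner bimodule action on double derivations); consequently the inner
double derivations form exactly the `Aᵉ`-submodule of `Der_R(A, A ⊗ A)` generated by
`Δ`, and `m_*(p''·Δ·p') = ad(p'p'')` as an ordinary derivation of `A`. -/
theorem stmt16 (k R A : Type*) [Field k] [CharZero k]
    [Ring R] [Algebra k R] [FiniteDimensional k R] [IsSemisimpleRing R]
    [Ring A] [Algebra k A] (f : R →ₐ[k] A)
    -- the symmetric separability element of R
    (e : R ⊗[k] R)
    (he1 : ∀ r : R, (r ⊗ₜ[k] (1 : R)) * e = e * ((1 : R) ⊗ₜ[k] r))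
    (he2 : LinearMap.mul' k R e = 1)
    (he3 : TensorProduct.comm k R R e = e)
    -- the distinguished double derivation Δ = ad e
    (Δ : A →ₗ[k] A ⊗[k] A)
    (hΔval : ∀ a : A,
        Δ a = (a ⊗ₜ[k] (1 : A)) * TensorProduct.map f.toLinearMap f.toLinearMap e
            - TensorProduct.map f.toLinearMap f.toLinearMap e * ((1 : A) ⊗ₜ[k] a))
    -- an element p of the centralizer (A ⊗ A)^R (outer bimodule structure)
    (p : A ⊗[k] A)
    (hp : ∀ r : R, (f r ⊗ₜ[k] (1 : A)) * p = p * ((1 : A) ⊗ₜ[k] f r)) :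
    -- (i)  ad p = p'' · Δ · p'
    (∀ x : A,
      (x ⊗ₜ[k] (1 : A)) * p - p * ((1 : A) ⊗ₜ[k] x) = innerAct k A p (Δ x))
    -- (ii)  m_*(p''·Δ·p') = ad (p'p'')
    ∧ (∀ x : A,
        LinearMap.mul' k A (innerAct k A p (Δ x))
          = x * LinearMap.mul' k A p - LinearMap.mul' k A p * x)
    -- (iii)  inner double derivations = the Aᵉ-submodule generated by Δ
    ∧ ({D : A → A ⊗[k] A | ∃ m : A ⊗[k] A,
          (∀ r : R, (f r ⊗ₜ[k] (1 : A)) * m = m * ((1 : A) ⊗ₜ[k] f r)) ∧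
          D = fun x => (x ⊗ₜ[k] (1 : A)) * m - m * ((1 : A) ⊗ₜ[k] x)}
        = {D : A → A ⊗[k] A | ∃ q : A ⊗[k] A, D = fun x => innerAct k A q (Δ x)}) := by
  set E : A ⊗[k] A := TensorProduct.map f.toLinearMap f.toLinearMap e with hE_def
  -- E commutes like e does
  have hFE : ∀ u : R ⊗[k] R, TensorProduct.map f.toLinearMap f.toLinearMap u
      = Algebra.TensorProduct.map f f u := by
    intro u
    induction u using TensorProduct.induction_on with
    | zero => simp
    | tmul r s => simp
    | add u v hu hv => simp [hu, hv]
  have hE : ∀ r : R, (f r ⊗ₜ[k] (1 : A)) * E = E * ((1 : A) ⊗ₜ[k] f r) := by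
    intro r
    have := congrArg (Algebra.TensorProduct.map f f) (he1 r)
    rw [map_mul, map_mul] at this
    simpa [hE_def, hFE, Algebra.TensorProduct.map_tmul] using this
  -- key: innerAct m E = m for any centralizing m
  have key : ∀ m : A ⊗[k] A,
      (∀ r : R, (f r ⊗ₜ[k] (1 : A)) * m = m * ((1 : A) ⊗ₜ[k] f r)) →
      innerAct k A m E = m := by
    intro m hm
    have h : ∀ u : R ⊗[k] R,
        innerAct k A m (TensorProduct.map f.toLinearMap f.toLinearMap u)
          = m * ((1 : A) ⊗ₜ[k] f (LinearMap.mul' k R u)) := by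
      intro u
      induction u using TensorProduct.induction_on with
      | zero => simp
      | tmul r s =>
          rw [TensorProduct.map_tmul, innerAct_apply_tmul]
          simp only [AlgHom.toLinearMap_apply, LinearMap.mul'_apply, map_mul]
          rw [hm r, mul_assoc, Algebra.TensorProduct.tmul_mul_tmul]
          simp
      | add u v hu hv =>
          simp only [map_add, hu, hv, TensorProduct.tmul_add, mul_add]
    have := h e
    rw [he2, map_one] at this
    simpa [hE_def, ← Algebra.TensorProduct.one_def] using this
  -- key2: innerAct q (Δ x) in ad form
  have keyAd : ∀ (q : A ⊗[k] A) (x : A),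
      innerAct k A q (Δ x)
        = (x ⊗ₜ[k] (1 : A)) * innerAct k A q E - innerAct k A q E * ((1 : A) ⊗ₜ[k] x) := by
    intro q x
    rw [hΔval, map_sub, innerAct_left_comm, innerAct_right_comm]
  -- innerAct q E is centralizing for any q
  have cent : ∀ q : A ⊗[k] A, ∀ r : R,
      (f r ⊗ₜ[k] (1 : A)) * innerAct k A q E = innerAct k A q E * ((1 : A) ⊗ₜ[k] f r) := by
    intro q r
    induction q using TensorProduct.induction_on with
    | zero => simp
    | tmul p' p'' =>
        have c1 : (f r ⊗ₜ[k] (1 : A)) * ((1 : A) ⊗ₜ[k] p'')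
            = ((1 : A) ⊗ₜ[k] p'') * (f r ⊗ₜ[k] (1 : A)) := by
          simp [Algebra.TensorProduct.tmul_mul_tmul]
        have c2 : ((1 : A) ⊗ₜ[k] f r) * (p' ⊗ₜ[k] (1 : A))
            = (p' ⊗ₜ[k] (1 : A)) * ((1 : A) ⊗ₜ[k] f r) := by
          simp [Algebra.TensorProduct.tmul_mul_tmul]
        have c3 : (f r ⊗ₜ[k] (1 : A)) * (E * (p' ⊗ₜ[k] (1 : A)))
            = (E * (p' ⊗ₜ[k] (1 : A))) * ((1 : A) ⊗ₜ[k] f r) := by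
          rw [← mul_assoc, hE, mul_assoc, c2, ← mul_assoc]
        rw [innerAct_tmul, ← mul_assoc, c1, mul_assoc, c3, ← mul_assoc]
    | add u v hu hv => simp only [map_add, LinearMap.add_apply, add_mul, mul_add, hu, hv]
  have part1 : ∀ x : A,
      (x ⊗ₜ[k] (1 : A)) * p - p * ((1 : A) ⊗ₜ[k] x) = innerAct k A p (Δ x) := by
    intro x
    rw [keyAd, key p hp]
  refine ⟨part1, fun x => ?_, ?_⟩
  · rw [← part1, map_sub, mul'_left, mul'_right]
  · ext D
    constructor
    · rintro ⟨m, hm, rfl⟩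
      refine ⟨m, funext fun x => ?_⟩
      rw [keyAd, key m hm]
    · rintro ⟨q, rfl⟩
      refine ⟨innerAct k A q E, cent q, funext fun x => ?_⟩
      rw [keyAd]
end

section
/- Necklace bracket formulas for the path algebra P = kQ̄: for p ∈ P_♮ = P/[P,P] one has dp = Σ_{a∈Q̄} (∂_a p) da in DR¹_R P, the Hamiltonian derivation θ_p determined by i_{θ_p}ω = dp satisfies θ_p(a) = ε(a)·∂_{a*} p for all edges a ∈ Q̄, and the necklace Lie bracket is {p,q} = Σ_{a∈Q̄} ε(a*)(∂_a p)(∂_{a*} q) mod [P,P], where ∂_a p := Σ_{i: a_i = a} (p_{>i})(p_{<i}) is the cyclic derivative and ε(a) = +1 for a ∈ Q, −1 for a ∈ Q̄∖Q. -/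
open TensorProduct

/-- The defining relations of the path algebra `P = kQ̄` of the double `Q̄` of a quiver
`Q` with vertex set `I`, edge set `E` and source/target maps `s, t`: presented as a
quotient of the free algebra on `I ⊕ (E ⊕ E)` (vertex idempotents, edges, reversed
edges). -/
inductive PathRel (k I E : Type) [CommRing k] [Fintype I] [DecidableEq I]
    (s t : E → I) :
    FreeAlgebra k (I ⊕ (E ⊕ E)) → FreeAlgebra k (I ⊕ (E ⊕ E)) → Prop
  | idem (i j : I) : PathRel k I E s t
      (FreeAlgebra.ι k (Sum.inl i) * FreeAlgebra.ι k (Sum.inl j))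
      (if i = j then FreeAlgebra.ι k (Sum.inl i) else 0)
  | unit : PathRel k I E s t (∑ i : I, FreeAlgebra.ι k (Sum.inl i)) 1
  | tgt (a : E ⊕ E) : PathRel k I E s t
      (FreeAlgebra.ι k (Sum.inl (Sum.elim t s a)) * FreeAlgebra.ι k (Sum.inr a))
      (FreeAlgebra.ι k (Sum.inr a))
  | src (a : E ⊕ E) : PathRel k I E s t
      (FreeAlgebra.ι k (Sum.inr a) * FreeAlgebra.ι k (Sum.inl (Sum.elim s t a)))
      (FreeAlgebra.ι k (Sum.inr a))

/-- The reversal involution on the edges of the double quiver. -/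
def starE {E : Type} : E ⊕ E → E ⊕ E := Sum.elim Sum.inr Sum.inl

/-- The sign `ε(a)`: `+1` on edges of `Q`, `-1` on reversed edges. -/
def signE (k : Type) [CommRing k] {E : Type} : E ⊕ E → k :=
  Sum.elim (fun _ => (1 : k)) (fun _ => (-1 : k))

/-- The cyclic derivative `∂_a p = m ∘ flip ∘ (∂/∂a)(p)` obtained from a double
derivation `D = ∂/∂a`. -/
noncomputable def cycDer {k A : Type} [CommRing k] [Ring A] [Algebra k A]
    (D : A →ₗ[k] A ⊗[k] A) (p : A) : A :=
  LinearMap.mul' k A ((TensorProduct.comm k A A) (D p))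

/-!
Write `∂_a^z p = Σ p'' z p'` for `∂/∂a (p) = Σ p' ⊗ p''`, so that `∂_a^1 = ∂_a` and
`∂_a^z (uv) = ∂_a^{zu} v + ∂_a^{vz} u`.

(a) By induction on `p`, `x dp y ≡ Σ_a (∂_a^{yx} p) da` modulo `[P, Ω¹]`; take `x = y = 1`.

(b) By the universal property of `Ω¹_R P`, `x dy ↦ ∂_b^x y` is a well-defined functional `Φ_b`
on `Ω¹_R P`, and the Leibniz rule for `∂_b^z` makes it vanish on `[P, Ω¹]`. Since
`i_θ (da da*) = θ(a) da* - da θ(a*)`, `Φ_b (z dc) = [b = c] e_{s c} z e_{t c}` and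
`θ(c) = e_{t c} θ(c) e_{s c}`, applying `Φ_{b*}` to `i_θ ω = dp` gives `ε(b) θ(b) = ∂_{b*} p`.

(c) A derivation vanishing on `R` is determined by its values on arrows, so
`θ(q) = Σ_c Σ q' θ(c) q''` where `∂/∂c (q) = Σ q' ⊗ q''`, and `Σ q' θ(c) q'' ≡ θ(c) ∂_c q`
modulo `[P, P]`.
-/

lemma starE_starE {E : Type} (a : E ⊕ E) : starE (starE a) = a := by
  cases a <;> rfl

lemma starE_injective {E : Type} : Function.Injective (starE : E ⊕ E → E ⊕ E) :=
  Function.LeftInverse.injective starE_starE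

lemma elim_starE {E X : Type} (f g : E → X) (a : E ⊕ E) :
    Sum.elim f g (starE a) = Sum.elim g f a := by
  cases a <;> rfl

lemma signE_mul_self (k : Type) [CommRing k] {E : Type} (a : E ⊕ E) :
    signE k a * signE k a = 1 := by
  cases a <;> simp [signE]

section Sandwich
variable {k A : Type} [CommRing k] [Ring A] [Algebra k A]

noncomputable def sandwich : A ⊗[k] A →ₗ[k] A →ₗ[k] A :=
  TensorProduct.lift
    (((LinearMap.llcomp k A A A).comp (LinearMap.mul k A)).compl₂ (LinearMap.mul k A).flip)

@[simp] lemma sandwich_tmul (a b h : A) : sandwich (a ⊗ₜ[k] b) h = a * (h * b) := rfl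

lemma sandwich_tmul_one_mul (u h : A) (t : A ⊗[k] A) :
    sandwich ((u ⊗ₜ[k] 1) * t) h = u * sandwich t h := by
  induction t using TensorProduct.induction_on with
  | zero => simp
  | tmul a b => simp [Algebra.TensorProduct.tmul_mul_tmul, mul_assoc]
  | add x y hx hy => simp only [mul_add, map_add, LinearMap.add_apply, hx, hy]

lemma sandwich_mul_one_tmul (v h : A) (t : A ⊗[k] A) :
    sandwich (t * (1 ⊗ₜ[k] v)) h = sandwich t h * v := by
  induction t using TensorProduct.induction_on with
  | zero => simp
  | tmul a b => simp [Algebra.TensorProduct.tmul_mul_tmul, mul_assoc]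
  | add x y hx hy => simp only [add_mul, map_add, LinearMap.add_apply, hx, hy]

lemma sandwich_one_tmul_mul (u h : A) (t : A ⊗[k] A) :
    sandwich ((1 ⊗ₜ[k] u) * t) h = sandwich t (h * u) := by
  induction t using TensorProduct.induction_on with
  | zero => simp
  | tmul a b => simp [Algebra.TensorProduct.tmul_mul_tmul, mul_assoc]
  | add x y hx hy => simp only [mul_add, map_add, LinearMap.add_apply, hx, hy]

lemma sandwich_mul_tmul_one (v h : A) (t : A ⊗[k] A) :
    sandwich (t * (v ⊗ₜ[k] 1)) h = sandwich t (v * h) := by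
  induction t using TensorProduct.induction_on with
  | zero => simp
  | tmul a b => simp [Algebra.TensorProduct.tmul_mul_tmul, mul_assoc]
  | add x y hx hy => simp only [add_mul, map_add, LinearMap.add_apply, hx, hy]

lemma sandwich_sub_mul_mem_span_commutators (t : A ⊗[k] A) (h : A) :
    sandwich t h - h * LinearMap.mul' k A (TensorProduct.comm k A A t)
      ∈ Submodule.span k {z : A | ∃ u v : A, z = u * v - v * u} := by
  induction t using TensorProduct.induction_on with
  | zero => simp
  | tmul a b => exact Submodule.subset_span ⟨a, h * b, by simp [mul_assoc]⟩
  | add x y hx hy =>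
    convert Submodule.add_mem _ hx hy using 1
    simp only [map_add, LinearMap.add_apply, mul_add]
    abel

/-- `cycDerWith Dm z p = Σ p'' z p'` for `Dm p = Σ p' ⊗ p''`. -/
noncomputable def cycDerWith (Dm : A →ₗ[k] A ⊗[k] A) : A →ₗ[k] A →ₗ[k] A :=
  (sandwich ∘ₗ (TensorProduct.comm k A A).toLinearMap ∘ₗ Dm).flip

lemma cycDerWith_apply (Dm : A →ₗ[k] A ⊗[k] A) (z p : A) :
    cycDerWith Dm z p = sandwich (TensorProduct.comm k A A (Dm p)) z := rfl

lemma cycDerWith_one (Dm : A →ₗ[k] A ⊗[k] A) (p : A) : cycDerWith Dm 1 p = cycDer Dm p := by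
  rw [cycDerWith_apply, cycDer]
  induction TensorProduct.comm k A A (Dm p) using TensorProduct.induction_on with
  | zero => simp
  | tmul a b => simp
  | add x y hx hy => simp only [map_add, LinearMap.add_apply, hx, hy]

lemma cycDerWith_mul {Dm : A →ₗ[k] A ⊗[k] A}
    (hD : ∀ u v : A, Dm (u * v) = (u ⊗ₜ[k] 1) * Dm v + Dm u * (1 ⊗ₜ[k] v)) (z u v : A) :
    cycDerWith Dm z (u * v) = cycDerWith Dm (z * u) v + cycDerWith Dm (v * z) u := by
  have hcomm : ∀ x y : A ⊗[k] A, TensorProduct.comm k A A (x * y)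
      = TensorProduct.comm k A A x * TensorProduct.comm k A A y :=
    map_mul (Algebra.TensorProduct.comm k A A)
  simp only [cycDerWith_apply, hD, map_add, hcomm, TensorProduct.comm_tmul, LinearMap.add_apply,
    sandwich_one_tmul_mul, sandwich_mul_tmul_one]

lemma sandwich_map_mul {Dm : A →ₗ[k] A ⊗[k] A}
    (hD : ∀ u v : A, Dm (u * v) = (u ⊗ₜ[k] 1) * Dm v + Dm u * (1 ⊗ₜ[k] v)) (h u v : A) :
    sandwich (Dm (u * v)) h = u * sandwich (Dm v) h + sandwich (Dm u) h * v := by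
  rw [hD, map_add, LinearMap.add_apply, sandwich_tmul_one_mul, sandwich_mul_one_tmul]

lemma map_one_eq_zero_of_double_derivation {Dm : A →ₗ[k] A ⊗[k] A}
    (hD : ∀ u v : A, Dm (u * v) = (u ⊗ₜ[k] 1) * Dm v + Dm u * (1 ⊗ₜ[k] v)) : Dm 1 = 0 := by
  have h := hD 1 1
  rw [mul_one, ← Algebra.TensorProduct.one_def, one_mul, mul_one] at h
  simpa using h

end Sandwich

section CommSpan
variable {k A W V : Type} [CommRing k] [Ring A] [Algebra k A] [Ring W] [Algebra k W]
  [AddCommGroup V] [Module k V]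

def commSpan (ι : A →ₐ[k] W) : Submodule k W :=
  Submodule.span k {z : W | ∃ (x : A) (u : W), z = ι x * u - u * ι x}

lemma mul_sub_mul_mem_commSpan (ι : A →ₐ[k] W) (x : A) (u : W) :
    ι x * u - u * ι x ∈ commSpan ι :=
  Submodule.subset_span ⟨x, u, rfl⟩

lemma mul_mul_sub_mul_mem_commSpan (ι : A →ₐ[k] W) (x y : A) (w : W) :
    ι x * w * ι y - ι (y * x) * w ∈ commSpan ι := by
  convert Submodule.sub_mem _ (mul_sub_mul_mem_commSpan ι x (w * ι y))
    (mul_sub_mul_mem_commSpan ι (y * x) w) using 1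
  rw [map_mul]
  noncomm_ring

lemma map_eq_zero_of_mem_commSpan (𝒜 : ℕ → Submodule k W) [GradedAlgebra 𝒜] {ι : A →ₐ[k] W}
    (hι0 : ∀ a, ι a ∈ 𝒜 0) {n : ℕ} {S : Set W} (hS : 𝒜 n ≤ Submodule.span k S)
    {Φ : W →ₗ[k] V} (hΦ : ∀ m ≠ n, ∀ w ∈ 𝒜 m, Φ w = 0)
    (hΦS : ∀ z, ∀ w ∈ S, Φ (ι z * w) = Φ (w * ι z)) {w : W} (hw : w ∈ commSpan ι) :
    Φ w = 0 := by
  suffices h : commSpan ι ≤ LinearMap.ker Φ from h hw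
  refine Submodule.span_le.2 ?_
  rintro - ⟨z, u, rfl⟩
  let L := Φ ∘ₗ (LinearMap.mulLeft k (ι z) - LinearMap.mulRight k (ι z))
  have hL : ∀ m, 𝒜 m ≤ LinearMap.ker L := by
    intro m
    by_cases hm : m = n
    · subst hm
      refine hS.trans (Submodule.span_le.2 fun w hw => ?_)
      simp [L, hΦS z w hw]
    · intro w hw
      have hl : ι z * w ∈ 𝒜 m := by simpa using SetLike.mul_mem_graded (hι0 z) hw
      have hr : w * ι z ∈ 𝒜 m := by simpa using SetLike.mul_mem_graded hw (hι0 z)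
      simp [L, hΦ m hm _ hl, hΦ m hm _ hr]
  have htop : (⊤ : Submodule k W) ≤ LinearMap.ker L := by
    rw [← (DirectSum.Decomposition.isInternal 𝒜).submodule_iSup_eq_top]
    exact iSup_le hL
  simpa [L] using htop (Submodule.mem_top (x := u))

end CommSpan

abbrev PathAlgebra (k I E : Type) [CommRing k] [Fintype I] [DecidableEq I] (s t : E → I) :=
  RingQuot (PathRel k I E s t)

namespace PathAlgebra
variable {k I E W : Type} [CommRing k] [Fintype I] [DecidableEq I] {s t : E → I}
  [Ring W] [Algebra k W]

noncomputable def vtx (i : I) : PathAlgebra k I E s t :=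
  RingQuot.mkAlgHom k (PathRel k I E s t) (FreeAlgebra.ι k (Sum.inl i))

noncomputable def arr (a : E ⊕ E) : PathAlgebra k I E s t :=
  RingQuot.mkAlgHom k (PathRel k I E s t) (FreeAlgebra.ι k (Sum.inr a))

lemma vtx_mul_arr (a : E ⊕ E) :
    (vtx (Sum.elim t s a) : PathAlgebra k I E s t) * arr a = arr a := by
  rw [vtx, arr, ← map_mul]
  exact RingQuot.mkAlgHom_rel k (PathRel.tgt a)

lemma arr_mul_vtx (a : E ⊕ E) :
    arr a * (vtx (Sum.elim s t a) : PathAlgebra k I E s t) = arr a := by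
  rw [vtx, arr, ← map_mul]
  exact RingQuot.mkAlgHom_rel k (PathRel.src a)

@[elab_as_elim]
lemma induction {motive : PathAlgebra k I E s t → Prop}
    (algebraMap : ∀ r, motive (algebraMap k _ r)) (vtx : ∀ i, motive (vtx i))
    (arr : ∀ a, motive (arr a)) (add : ∀ x y, motive x → motive y → motive (x + y))
    (mul : ∀ x y, motive x → motive y → motive (x * y)) (p : PathAlgebra k I E s t) :
    motive p := by
  obtain ⟨f, rfl⟩ := RingQuot.mkAlgHom_surjective k (PathRel k I E s t) p
  induction f using FreeAlgebra.induction with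
  | grade0 r => simpa only [AlgHom.commutes] using algebraMap r
  | grade1 x => cases x with
    | inl i => exact vtx i
    | inr a => exact arr a
  | mul x y hx hy => simpa only [map_mul] using mul _ _ hx hy
  | add x y hx hy => simpa only [map_add] using add _ _ hx hy

section Leibniz
variable (ι : PathAlgebra k I E s t →ₐ[k] W) {f : PathAlgebra k I E s t →ₗ[k] W}

lemma map_algebraMap_of_leibniz (hf : ∀ u v, f (u * v) = ι u * f v + f u * ι v) (r : k) :
    f (algebraMap k _ r) = 0 := by
  have h := hf 1 1
  rw [mul_one, _root_.map_one ι, one_mul, mul_one, left_eq_add] at h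
  rw [Algebra.algebraMap_eq_smul_one, map_smul, h, smul_zero]

lemma map_arr_of_leibniz (hf : ∀ u v, f (u * v) = ι u * f v + f u * ι v)
    (hfv : ∀ i, f (vtx i) = 0) (a : E ⊕ E) :
    f (arr a) = ι (vtx (Sum.elim t s a)) * f (arr a) * ι (vtx (Sum.elim s t a)) := by
  have hl : f (arr a) = ι (vtx (Sum.elim t s a)) * f (arr a) := by
    conv_lhs => rw [← vtx_mul_arr a]
    rw [hf, hfv, zero_mul, add_zero]
  have hr : f (arr a) = f (arr a) * ι (vtx (Sum.elim s t a)) := by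
    conv_lhs => rw [← arr_mul_vtx a]
    rw [hf, hfv, mul_zero, zero_add]
  conv_lhs => rw [hr, hl]

end Leibniz

lemma leibniz_ext {f g : PathAlgebra k I E s t →ₗ[k] PathAlgebra k I E s t}
    (hf : ∀ u v, f (u * v) = u * f v + f u * v) (hg : ∀ u v, g (u * v) = u * g v + g u * v)
    (hfv : ∀ i, f (vtx i) = 0) (hgv : ∀ i, g (vtx i) = 0)
    (harr : ∀ a, f (arr a) = g (arr a)) : f = g := by
  ext p
  induction p using PathAlgebra.induction with
  | algebraMap r =>
    rw [map_algebraMap_of_leibniz (AlgHom.id k _) hf, map_algebraMap_of_leibniz (AlgHom.id k _) hg]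
  | vtx i => rw [hfv, hgv]
  | arr a => exact harr a
  | add x y hx hy => rw [map_add, map_add, hx, hy]
  | mul x y hx hy => rw [hf, hg, hx, hy]

lemma cycDerWith_algebraMap {Dm : PathAlgebra k I E s t →ₗ[k]
      PathAlgebra k I E s t ⊗[k] PathAlgebra k I E s t}
    (hD : ∀ u v, Dm (u * v) = (u ⊗ₜ[k] 1) * Dm v + Dm u * (1 ⊗ₜ[k] v))
    (z : PathAlgebra k I E s t) (r : k) : cycDerWith Dm z (algebraMap k _ r) = 0 := by
  rw [Algebra.algebraMap_eq_smul_one, map_smul, cycDerWith_apply,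
    map_one_eq_zero_of_double_derivation hD]
  simp

def FormsUniversal (𝒜 : ℕ → Submodule k W) (ιA : PathAlgebra k I E s t →ₐ[k] W)
    (d : W →ₗ[k] W) : Prop :=
  ∀ (n : ℕ) (V : Type), ∀ (_ : AddCommGroup V) (_ : Module k V),
    ∀ φ : MultilinearMap k (fun _ : Fin (n + 1) => PathAlgebra k I E s t) V,
      (∀ (a : Fin (n + 1) → PathAlgebra k I E s t) (j : Fin n) (i : I),
          φ (Function.update a j.castSucc (a j.castSucc * vtx i))
            = φ (Function.update a j.succ (vtx i * a j.succ))) →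
      (∀ (a : Fin (n + 1) → PathAlgebra k I E s t) (j : Fin n),
          a j.succ ∈ Submodule.span k (Set.range fun i : I => vtx i) → φ a = 0) →
      ∃! Φ : W →ₗ[k] V,
        (∀ a : Fin (n + 1) → PathAlgebra k I E s t,
          Φ (ιA (a 0) * (List.ofFn fun j : Fin n => d (ιA (a j.succ))).prod) = φ a) ∧
        (∀ m : ℕ, m ≠ n → ∀ w ∈ 𝒜 m, Φ w = 0)

theorem exists_trace_cycDerWith (𝒜 : ℕ → Submodule k W) [GradedAlgebra 𝒜]
    {ιA : PathAlgebra k I E s t →ₐ[k] W} {d : W →ₗ[k] W} (huniv : FormsUniversal 𝒜 ιA d)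
    (hι0 : ∀ a, ιA a ∈ 𝒜 0)
    (hspan : 𝒜 1 ≤ Submodule.span k {w : W | ∃ a : Fin 2 → PathAlgebra k I E s t,
      w = ιA (a 0) * (List.ofFn fun j : Fin 1 => d (ιA (a j.succ))).prod})
    (hdι : ∀ x y, d (ιA (x * y)) = d (ιA x) * ιA y + ιA x * d (ιA y))
    {Dm : PathAlgebra k I E s t →ₗ[k] PathAlgebra k I E s t ⊗[k] PathAlgebra k I E s t}
    (hD : ∀ u v, Dm (u * v) = (u ⊗ₜ[k] 1) * Dm v + Dm u * (1 ⊗ₜ[k] v))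
    (hDv : ∀ i, Dm (vtx i) = 0) :
    ∃ Φ : W →ₗ[k] PathAlgebra k I E s t,
      (∀ x y, Φ (ιA x * d (ιA y)) = cycDerWith Dm x y) ∧ ∀ w ∈ commSpan ιA, Φ w = 0 := by
  have hvtx : ∀ x i, cycDerWith Dm x (vtx i) = 0 := fun x i => by
    rw [cycDerWith_apply, hDv, map_zero, map_zero, LinearMap.zero_apply]
  have hbalanced : ∀ x y i, cycDerWith Dm (x * vtx i) y = cycDerWith Dm x (vtx i * y) := by
    intro x y i
    rw [cycDerWith_mul hD, hvtx, add_zero]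
  let φ := LinearMap.uncurryLeft (M := fun _ : Fin 2 => PathAlgebra k I E s t)
    ((MultilinearMap.ofSubsingletonₗ k k _ _ (0 : Fin 1)).toLinearMap ∘ₗ cycDerWith Dm)
  have hφ : ∀ a, φ a = cycDerWith Dm (a 0) (a 1) := fun a => rfl
  obtain ⟨Φ, ⟨hΦφ, hΦdeg⟩, -⟩ := huniv 1 _ inferInstance inferInstance φ
    (fun a j i => by
      rw [Subsingleton.elim j 0, hφ, hφ]
      simp [hbalanced])
    (fun a j ha => by
      rw [Subsingleton.elim j 0] at ha
      rw [hφ]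
      refine (Submodule.span_le (p := LinearMap.ker (cycDerWith Dm (a 0)))).2 ?_ ha
      rintro - ⟨i, rfl⟩
      exact hvtx _ i)
  have hΦ : ∀ x y, Φ (ιA x * d (ιA y)) = cycDerWith Dm x y := fun x y => by
    simpa [hφ] using hΦφ ![x, y]
  refine ⟨Φ, hΦ, fun w hw => map_eq_zero_of_mem_commSpan 𝒜 hι0 hspan hΦdeg ?_ hw⟩
  rintro z - ⟨a, rfl⟩
  have hd : ιA (a 0) * d (ιA (a 1)) * ιA z
      = ιA (a 0) * d (ιA (a 1 * z)) - ιA (a 0 * a 1) * d (ιA z) := by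
    rw [hdι, map_mul]
    noncomm_ring
  simp only [List.ofFn_succ, List.ofFn_zero, List.prod_cons, List.prod_nil, mul_one,
    Fin.succ_zero_eq_one]
  rw [hd, map_sub, ← mul_assoc, ← map_mul, hΦ, hΦ, hΦ, cycDerWith_mul hD (a 0) (a 1) z]
  abel

variable [DecidableEq E]
  (D : E ⊕ E → (PathAlgebra k I E s t →ₗ[k] PathAlgebra k I E s t ⊗[k] PathAlgebra k I E s t))

lemma cycDerWith_arr (hDval : ∀ a b, D a (arr b) =
      if a = b then vtx (Sum.elim t s a) ⊗ₜ[k] vtx (Sum.elim s t a) else 0)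
    (a b : E ⊕ E) (z : PathAlgebra k I E s t) :
    cycDerWith (D a) z (arr b)
      = if a = b then vtx (Sum.elim s t a) * z * vtx (Sum.elim t s a) else 0 := by
  rw [cycDerWith_apply, hDval]
  split_ifs <;> simp [mul_assoc]

lemma sandwich_arr (hDval : ∀ a b, D a (arr b) =
      if a = b then vtx (Sum.elim t s a) ⊗ₜ[k] vtx (Sum.elim s t a) else 0)
    (a b : E ⊕ E) (h : PathAlgebra k I E s t) :
    sandwich (D a (arr b)) h
      = if a = b then vtx (Sum.elim t s a) * h * vtx (Sum.elim s t a) else 0 := by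
  rw [hDval]
  split_ifs <;> simp [mul_assoc]

variable [Fintype E]

theorem mul_map_mul_sub_sum_mem_commSpan (ι : PathAlgebra k I E s t →ₐ[k] W) {δ : PathAlgebra k I E s t →ₗ[k] W}
    (hδ : ∀ x y, δ (x * y) = δ x * ι y + ι x * δ y) (hδv : ∀ i, δ (vtx i) = 0)
    (hDder : ∀ a u v, D a (u * v) = (u ⊗ₜ[k] 1) * D a v + D a u * (1 ⊗ₜ[k] v))
    (hDval : ∀ a b, D a (arr b) =
      if a = b then vtx (Sum.elim t s a) ⊗ₜ[k] vtx (Sum.elim s t a) else 0)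
    (hDvert : ∀ a i, D a (vtx i) = 0) (p x y : PathAlgebra k I E s t) :
    ι x * δ p * ι y - ∑ a, ι (cycDerWith (D a) (y * x) p) * δ (arr a) ∈ commSpan ι := by
  have hδ' : ∀ u v, δ (u * v) = ι u * δ v + δ u * ι v := fun u v => (hδ u v).trans (add_comm _ _)
  induction p using PathAlgebra.induction generalizing x y with
  | algebraMap r => simp [map_algebraMap_of_leibniz ι hδ', cycDerWith_algebraMap (hDder _)]
  | vtx i => simp [hδv, cycDerWith_apply, hDvert]
  | arr b =>
    rw [Finset.sum_eq_single_of_mem b (Finset.mem_univ b) fun a _ hab => by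
      rw [cycDerWith_arr D hDval, if_neg hab, map_zero, zero_mul],
      cycDerWith_arr D hDval, if_pos rfl]
    have hsandwich : ι x * δ (arr b) * ι y
        = ι (x * vtx (Sum.elim t s b)) * δ (arr b) * ι (vtx (Sum.elim s t b) * y) := by
      conv_lhs => rw [map_arr_of_leibniz ι hδ' hδv b]
      simp only [map_mul, mul_assoc]
    rw [hsandwich]
    convert mul_mul_sub_mul_mem_commSpan ι (x * vtx (Sum.elim t s b)) (vtx (Sum.elim s t b) * y)
      (δ (arr b)) using 4
    simp only [mul_assoc]
  | add u v hu hv =>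
    convert Submodule.add_mem _ (hu x y) (hv x y) using 1
    simp only [map_add, add_mul, mul_add, Finset.sum_add_distrib]
    abel
  | mul u v hu hv =>
    convert Submodule.add_mem _ (hu x (v * y)) (hv (x * u) y) using 1
    simp only [hδ, cycDerWith_mul (hDder _), map_add, map_mul, add_mul, mul_add, mul_assoc,
      Finset.sum_add_distrib]
    rw [add_comm (Finset.sum _ _) (Finset.sum _ _), add_sub_add_comm]


theorem leibniz_map_arr_eq_signE_smul_cycDer {ιA : PathAlgebra k I E s t →ₐ[k] W}
    {d σ : W →ₗ[k] W} (hσd : ∀ q, σ (d (ιA q)) = -d (ιA q))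
    (hDval : ∀ a b, D a (arr b) =
      if a = b then vtx (Sum.elim t s a) ⊗ₜ[k] vtx (Sum.elim s t a) else 0)
    (htrace : ∀ b, ∃ Φ : W →ₗ[k] PathAlgebra k I E s t,
      (∀ x y, Φ (ιA x * d (ιA y)) = cycDerWith (D b) x y) ∧ ∀ w ∈ commSpan ιA, Φ w = 0)
    {θ : PathAlgebra k I E s t →ₗ[k] PathAlgebra k I E s t}
    (hθ : ∀ u v, θ (u * v) = u * θ v + θ u * v) (hθv : ∀ i, θ (vtx i) = 0)
    {iθ : W →ₗ[k] W} (hiθd : ∀ z, iθ (d (ιA z)) = ιA (θ z))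
    (hiθ : ∀ u v, iθ (u * v) = iθ u * v + σ u * iθ v) {p : PathAlgebra k I E s t}
    (hω : iθ (∑ a : E, d (ιA (arr (Sum.inl a))) * d (ιA (arr (Sum.inr a)))) - d (ιA p)
      ∈ commSpan ιA) (b : E ⊕ E) :
    θ (arr b) = signE k b • cycDer (D (starE b)) p := by
  obtain ⟨Φ, hΦ, hΦC⟩ := htrace (starE b)
  have hΦd : ∀ q, Φ (d (ιA q)) = cycDer (D (starE b)) q := fun q => by
    simpa [cycDerWith_one] using hΦ 1 q
  have hcontract : ∀ α β : PathAlgebra k I E s t,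
      Φ (iθ (d (ιA α) * d (ιA β))) = Φ (ιA (θ α) * d (ιA β)) - Φ (ιA (θ β) * d (ιA α)) := by
    intro α β
    have hswap := hΦC _ (mul_sub_mul_mem_commSpan ιA (θ β) (d (ιA α)))
    rw [map_sub, sub_eq_zero] at hswap
    rw [hiθ, hiθd, hiθd, hσd, neg_mul, ← sub_eq_add_neg, map_sub, hswap]
  have hterm : ∀ c, Φ (ιA (θ (arr c)) * d (ιA (arr (starE c))))
      = if b = c then θ (arr c) else 0 := by
    intro c
    rw [hΦ, cycDerWith_arr D hDval]
    by_cases hbc : b = c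
    · subst hbc
      rw [if_pos rfl, if_pos rfl, elim_starE, elim_starE]
      exact (map_arr_of_leibniz (AlgHom.id k _) hθ hθv b).symm
    · rw [if_neg (starE_injective.ne hbc), if_neg hbc]
  have hcycDer : cycDer (D (starE b)) p = signE k b • θ (arr b) := by
    have h := hΦC _ hω
    rw [map_sub, sub_eq_zero, hΦd, map_sum, map_sum] at h
    rw [← h, Finset.sum_congr rfl fun a _ => hcontract _ _]
    calc _ = ∑ c, signE k c • Φ (ιA (θ (arr c)) * d (ιA (arr (starE c)))) := by
          rw [Fintype.sum_sum_type, ← Finset.sum_add_distrib]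
          refine Finset.sum_congr rfl fun a _ => ?_
          change _ = (1 : k) • _ + (-1 : k) • _
          rw [one_smul, sub_eq_add_neg]
          exact congrArg _ (neg_one_smul k _).symm
      _ = signE k b • θ (arr b) := by simp [hterm]
  rw [hcycDer, smul_smul, signE_mul_self, one_smul]

theorem eq_sum_sandwich_of_leibniz
    (hDder : ∀ a u v, D a (u * v) = (u ⊗ₜ[k] 1) * D a v + D a u * (1 ⊗ₜ[k] v))
    (hDval : ∀ a b, D a (arr b) =
      if a = b then vtx (Sum.elim t s a) ⊗ₜ[k] vtx (Sum.elim s t a) else 0)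
    (hDvert : ∀ a i, D a (vtx i) = 0)
    {θ : PathAlgebra k I E s t →ₗ[k] PathAlgebra k I E s t}
    (hθ : ∀ u v, θ (u * v) = u * θ v + θ u * v) (hθv : ∀ i, θ (vtx i) = 0)
    (q : PathAlgebra k I E s t) :
    θ q = ∑ c, sandwich (D c q) (θ (arr c)) := by
  let g := ∑ c, (sandwich.flip (θ (arr c))) ∘ₗ D c
  have hg : ∀ q, g q = ∑ c, sandwich (D c q) (θ (arr c)) := fun q => by simp [g]
  suffices θ = g from (LinearMap.congr_fun this q).trans (hg q)
  refine leibniz_ext hθ (fun u v => ?_) hθv (fun i => by simp [hg, hDvert]) (fun b => ?_)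
  · simp only [hg, sandwich_map_mul (hDder _), Finset.sum_add_distrib, Finset.mul_sum,
      Finset.sum_mul]
  · rw [hg, Finset.sum_eq_single_of_mem b (Finset.mem_univ b) fun c _ hcb => by
      rw [sandwich_arr D hDval, if_neg hcb], sandwich_arr D hDval, if_pos rfl]
    exact map_arr_of_leibniz (AlgHom.id k _) hθ hθv b

theorem leibniz_sub_sum_signE_smul_mem_span_commutators
    (hDder : ∀ a u v, D a (u * v) = (u ⊗ₜ[k] 1) * D a v + D a u * (1 ⊗ₜ[k] v))
    (hDval : ∀ a b, D a (arr b) =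
      if a = b then vtx (Sum.elim t s a) ⊗ₜ[k] vtx (Sum.elim s t a) else 0)
    (hDvert : ∀ a i, D a (vtx i) = 0)
    {θ : PathAlgebra k I E s t →ₗ[k] PathAlgebra k I E s t}
    (hθ : ∀ u v, θ (u * v) = u * θ v + θ u * v) (hθv : ∀ i, θ (vtx i) = 0)
    {p : PathAlgebra k I E s t} (harr : ∀ b, θ (arr b) = signE k b • cycDer (D (starE b)) p)
    (q : PathAlgebra k I E s t) :
    θ q - ∑ a, signE k (starE a) • (cycDer (D a) p * cycDer (D (starE a)) q)
      ∈ Submodule.span k {z : PathAlgebra k I E s t | ∃ u v, z = u * v - v * u} := by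
  have hreindex : ∑ a, signE k (starE a) • (cycDer (D a) p * cycDer (D (starE a)) q)
      = ∑ c, signE k c • (cycDer (D (starE c)) p * cycDer (D c) q) :=
    Fintype.sum_bijective starE starE_injective.bijective_of_finite _ _ fun a => by
      rw [starE_starE]
  rw [hreindex, eq_sum_sandwich_of_leibniz D hDder hDval hDvert hθ hθv q,
    ← Finset.sum_sub_distrib]
  refine Submodule.sum_mem _ fun c _ => ?_
  rw [harr, map_smul]
  convert Submodule.smul_mem _ (signE k c)
    (sandwich_sub_mul_mem_span_commutators (D c q) (cycDer (D (starE c)) p)) using 1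
  rw [smul_sub]
  rfl

end PathAlgebra

theorem stmt18_general (k I E W : Type) [Field k]
    [Fintype I] [DecidableEq I] [Fintype E] [DecidableEq E] (s t : E → I)
    -- the noncommutative forms of P = kQ̄ relative to R = kI
    [Ring W] [Algebra k W]
    (𝒜 : ℕ → Submodule k W) [GradedAlgebra 𝒜]
    (ιA : RingQuot (PathRel k I E s t) →ₐ[k] W) (d σ : W →ₗ[k] W)
    (hι0 : ∀ a, ιA a ∈ 𝒜 0)
    (hdg : ∀ (n : ℕ), ∀ w ∈ 𝒜 n, d w ∈ 𝒜 (n + 1))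
    (hσ : ∀ (n : ℕ), ∀ w ∈ 𝒜 n, σ w = ((-1 : k) ^ n) • w)
    (hdLeib : ∀ u v : W, d (u * v) = d u * v + σ u * d v)
    (hdR : ∀ i : I,
      d (ιA (RingQuot.mkAlgHom k (PathRel k I E s t)
              (FreeAlgebra.ι k (Sum.inl i)))) = 0)
    (hspan : ∀ n : ℕ, 𝒜 n ≤ Submodule.span k
        {w : W | ∃ a : Fin (n + 1) → RingQuot (PathRel k I E s t),
          w = ιA (a 0) * (List.ofFn fun j : Fin n => d (ιA (a j.succ))).prod})
    (huniv : ∀ (n : ℕ) (V : Type), ∀ (_ : AddCommGroup V) (_ : Module k V),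
      ∀ φ : MultilinearMap k
          (fun _ : Fin (n + 1) => RingQuot (PathRel k I E s t)) V,
        (∀ (a : Fin (n + 1) → RingQuot (PathRel k I E s t)) (j : Fin n) (i : I),
            φ (Function.update a j.castSucc
                (a j.castSucc *
                  RingQuot.mkAlgHom k (PathRel k I E s t)
                    (FreeAlgebra.ι k (Sum.inl i))))
              = φ (Function.update a j.succ
                  (RingQuot.mkAlgHom k (PathRel k I E s t)
                      (FreeAlgebra.ι k (Sum.inl i)) * a j.succ))) →
        (∀ (a : Fin (n + 1) → RingQuot (PathRel k I E s t)) (j : Fin n),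
            a j.succ ∈ Submodule.span k
              (Set.range fun i : I =>
                RingQuot.mkAlgHom k (PathRel k I E s t)
                  (FreeAlgebra.ι k (Sum.inl i))) → φ a = 0) →
        ∃! Φ : W →ₗ[k] V,
          (∀ a : Fin (n + 1) → RingQuot (PathRel k I E s t),
            Φ (ιA (a 0) * (List.ofFn fun j : Fin n => d (ιA (a j.succ))).prod) = φ a) ∧
          (∀ m : ℕ, m ≠ n → ∀ w ∈ 𝒜 m, Φ w = 0))
    -- the partial double derivations ∂/∂a on P
    (D : E ⊕ E → (RingQuot (PathRel k I E s t) →ₗ[k]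
        RingQuot (PathRel k I E s t) ⊗[k] RingQuot (PathRel k I E s t)))
    (hDder : ∀ (a : E ⊕ E) (u v : RingQuot (PathRel k I E s t)),
        D a (u * v) = (u ⊗ₜ[k] (1 : RingQuot (PathRel k I E s t))) * D a v
          + D a u * ((1 : RingQuot (PathRel k I E s t)) ⊗ₜ[k] v))
    (hDval : ∀ a b : E ⊕ E,
        D a (RingQuot.mkAlgHom k (PathRel k I E s t) (FreeAlgebra.ι k (Sum.inr b)))
          = if a = b then
              (RingQuot.mkAlgHom k (PathRel k I E s t)
                  (FreeAlgebra.ι k (Sum.inl (Sum.elim t s a))))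
                ⊗ₜ[k]
              (RingQuot.mkAlgHom k (PathRel k I E s t)
                  (FreeAlgebra.ι k (Sum.inl (Sum.elim s t a))))
            else 0)
    (hDvert : ∀ (a : E ⊕ E) (i : I),
        D a (RingQuot.mkAlgHom k (PathRel k I E s t)
              (FreeAlgebra.ι k (Sum.inl i))) = 0) :
    -- (a)  dp = Σ_{a ∈ Q̄} (∂_a p) da  in DR¹
    (∀ p : RingQuot (PathRel k I E s t),
      d (ιA p) - ∑ a : E ⊕ E,
          ιA (cycDer (D a) p) *
            d (ιA (RingQuot.mkAlgHom k (PathRel k I E s t)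
                (FreeAlgebra.ι k (Sum.inr a))))
        ∈ Submodule.span k
            {z : W | ∃ (x : RingQuot (PathRel k I E s t)) (u : W),
              z = ιA x * u - u * ιA x})
    -- (b), (c): if θ is a derivation with i_θ ω = dp in DR¹, then
    --           θ(a) = ε(a) ∂_{a*} p and {p, q} = θ(q) = Σ ε(a*)(∂_a p)(∂_{a*} q)
    ∧ (∀ (p : RingQuot (PathRel k I E s t))
        (θ : RingQuot (PathRel k I E s t) →ₗ[k] RingQuot (PathRel k I E s t)),
        (∀ u v, θ (u * v) = u * θ v + θ u * v) →
        (∀ i : I, θ (RingQuot.mkAlgHom k (PathRel k I E s t)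
            (FreeAlgebra.ι k (Sum.inl i))) = 0) →
        ∀ iθ : W →ₗ[k] W,
          (∀ z, iθ (ιA z) = 0) →
          (∀ z, iθ (d (ιA z)) = ιA (θ z)) →
          (∀ u v : W, iθ (u * v) = iθ u * v + σ u * iθ v) →
          iθ (∑ a : E,
              d (ιA (RingQuot.mkAlgHom k (PathRel k I E s t)
                  (FreeAlgebra.ι k (Sum.inr (Sum.inl a)))))
                * d (ιA (RingQuot.mkAlgHom k (PathRel k I E s t)
                  (FreeAlgebra.ι k (Sum.inr (Sum.inr a))))))
            - d (ιA p)
            ∈ Submodule.span k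
                {z : W | ∃ (x : RingQuot (PathRel k I E s t)) (u : W),
                  z = ιA x * u - u * ιA x} →
          (∀ a : E ⊕ E,
            θ (RingQuot.mkAlgHom k (PathRel k I E s t)
                (FreeAlgebra.ι k (Sum.inr a)))
              = signE k a • cycDer (D (starE a)) p) ∧
          (∀ q : RingQuot (PathRel k I E s t),
            θ q - ∑ a : E ⊕ E,
                signE k (starE a) • (cycDer (D a) p * cycDer (D (starE a)) q)
              ∈ Submodule.span k
                  {z : RingQuot (PathRel k I E s t) |
                    ∃ u v : RingQuot (PathRel k I E s t), z = u * v - v * u})) := by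
  have hdι : ∀ x y, d (ιA (x * y)) = d (ιA x) * ιA y + ιA x * d (ιA y) := fun x y => by
    rw [map_mul, hdLeib, hσ 0 _ (hι0 x), pow_zero, one_smul]
  have hσd : ∀ q, σ (d (ιA q)) = -d (ιA q) := fun q => by
    rw [hσ 1 _ (hdg 0 _ (hι0 q)), pow_one, neg_one_smul]
  refine ⟨fun p => ?_, fun p θ hθ hθv iθ _ hiθd hiθ hω => ?_⟩
  · have h := PathAlgebra.mul_map_mul_sub_sum_mem_commSpan D ιA (δ := d ∘ₗ ιA.toLinearMap) hdι
      hdR hDder hDval hDvert p 1 1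
    simp only [map_one, mul_one, one_mul, cycDerWith_one] at h
    exact h
  · have harr := PathAlgebra.leibniz_map_arr_eq_signE_smul_cycDer D hσd hDval
      (fun b => PathAlgebra.exists_trace_cycDerWith 𝒜 huniv hι0 (hspan 1) hdι (hDder b)
        (hDvert b)) hθ hθv hiθd hiθ hω
    exact ⟨harr, PathAlgebra.leibniz_sub_sum_signE_smul_mem_span_commutators D hDder hDval
      hDvert hθ hθv harr⟩

/-- **Necklace bracket formulas.**  Let `P = kQ̄` be the path algebra of
the double of a quiver, `ω = Σ_{a∈Q} da da*` the canonical bi-symplectic form, `∂_a`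
the cyclic derivatives, `θ_p` the Hamiltonian derivation of `p` determined by
`i_{θ_p} ω = dp` in `DR¹`.  Then: (a) `dp = Σ_{a∈Q̄} (∂_a p) da` in `DR¹_R P`;
(b) `θ_p(a) = ε(a) ∂_{a*} p` for all edges `a ∈ Q̄`; (c) the necklace Lie bracket is
`{p, q} = θ_p(q) = Σ_{a∈Q̄} ε(a*) (∂_a p)(∂_{a*} q)` modulo `[P, P]`. -/
theorem stmt18 (k I E W : Type) [Field k] [CharZero k]
    [Fintype I] [DecidableEq I] [Fintype E] [DecidableEq E] (s t : E → I)
    -- the noncommutative forms of P = kQ̄ relative to R = kI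
    [Ring W] [Algebra k W]
    (𝒜 : ℕ → Submodule k W) [GradedAlgebra 𝒜]
    (ιA : RingQuot (PathRel k I E s t) →ₐ[k] W) (d σ : W →ₗ[k] W)
    (hι0 : ∀ a, ιA a ∈ 𝒜 0)
    (hdg : ∀ (n : ℕ), ∀ w ∈ 𝒜 n, d w ∈ 𝒜 (n + 1))
    (hσ : ∀ (n : ℕ), ∀ w ∈ 𝒜 n, σ w = ((-1 : k) ^ n) • w)
    (hdd : ∀ w : W, d (d w) = 0)
    (hdLeib : ∀ u v : W, d (u * v) = d u * v + σ u * d v)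
    (hdR : ∀ i : I,
      d (ιA (RingQuot.mkAlgHom k (PathRel k I E s t)
              (FreeAlgebra.ι k (Sum.inl i)))) = 0)
    (hspan : ∀ n : ℕ, 𝒜 n ≤ Submodule.span k
        {w : W | ∃ a : Fin (n + 1) → RingQuot (PathRel k I E s t),
          w = ιA (a 0) * (List.ofFn fun j : Fin n => d (ιA (a j.succ))).prod})
    (huniv : ∀ (n : ℕ) (V : Type), ∀ (_ : AddCommGroup V) (_ : Module k V),
      ∀ φ : MultilinearMap k
          (fun _ : Fin (n + 1) => RingQuot (PathRel k I E s t)) V,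
        (∀ (a : Fin (n + 1) → RingQuot (PathRel k I E s t)) (j : Fin n) (i : I),
            φ (Function.update a j.castSucc
                (a j.castSucc *
                  RingQuot.mkAlgHom k (PathRel k I E s t)
                    (FreeAlgebra.ι k (Sum.inl i))))
              = φ (Function.update a j.succ
                  (RingQuot.mkAlgHom k (PathRel k I E s t)
                      (FreeAlgebra.ι k (Sum.inl i)) * a j.succ))) →
        (∀ (a : Fin (n + 1) → RingQuot (PathRel k I E s t)) (j : Fin n),
            a j.succ ∈ Submodule.span k
              (Set.range fun i : I =>
                RingQuot.mkAlgHom k (PathRel k I E s t)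
                  (FreeAlgebra.ι k (Sum.inl i))) → φ a = 0) →
        ∃! Φ : W →ₗ[k] V,
          (∀ a : Fin (n + 1) → RingQuot (PathRel k I E s t),
            Φ (ιA (a 0) * (List.ofFn fun j : Fin n => d (ιA (a j.succ))).prod) = φ a) ∧
          (∀ m : ℕ, m ≠ n → ∀ w ∈ 𝒜 m, Φ w = 0))
    -- the partial double derivations ∂/∂a on P
    (D : E ⊕ E → (RingQuot (PathRel k I E s t) →ₗ[k]
        RingQuot (PathRel k I E s t) ⊗[k] RingQuot (PathRel k I E s t)))
    (hDder : ∀ (a : E ⊕ E) (u v : RingQuot (PathRel k I E s t)),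
        D a (u * v) = (u ⊗ₜ[k] (1 : RingQuot (PathRel k I E s t))) * D a v
          + D a u * ((1 : RingQuot (PathRel k I E s t)) ⊗ₜ[k] v))
    (hDval : ∀ a b : E ⊕ E,
        D a (RingQuot.mkAlgHom k (PathRel k I E s t) (FreeAlgebra.ι k (Sum.inr b)))
          = if a = b then
              (RingQuot.mkAlgHom k (PathRel k I E s t)
                  (FreeAlgebra.ι k (Sum.inl (Sum.elim t s a))))
                ⊗ₜ[k]
              (RingQuot.mkAlgHom k (PathRel k I E s t)
                  (FreeAlgebra.ι k (Sum.inl (Sum.elim s t a))))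
            else 0)
    (hDvert : ∀ (a : E ⊕ E) (i : I),
        D a (RingQuot.mkAlgHom k (PathRel k I E s t)
              (FreeAlgebra.ι k (Sum.inl i))) = 0) :
    -- (a)  dp = Σ_{a ∈ Q̄} (∂_a p) da  in DR¹
    (∀ p : RingQuot (PathRel k I E s t),
      d (ιA p) - ∑ a : E ⊕ E,
          ιA (cycDer (D a) p) *
            d (ιA (RingQuot.mkAlgHom k (PathRel k I E s t)
                (FreeAlgebra.ι k (Sum.inr a))))
        ∈ Submodule.span k
            {z : W | ∃ (x : RingQuot (PathRel k I E s t)) (u : W),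
              z = ιA x * u - u * ιA x})
    -- (b), (c): if θ is a derivation with i_θ ω = dp in DR¹, then
    --           θ(a) = ε(a) ∂_{a*} p and {p, q} = θ(q) = Σ ε(a*)(∂_a p)(∂_{a*} q)
    ∧ (∀ (p : RingQuot (PathRel k I E s t))
        (θ : RingQuot (PathRel k I E s t) →ₗ[k] RingQuot (PathRel k I E s t)),
        (∀ u v, θ (u * v) = u * θ v + θ u * v) →
        (∀ i : I, θ (RingQuot.mkAlgHom k (PathRel k I E s t)
            (FreeAlgebra.ι k (Sum.inl i))) = 0) →
        ∀ iθ : W →ₗ[k] W,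
          (∀ z, iθ (ιA z) = 0) →
          (∀ z, iθ (d (ιA z)) = ιA (θ z)) →
          (∀ u v : W, iθ (u * v) = iθ u * v + σ u * iθ v) →
          iθ (∑ a : E,
              d (ιA (RingQuot.mkAlgHom k (PathRel k I E s t)
                  (FreeAlgebra.ι k (Sum.inr (Sum.inl a)))))
                * d (ιA (RingQuot.mkAlgHom k (PathRel k I E s t)
                  (FreeAlgebra.ι k (Sum.inr (Sum.inr a))))))
            - d (ιA p)
            ∈ Submodule.span k
                {z : W | ∃ (x : RingQuot (PathRel k I E s t)) (u : W),
                  z = ιA x * u - u * ιA x} →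
          (∀ a : E ⊕ E,
            θ (RingQuot.mkAlgHom k (PathRel k I E s t)
                (FreeAlgebra.ι k (Sum.inr a)))
              = signE k a • cycDer (D (starE a)) p) ∧
          (∀ q : RingQuot (PathRel k I E s t),
            θ q - ∑ a : E ⊕ E,
                signE k (starE a) • (cycDer (D a) p * cycDer (D (starE a)) q)
              ∈ Submodule.span k
                  {z : RingQuot (PathRel k I E s t) |
                    ∃ u v : RingQuot (PathRel k I E s t), z = u * v - v * u})) :=
  stmt18_general k I E W s t 𝒜 ιA d σ hι0 hdg hσ hdLeib hdR hspan huniv D hDder hDval hDvert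
end
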